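/- arXiv:1909.10150 — 8 statements merged into one kernel-verified Lean document; each statement's English description precedes it below -/
import Mathlib

section
/- Let X be a smooth flow of curves solving the area-preserving curvature flow with contact angle condition on [-1,1]×[0,T), satisfying the total curvature condition −∫_{γ(t)} κ ds = ψ₊ + ψ₋ for every t. Then the tangential velocity α = ⟨∂X/∂t, T⟩ satisfies, for all 0 < t < T, α(1,t) = cot ψ₊ · (κ(1,t) + (ψ₊+ψ₋)/L(t)) and α(-1,t) = −cot ψ₋ · (κ(-1,t) + (ψ₊+ψ₋)/L(t)). -/
noncomputable section

open Real Set intervalIntegral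

/-- A smooth flow of plane curves `X(p,t) = (x p t, y p t)` on `[-1,1] × [0,T)`,
smooth for `t > 0`, continuous up to `t = 0`, and regular (`∂X/∂p ≠ 0`). -/
structure CurveFlow (T : ℝ) where
  x : ℝ → ℝ → ℝ
  y : ℝ → ℝ → ℝ
  smooth : ContDiffOn ℝ (⊤ : ℕ∞) (fun q : ℝ × ℝ => (x q.1 q.2, y q.1 q.2))
      (Set.Icc (-1:ℝ) 1 ×ˢ Set.Ioo (0:ℝ) T)
  cont : ContinuousOn (fun q : ℝ × ℝ => (x q.1 q.2, y q.1 q.2))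
      (Set.Icc (-1:ℝ) 1 ×ˢ Set.Ico (0:ℝ) T)
  regular : ∀ p ∈ Set.Icc (-1:ℝ) 1, ∀ t ∈ Set.Ico (0:ℝ) T,
      (derivWithin (fun q => x q t) (Set.Icc (-1:ℝ) 1) p,
       derivWithin (fun q => y q t) (Set.Icc (-1:ℝ) 1) p) ≠ (0, 0)

namespace CurveFlow

variable {T : ℝ} (F : CurveFlow T)

/-- `∂x/∂p` -/
def xp (p t : ℝ) : ℝ := derivWithin (fun q => F.x q t) (Set.Icc (-1:ℝ) 1) p

/-- `∂y/∂p` -/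
def yp (p t : ℝ) : ℝ := derivWithin (fun q => F.y q t) (Set.Icc (-1:ℝ) 1) p

/-- the length element `|∂X/∂p|` -/
def v (p t : ℝ) : ℝ := Real.sqrt ((F.xp p t)^2 + (F.yp p t)^2)

/-- first component of the unit tangent `T = ∂X/∂s` -/
def tx (p t : ℝ) : ℝ := F.xp p t / F.v p t

/-- second component of the unit tangent -/
def ty (p t : ℝ) : ℝ := F.yp p t / F.v p t

/-- first component of the unit normal `N = (-∂y/∂s, ∂x/∂s)` -/
def nx (p t : ℝ) : ℝ := - F.ty p t

/-- second component of the unit normal -/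
def ny (p t : ℝ) : ℝ := F.tx p t

/-- the curvature `κ = ⟨∂²X/∂s², N⟩` -/
def kappa (p t : ℝ) : ℝ :=
  (derivWithin (fun q => F.tx q t) (Set.Icc (-1:ℝ) 1) p / F.v p t) * F.nx p t
  + (derivWithin (fun q => F.ty q t) (Set.Icc (-1:ℝ) 1) p / F.v p t) * F.ny p t

/-- the length `L(t)` -/
def len (t : ℝ) : ℝ := ∫ p in (-1:ℝ)..1, F.v p t

/-- the line integral `∫_{γ(t)} f ds` -/
def lineInt (f : ℝ → ℝ → ℝ) (t : ℝ) : ℝ := ∫ p in (-1:ℝ)..1, f p t * F.v p t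

/-- `∂x/∂t` -/
def xt (p t : ℝ) : ℝ := deriv (fun τ => F.x p τ) t

/-- `∂y/∂t` -/
def yt (p t : ℝ) : ℝ := deriv (fun τ => F.y p τ) t

/-- the tangential velocity `α = ⟨∂X/∂t, T⟩` -/
def alpha (p t : ℝ) : ℝ := F.xt p t * F.tx p t + F.yt p t * F.ty p t

/-- `X` solves the area-preserving curvature flow with contact angle condition:
`⟨∂X/∂t, N⟩ = κ − (∫_{γ(t)} κ ds)/L(t)`, `y(±1,t) = 0`,
`N(-1,t) = (−sin ψ₋, cos ψ₋)`, `N(1,t) = (sin ψ₊, cos ψ₊)`. -/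
def Solves (ψp ψm : ℝ) : Prop :=
  (∀ p ∈ Set.Icc (-1:ℝ) 1, ∀ t ∈ Set.Ioo (0:ℝ) T,
      F.xt p t * F.nx p t + F.yt p t * F.ny p t
        = F.kappa p t - F.lineInt F.kappa t / F.len t)
  ∧ (∀ t ∈ Set.Ico (0:ℝ) T, F.y (-1) t = 0 ∧ F.y 1 t = 0)
  ∧ (∀ t ∈ Set.Ico (0:ℝ) T,
      (F.nx (-1) t = - Real.sin ψm ∧ F.ny (-1) t = Real.cos ψm)
      ∧ (F.nx 1 t = Real.sin ψp ∧ F.ny 1 t = Real.cos ψp))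

/-- the total curvature condition `−∫_{γ(t)} κ ds = ψ₊ + ψ₋` for every `t`. -/
def TotalCurvature (ψp ψm : ℝ) : Prop :=
  ∀ t ∈ Set.Ico (0:ℝ) T, - F.lineInt F.kappa t = ψp + ψm

end CurveFlow

/-- **Boundary values of the tangential velocity.**
If `X` solves the area-preserving curvature flow with contact angle condition and
satisfies the total curvature condition, then for all `0 < t < T`,
`α(1,t) = cot ψ₊ · (κ(1,t) + (ψ₊+ψ₋)/L(t))` and
`α(-1,t) = −cot ψ₋ · (κ(-1,t) + (ψ₊+ψ₋)/L(t))`. -/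
theorem tangential_velocity_at_boundary
    (ψp ψm T : ℝ) (hψp : ψp ∈ Set.Ioo 0 π) (hψm : ψm ∈ Set.Ioo 0 π)
    (F : CurveFlow T) (hsol : F.Solves ψp ψm) (htc : F.TotalCurvature ψp ψm) :
    ∀ t ∈ Set.Ioo (0:ℝ) T,
      F.alpha 1 t = Real.cot ψp * (F.kappa 1 t + (ψp + ψm) / F.len t)
      ∧ F.alpha (-1) t = - Real.cot ψm * (F.kappa (-1) t + (ψp + ψm) / F.len t) := by
  obtain ⟨heq, hy, hN⟩ := hsol
  intro t ht
  have htI : t ∈ Set.Ico (0:ℝ) T := ⟨le_of_lt ht.1, ht.2⟩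
  have hsinp : Real.sin ψp ≠ 0 := ne_of_gt (Real.sin_pos_of_pos_of_lt_pi hψp.1 hψp.2)
  have hsinm : Real.sin ψm ≠ 0 := ne_of_gt (Real.sin_pos_of_pos_of_lt_pi hψm.1 hψm.2)
  have hyt : ∀ p : ℝ, (∀ τ ∈ Set.Ico (0:ℝ) T, F.y p τ = 0) → F.yt p t = 0 := by
    intro p hp
    have hev : (fun τ => F.y p τ) =ᶠ[nhds t] fun _ => (0:ℝ) := by
      filter_upwards [Ioo_mem_nhds ht.1 ht.2] with τ hτ
      exact hp τ ⟨le_of_lt hτ.1, hτ.2⟩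
    simpa [CurveFlow.yt] using hev.deriv_eq.trans (deriv_const t 0)
  have hyt1 : F.yt 1 t = 0 := hyt 1 (fun τ hτ => (hy τ hτ).2)
  have hytm : F.yt (-1) t = 0 := hyt (-1) (fun τ hτ => (hy τ hτ).1)
  have hmem1 : (1:ℝ) ∈ Set.Icc (-1:ℝ) 1 := by norm_num
  have hmemm : (-1:ℝ) ∈ Set.Icc (-1:ℝ) 1 := by norm_num
  have hli : F.lineInt F.kappa t = -(ψp + ψm) := by
    have := htc t htI; linarith
  obtain ⟨⟨hnxm, hnym⟩, hnx1, hny1⟩ := hN t htI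
  -- boundary at p = 1
  have he1 := heq 1 hmem1 t ht
  rw [hnx1, hny1, hyt1, hli, neg_div, sub_neg_eq_add] at he1
  have htx1 : F.tx 1 t = Real.cos ψp := hny1
  -- boundary at p = -1
  have hem := heq (-1) hmemm t ht
  rw [hnxm, hnym, hytm, hli, neg_div, sub_neg_eq_add] at hem
  have htxm : F.tx (-1) t = Real.cos ψm := hnym
  constructor
  · rw [CurveFlow.alpha, hyt1, htx1, Real.cot_eq_cos_div_sin]
    have h1 : F.kappa 1 t + (ψp + ψm) / F.len t = F.xt 1 t * Real.sin ψp := by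
      linarith [he1]
    rw [h1]; field_simp; ring
  · rw [CurveFlow.alpha, hytm, htxm, Real.cot_eq_cos_div_sin]
    have h2 : F.kappa (-1) t + (ψp + ψm) / F.len t = -(F.xt (-1) t * Real.sin ψm) := by
      linarith [hem]
    rw [h2]; field_simp; ring
end
end

section
/- Let X be a smooth flow of curves solving the area-preserving curvature flow with contact angle condition on [-1,1]×[0,T), satisfying the total curvature condition −∫_{γ(t)} κ ds = ψ₊ + ψ₋ for every t. Then for all 0 < t < T the length satisfies d/dt L(t) = cot ψ₊ · (κ(1,t) + (ψ₊+ψ₋)/L(t)) + cot ψ₋ · (κ(-1,t) + (ψ₊+ψ₋)/L(t)) + (ψ₊+ψ₋)²/L(t) − ∫_{γ(t)} κ² ds. -/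
noncomputable section

open Real Set intervalIntegral

namespace AuxCF

/-- the parameter domain -/
def dmn (T : ℝ) : Set (ℝ × ℝ) := Set.Icc (-1:ℝ) 1 ×ˢ Set.Ioo (0:ℝ) T

lemma uniqueDiffOn_dmn (T : ℝ) : UniqueDiffOn ℝ (dmn T) :=
  (uniqueDiffOn_Icc (by norm_num)).prod isOpen_Ioo.uniqueDiffOn

lemma mem_dmn {p t T : ℝ} (hp : p ∈ Set.Icc (-1:ℝ) 1) (ht : t ∈ Set.Ioo (0:ℝ) T) :
    (p, t) ∈ dmn T := Set.mk_mem_prod hp ht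

variable {E : Type*} [NormedAddCommGroup E] [NormedSpace ℝ E] {T : ℝ}

/-- partial derivative in the first variable, within the domain -/
def pd (T : ℝ) (h : ℝ × ℝ → E) : ℝ × ℝ → E := fun q => fderivWithin ℝ h (dmn T) q (1, 0)

/-- partial derivative in the second variable, within the domain -/
def td (T : ℝ) (h : ℝ × ℝ → E) : ℝ × ℝ → E := fun q => fderivWithin ℝ h (dmn T) q (0, 1)

lemma slice_p {h : ℝ × ℝ → E} (hh : DifferentiableOn ℝ h (dmn T)) {p t : ℝ}
    (hp : p ∈ Set.Icc (-1:ℝ) 1) (ht : t ∈ Set.Ioo (0:ℝ) T) :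
    HasDerivWithinAt (fun q => h (q, t)) (pd T h (p, t)) (Set.Icc (-1:ℝ) 1) p := by
  have H := (hh _ (mem_dmn hp ht)).hasFDerivWithinAt
  have hι : HasDerivWithinAt (fun q : ℝ => ((q, t) : ℝ × ℝ)) ((1:ℝ), (0:ℝ))
      (Set.Icc (-1:ℝ) 1) p :=
    ((hasDerivAt_id p).prodMk (hasDerivAt_const p t)).hasDerivWithinAt
  exact H.comp_hasDerivWithinAt p hι (fun q hq => mem_dmn hq ht)

lemma slice_p_derivWithin {h : ℝ × ℝ → E} (hh : DifferentiableOn ℝ h (dmn T)) {p t : ℝ}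
    (hp : p ∈ Set.Icc (-1:ℝ) 1) (ht : t ∈ Set.Ioo (0:ℝ) T) :
    derivWithin (fun q => h (q, t)) (Set.Icc (-1:ℝ) 1) p = pd T h (p, t) :=
  (slice_p hh hp ht).derivWithin ((uniqueDiffOn_Icc (by norm_num)) p hp)

lemma slice_t {h : ℝ × ℝ → E} (hh : DifferentiableOn ℝ h (dmn T)) {p t : ℝ}
    (hp : p ∈ Set.Icc (-1:ℝ) 1) (ht : t ∈ Set.Ioo (0:ℝ) T) :
    HasDerivAt (fun τ => h (p, τ)) (td T h (p, t)) t := by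
  have H := (hh _ (mem_dmn hp ht)).hasFDerivWithinAt
  have hι : HasDerivWithinAt (fun τ : ℝ => ((p, τ) : ℝ × ℝ)) ((0:ℝ), (1:ℝ))
      (Set.Ioo (0:ℝ) T) t :=
    ((hasDerivAt_const t p).prodMk (hasDerivAt_id t)).hasDerivWithinAt
  exact (H.comp_hasDerivWithinAt t hι (fun τ hτ => mem_dmn hp hτ)).hasDerivAt
    (Ioo_mem_nhds ht.1 ht.2)

lemma slice_t_deriv {h : ℝ × ℝ → E} (hh : DifferentiableOn ℝ h (dmn T)) {p t : ℝ}
    (hp : p ∈ Set.Icc (-1:ℝ) 1) (ht : t ∈ Set.Ioo (0:ℝ) T) :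
    deriv (fun τ => h (p, τ)) t = td T h (p, t) :=
  (slice_t hh hp ht).deriv

lemma contDiffOn_fderivWithin {h : ℝ × ℝ → E} (hh : ContDiffOn ℝ (⊤ : ℕ∞) h (dmn T)) :
    ContDiffOn ℝ (⊤ : ℕ∞) (fderivWithin ℝ h (dmn T)) (dmn T) :=
  hh.fderivWithin (uniqueDiffOn_dmn T) (by exact_mod_cast le_top)

lemma contDiffOn_pd {h : ℝ × ℝ → E} (hh : ContDiffOn ℝ (⊤ : ℕ∞) h (dmn T)) :
    ContDiffOn ℝ (⊤ : ℕ∞) (pd T h) (dmn T) :=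
  (contDiffOn_fderivWithin hh).clm_apply contDiffOn_const

lemma contDiffOn_td {h : ℝ × ℝ → E} (hh : ContDiffOn ℝ (⊤ : ℕ∞) h (dmn T)) :
    ContDiffOn ℝ (⊤ : ℕ∞) (td T h) (dmn T) :=
  (contDiffOn_fderivWithin hh).clm_apply contDiffOn_const

lemma fderivWithin_apply_const {h : ℝ × ℝ → E} (hh : ContDiffOn ℝ (⊤ : ℕ∞) h (dmn T))
    {q : ℝ × ℝ} (hq : q ∈ dmn T) (v w : ℝ × ℝ) :
    fderivWithin ℝ (fun r => fderivWithin ℝ h (dmn T) r v) (dmn T) q w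
      = fderivWithin ℝ (fderivWithin ℝ h (dmn T)) (dmn T) q w v := by
  have hΦ : DifferentiableWithinAt ℝ (fderivWithin ℝ h (dmn T)) (dmn T) q :=
    ((contDiffOn_fderivWithin hh) q hq).differentiableWithinAt (by simp)
  have H := ((ContinuousLinearMap.apply ℝ E v).hasFDerivAt).comp_hasFDerivWithinAt q
    hΦ.hasFDerivWithinAt
  have he : (fun r => (fderivWithin ℝ h (dmn T) r) v)
      = ⇑((ContinuousLinearMap.apply ℝ E) v) ∘ fderivWithin ℝ h (dmn T) := rfl
  rw [he, H.fderivWithin (uniqueDiffOn_dmn T q hq)]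
  rfl

lemma td_pd_comm {h : ℝ × ℝ → E} (hh : ContDiffOn ℝ (⊤ : ℕ∞) h (dmn T))
    {q : ℝ × ℝ} (hq : q ∈ dmn T) : td T (pd T h) q = pd T (td T h) q := by
  have hT : 0 < T := lt_trans (mem_prod.1 hq).2.1 (mem_prod.1 hq).2.2
  have hcl : q ∈ closure (interior (dmn T)) := by
    have h1 : interior (dmn T) = Set.Ioo (-1:ℝ) 1 ×ˢ Set.Ioo (0:ℝ) T := by
      rw [dmn, interior_prod_eq, interior_Icc, isOpen_Ioo.interior_eq]
    rw [h1, closure_prod_eq, closure_Ioo (by norm_num : (-1:ℝ) ≠ 1), closure_Ioo hT.ne]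
    exact Set.mk_mem_prod (Icc_subset_Icc (by norm_num) (by norm_num) (mem_prod.1 hq).1)
      (Ioo_subset_Icc_self (mem_prod.1 hq).2)
  have h2 : (2 : WithTop ℕ∞) ≤ ((⊤ : ℕ∞) : WithTop ℕ∞) := by
    refine le_trans ?_ (WithTop.coe_le_coe.2 (le_top : (2:ℕ∞) ≤ ⊤))
    norm_num
  have hsym : IsSymmSndFDerivWithinAt ℝ h (dmn T) q :=
    (hh q hq).isSymmSndFDerivWithinAt (by simpa [minSmoothness_of_isRCLikeNormedField] using h2)
      (uniqueDiffOn_dmn T) hcl hq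
  show fderivWithin ℝ (fun r => fderivWithin ℝ h (dmn T) r (1,0)) (dmn T) q (0,1)
      = fderivWithin ℝ (fun r => fderivWithin ℝ h (dmn T) r (0,1)) (dmn T) q (1,0)
  rw [fderivWithin_apply_const hh hq, fderivWithin_apply_const hh hq]
  exact hsym _ _

end AuxCF


namespace CurveFlow
open AuxCF

variable {T : ℝ} (F : CurveFlow T)

lemma one_le_coe_top : (1 : WithTop ℕ∞) ≤ ((⊤ : ℕ∞) : WithTop ℕ∞) := by
  refine le_trans ?_ (WithTop.coe_le_coe.2 (le_top : (1:ℕ∞) ≤ ⊤))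
  norm_num

/-- `x` as a function on the plane -/
def X2 : ℝ × ℝ → ℝ := fun q => F.x q.1 q.2

/-- `y` as a function on the plane -/
def Y2 : ℝ × ℝ → ℝ := fun q => F.y q.1 q.2

lemma cdX2 : ContDiffOn ℝ ((⊤:ℕ∞) : WithTop ℕ∞) F.X2 (dmn T) := (F.smooth.of_le (by simp)).fst

lemma cdY2 : ContDiffOn ℝ ((⊤:ℕ∞) : WithTop ℕ∞) F.Y2 (dmn T) := (F.smooth.of_le (by simp)).snd

lemma dfX2 : DifferentiableOn ℝ F.X2 (dmn T) := F.cdX2.differentiableOn (by simp)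
lemma dfY2 : DifferentiableOn ℝ F.Y2 (dmn T) := F.cdY2.differentiableOn (by simp)

variable {p t : ℝ}

lemma xp_eq (hp : p ∈ Set.Icc (-1:ℝ) 1) (ht : t ∈ Set.Ioo (0:ℝ) T) :
    F.xp p t = pd T F.X2 (p, t) := by
  rw [xp]; exact slice_p_derivWithin F.dfX2 hp ht

lemma yp_eq (hp : p ∈ Set.Icc (-1:ℝ) 1) (ht : t ∈ Set.Ioo (0:ℝ) T) :
    F.yp p t = pd T F.Y2 (p, t) := by
  rw [yp]; exact slice_p_derivWithin F.dfY2 hp ht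

lemma xt_eq (hp : p ∈ Set.Icc (-1:ℝ) 1) (ht : t ∈ Set.Ioo (0:ℝ) T) :
    F.xt p t = td T F.X2 (p, t) := by
  rw [xt]; exact slice_t_deriv F.dfX2 hp ht

lemma yt_eq (hp : p ∈ Set.Icc (-1:ℝ) 1) (ht : t ∈ Set.Ioo (0:ℝ) T) :
    F.yt p t = td T F.Y2 (p, t) := by
  rw [yt]; exact slice_t_deriv F.dfY2 hp ht

/-- the length element, as a function on the plane -/
def vv : ℝ × ℝ → ℝ := fun q => Real.sqrt ((pd T F.X2 q)^2 + (pd T F.Y2 q)^2)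

lemma v_eq (hp : p ∈ Set.Icc (-1:ℝ) 1) (ht : t ∈ Set.Ioo (0:ℝ) T) :
    F.v p t = F.vv (p, t) := by
  rw [v, F.xp_eq hp ht, F.yp_eq hp ht]; rfl

lemma sq_pos (hp : p ∈ Set.Icc (-1:ℝ) 1) (ht : t ∈ Set.Ioo (0:ℝ) T) :
    0 < (pd T F.X2 (p, t))^2 + (pd T F.Y2 (p, t))^2 := by
  have hreg := F.regular p hp t (Ioo_subset_Ico_self ht)
  rw [show (derivWithin (fun r => F.x r t) (Set.Icc (-1:ℝ) 1) p) = F.xp p t from rfl,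
    show (derivWithin (fun r => F.y r t) (Set.Icc (-1:ℝ) 1) p) = F.yp p t from rfl,
    F.xp_eq hp ht, F.yp_eq hp ht] at hreg
  rcases lt_or_eq_of_le (by positivity : (0:ℝ) ≤ (pd T F.X2 (p,t))^2 + (pd T F.Y2 (p,t))^2)
    with h | h
  · exact h
  · exfalso
    have h1 : (pd T F.X2 (p,t))^2 = 0 ∧ (pd T F.Y2 (p,t))^2 = 0 := by
      constructor <;> nlinarith [sq_nonneg (pd T F.X2 (p,t)), sq_nonneg (pd T F.Y2 (p,t))]
    exact hreg (by simp [pow_eq_zero_iff] at h1; simp [Prod.ext_iff, h1.1, h1.2])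

lemma vv_pos (hp : p ∈ Set.Icc (-1:ℝ) 1) (ht : t ∈ Set.Ioo (0:ℝ) T) : 0 < F.vv (p, t) :=
  Real.sqrt_pos.2 (F.sq_pos hp ht)

lemma vv_pos' {q : ℝ × ℝ} (hq : q ∈ dmn T) : 0 < F.vv q :=
  F.vv_pos (mem_prod.1 hq).1 (mem_prod.1 hq).2

lemma vv_sq (hp : p ∈ Set.Icc (-1:ℝ) 1) (ht : t ∈ Set.Ioo (0:ℝ) T) :
    (F.vv (p, t))^2 = (pd T F.X2 (p, t))^2 + (pd T F.Y2 (p, t))^2 :=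
  Real.sq_sqrt (F.sq_pos hp ht).le

lemma cd_vv : ContDiffOn ℝ ((⊤:ℕ∞) : WithTop ℕ∞) F.vv (dmn T) := fun q hq =>
  (((contDiffOn_pd F.cdX2 q hq).pow 2).add ((contDiffOn_pd F.cdY2 q hq).pow 2)).sqrt
    (F.sq_pos (mem_prod.1 hq).1 (mem_prod.1 hq).2).ne'

/-- unit tangent, first component, as a function on the plane -/
def tx2 : ℝ × ℝ → ℝ := fun q => pd T F.X2 q / F.vv q

/-- unit tangent, second component, as a function on the plane -/
def ty2 : ℝ × ℝ → ℝ := fun q => pd T F.Y2 q / F.vv q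

lemma tx_eq (hp : p ∈ Set.Icc (-1:ℝ) 1) (ht : t ∈ Set.Ioo (0:ℝ) T) :
    F.tx p t = F.tx2 (p, t) := by
  rw [tx, F.xp_eq hp ht, F.v_eq hp ht]; rfl

lemma ty_eq (hp : p ∈ Set.Icc (-1:ℝ) 1) (ht : t ∈ Set.Ioo (0:ℝ) T) :
    F.ty p t = F.ty2 (p, t) := by
  rw [ty, F.yp_eq hp ht, F.v_eq hp ht]; rfl

lemma cd_tx2 : ContDiffOn ℝ ((⊤:ℕ∞) : WithTop ℕ∞) F.tx2 (dmn T) :=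
  (contDiffOn_pd F.cdX2).div F.cd_vv (fun q hq => (F.vv_pos' hq).ne')

lemma cd_ty2 : ContDiffOn ℝ ((⊤:ℕ∞) : WithTop ℕ∞) F.ty2 (dmn T) :=
  (contDiffOn_pd F.cdY2).div F.cd_vv (fun q hq => (F.vv_pos' hq).ne')

lemma unit2 (hp : p ∈ Set.Icc (-1:ℝ) 1) (ht : t ∈ Set.Ioo (0:ℝ) T) :
    (F.tx2 (p, t))^2 + (F.ty2 (p, t))^2 = 1 := by
  have h1 := F.vv_sq hp ht
  have h2 := (F.vv_pos hp ht).ne'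
  rw [tx2, ty2]
  field_simp
  linarith

/-- the curvature as a function on the plane -/
def kap : ℝ × ℝ → ℝ := fun q =>
  (pd T F.tx2 q / F.vv q) * (-(F.ty2 q)) + (pd T F.ty2 q / F.vv q) * (F.tx2 q)

lemma kappa_eq (hp : p ∈ Set.Icc (-1:ℝ) 1) (ht : t ∈ Set.Ioo (0:ℝ) T) :
    F.kappa p t = F.kap (p, t) := by
  have h1 : derivWithin (fun r => F.tx r t) (Set.Icc (-1:ℝ) 1) p = pd T F.tx2 (p, t) := by
    rw [derivWithin_congr (fun r hr => F.tx_eq hr ht) (F.tx_eq hp ht)]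
    exact slice_p_derivWithin (F.cd_tx2.differentiableOn (by simp)) hp ht
  have h2 : derivWithin (fun r => F.ty r t) (Set.Icc (-1:ℝ) 1) p = pd T F.ty2 (p, t) := by
    rw [derivWithin_congr (fun r hr => F.ty_eq hr ht) (F.ty_eq hp ht)]
    exact slice_p_derivWithin (F.cd_ty2.differentiableOn (by simp)) hp ht
  rw [kappa, nx, ny, h1, h2, F.v_eq hp ht, F.tx_eq hp ht, F.ty_eq hp ht]; rfl

lemma cd_kap : ContDiffOn ℝ ((⊤:ℕ∞) : WithTop ℕ∞) F.kap (dmn T) := by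
  have hv : ∀ q ∈ dmn T, F.vv q ≠ 0 := fun q hq => (F.vv_pos' hq).ne'
  exact (((contDiffOn_pd F.cd_tx2).div F.cd_vv hv).mul F.cd_ty2.neg).add
    (((contDiffOn_pd F.cd_ty2).div F.cd_vv hv).mul F.cd_tx2)

/-- the tangential velocity as a function on the plane -/
def al2 : ℝ × ℝ → ℝ := fun q => td T F.X2 q * F.tx2 q + td T F.Y2 q * F.ty2 q

lemma alpha_eq (hp : p ∈ Set.Icc (-1:ℝ) 1) (ht : t ∈ Set.Ioo (0:ℝ) T) :
    F.alpha p t = F.al2 (p, t) := by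
  rw [alpha, F.xt_eq hp ht, F.yt_eq hp ht, F.tx_eq hp ht, F.ty_eq hp ht]; rfl

lemma cd_al2 : ContDiffOn ℝ ((⊤:ℕ∞) : WithTop ℕ∞) F.al2 (dmn T) :=
  ((contDiffOn_td F.cdX2).mul F.cd_tx2).add ((contDiffOn_td F.cdY2).mul F.cd_ty2)

/-- `∂v/∂t` as a function on the plane -/
def vt2 : ℝ × ℝ → ℝ := fun q =>
  (pd T F.X2 q * td T (pd T F.X2) q + pd T F.Y2 q * td T (pd T F.Y2) q) / F.vv q

lemma cd_vt2 : ContDiffOn ℝ ((⊤:ℕ∞) : WithTop ℕ∞) F.vt2 (dmn T) :=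
  (((contDiffOn_pd F.cdX2).mul (contDiffOn_td (contDiffOn_pd F.cdX2))).add
    ((contDiffOn_pd F.cdY2).mul (contDiffOn_td (contDiffOn_pd F.cdY2)))).div
    F.cd_vv (fun q hq => (F.vv_pos' hq).ne')

lemma hasDerivAt_v (hp : p ∈ Set.Icc (-1:ℝ) 1) (ht : t ∈ Set.Ioo (0:ℝ) T) :
    HasDerivAt (fun τ => F.v p τ) (F.vt2 (p, t)) t := by
  have hA : HasDerivAt (fun τ => pd T F.X2 (p, τ)) (td T (pd T F.X2) (p, t)) t :=
    slice_t ((contDiffOn_pd F.cdX2).differentiableOn (by simp)) hp ht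
  have hB : HasDerivAt (fun τ => pd T F.Y2 (p, τ)) (td T (pd T F.Y2) (p, t)) t :=
    slice_t ((contDiffOn_pd F.cdY2).differentiableOn (by simp)) hp ht
  have hs := ((hA.pow 2).add (hB.pow 2)).sqrt (F.sq_pos hp ht).ne'
  have heq : (fun τ => F.v p τ) =ᶠ[nhds t]
      (fun τ => Real.sqrt ((pd T F.X2 (p, τ))^2 + (pd T F.Y2 (p, τ))^2)) := by
    filter_upwards [Ioo_mem_nhds ht.1 ht.2] with τ hτ
    rw [F.v_eq hp hτ]; rfl
  have h2 := hs.congr_of_eventuallyEq heq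
  have hvv : Real.sqrt ((pd T F.X2 (p,t))^2 + (pd T F.Y2 (p,t))^2) = F.vv (p,t) := rfl
  have hval : ((2:ℕ) * pd T F.X2 (p,t) ^ (2-1) * td T (pd T F.X2) (p,t)
        + (2:ℕ) * pd T F.Y2 (p,t) ^ (2-1) * td T (pd T F.Y2) (p,t))
      / (2 * Real.sqrt ((pd T F.X2 (p,t))^2 + (pd T F.Y2 (p,t))^2)) = F.vt2 (p,t) := by
    rw [vt2, hvv]
    have := (F.vv_pos hp ht).ne'
    field_simp
    ring
  rw [show F.vt2 (p,t) = _ from hval.symm]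
  exact h2

lemma vt2_eq {ψp ψm : ℝ} (hsol : F.Solves ψp ψm) {p t : ℝ}
    (hp : p ∈ Set.Ioo (-1:ℝ) 1) (ht : t ∈ Set.Ioo (0:ℝ) T) :
    F.vt2 (p, t) = deriv (fun r => F.alpha r t) p
      - (F.kap (p, t) - F.lineInt F.kappa t / F.len t) * F.kap (p, t) * F.vv (p, t) := by
  set c : ℝ := F.lineInt F.kappa t / F.len t with hc
  have hp' : p ∈ Set.Icc (-1:ℝ) 1 := Ioo_subset_Icc_self hp
  have hIcc : Set.Icc (-1:ℝ) 1 ∈ nhds p := Icc_mem_nhds hp.1 hp.2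
  -- slice derivatives at the interior point p
  have hal : HasDerivAt (fun r => F.al2 (r, t)) (pd T F.al2 (p, t)) p :=
    (slice_p (F.cd_al2.differentiableOn (by simp)) hp' ht).hasDerivAt hIcc
  have hka : HasDerivAt (fun r => F.kap (r, t)) (pd T F.kap (p, t)) p :=
    (slice_p (F.cd_kap.differentiableOn (by simp)) hp' ht).hasDerivAt hIcc
  have htx : HasDerivAt (fun r => F.tx2 (r, t)) (pd T F.tx2 (p, t)) p :=
    (slice_p (F.cd_tx2.differentiableOn (by simp)) hp' ht).hasDerivAt hIcc
  have hty : HasDerivAt (fun r => F.ty2 (r, t)) (pd T F.ty2 (p, t)) p :=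
    (slice_p (F.cd_ty2.differentiableOn (by simp)) hp' ht).hasDerivAt hIcc
  have hXt : HasDerivAt (fun r => td T F.X2 (r, t)) (pd T (td T F.X2) (p, t)) p :=
    (slice_p ((contDiffOn_td F.cdX2).differentiableOn (by simp)) hp' ht).hasDerivAt hIcc
  have hYt : HasDerivAt (fun r => td T F.Y2 (r, t)) (pd T (td T F.Y2) (p, t)) p :=
    (slice_p ((contDiffOn_td F.cdY2).differentiableOn (by simp)) hp' ht).hasDerivAt hIcc
  -- the PDE on the slice
  have hpde : ∀ r ∈ Set.Icc (-1:ℝ) 1,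
      td T F.X2 (r, t) * (-(F.ty2 (r, t))) + td T F.Y2 (r, t) * F.tx2 (r, t)
        = F.kap (r, t) - c := by
    intro r hr
    have h0 := hsol.1 r hr t ht
    rw [nx, ny, F.xt_eq hr ht, F.yt_eq hr ht, F.tx_eq hr ht, F.ty_eq hr ht,
      F.kappa_eq hr ht] at h0
    exact h0
  have hXdec : ∀ r ∈ Set.Icc (-1:ℝ) 1,
      td T F.X2 (r, t) = F.al2 (r, t) * F.tx2 (r, t) - (F.kap (r, t) - c) * F.ty2 (r, t) := by
    intro r hr
    have h1 := hpde r hr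
    have h2 := F.unit2 hr ht
    have h3 : F.al2 (r, t) = td T F.X2 (r, t) * F.tx2 (r, t) + td T F.Y2 (r, t) * F.ty2 (r, t) :=
      rfl
    rw [h3]
    linear_combination (-(F.ty2 (r, t))) * h1 + (-(td T F.X2 (r, t))) * h2
  have hYdec : ∀ r ∈ Set.Icc (-1:ℝ) 1,
      td T F.Y2 (r, t) = F.al2 (r, t) * F.ty2 (r, t) + (F.kap (r, t) - c) * F.tx2 (r, t) := by
    intro r hr
    have h1 := hpde r hr
    have h2 := F.unit2 hr ht
    have h3 : F.al2 (r, t) = td T F.X2 (r, t) * F.tx2 (r, t) + td T F.Y2 (r, t) * F.ty2 (r, t) :=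
      rfl
    rw [h3]
    linear_combination (F.tx2 (r, t)) * h1 + (-(td T F.Y2 (r, t))) * h2
  -- derivatives of the decompositions
  have hD1 : pd T (td T F.X2) (p, t)
      = pd T F.al2 (p, t) * F.tx2 (p, t) + F.al2 (p, t) * pd T F.tx2 (p, t)
        - (pd T F.kap (p, t) * F.ty2 (p, t) + (F.kap (p, t) - c) * pd T F.ty2 (p, t)) := by
    have hrhs := (hal.mul htx).sub ((hka.sub_const c).mul hty)
    have heq : (fun r => td T F.X2 (r, t)) =ᶠ[nhds p]
        (fun r => F.al2 (r, t) * F.tx2 (r, t) - (F.kap (r, t) - c) * F.ty2 (r, t)) := by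
      filter_upwards [hIcc] with r hr
      exact hXdec r hr
    exact hXt.unique (hrhs.congr_of_eventuallyEq heq)
  have hD2 : pd T (td T F.Y2) (p, t)
      = pd T F.al2 (p, t) * F.ty2 (p, t) + F.al2 (p, t) * pd T F.ty2 (p, t)
        + (pd T F.kap (p, t) * F.tx2 (p, t) + (F.kap (p, t) - c) * pd T F.tx2 (p, t)) := by
    have hrhs := (hal.mul hty).add ((hka.sub_const c).mul htx)
    have heq : (fun r => td T F.Y2 (r, t)) =ᶠ[nhds p]
        (fun r => F.al2 (r, t) * F.ty2 (r, t) + (F.kap (r, t) - c) * F.tx2 (r, t)) := by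
      filter_upwards [hIcc] with r hr
      exact hYdec r hr
    exact hYt.unique (hrhs.congr_of_eventuallyEq heq)
  -- orthogonality from the unit relation
  have hunit' : F.tx2 (p, t) * pd T F.tx2 (p, t) + F.ty2 (p, t) * pd T F.ty2 (p, t) = 0 := by
    have hrhs := (htx.pow 2).add (hty.pow 2)
    have heq : (fun r => F.tx2 (r, t) ^ 2 + F.ty2 (r, t) ^ 2) =ᶠ[nhds p]
        (fun _ => (1:ℝ)) := by
      filter_upwards [hIcc] with r hr
      exact F.unit2 hr ht
    have h0 := ((hasDerivAt_const p (1:ℝ)).congr_of_eventuallyEq heq).unique hrhs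
    norm_num at h0
    linarith
  -- curvature relation
  have hkv : pd T F.tx2 (p, t) * (-(F.ty2 (p, t))) + pd T F.ty2 (p, t) * F.tx2 (p, t)
      = F.kap (p, t) * F.vv (p, t) := by
    have h0 : F.kap (p, t) = (pd T F.tx2 (p, t) / F.vv (p, t)) * (-(F.ty2 (p, t)))
        + (pd T F.ty2 (p, t) / F.vv (p, t)) * F.tx2 (p, t) := rfl
    have hne := (F.vv_pos hp' ht).ne'
    rw [h0]
    field_simp
  -- the mixed partial derivatives commute
  have hmX : td T (pd T F.X2) (p, t) = pd T (td T F.X2) (p, t) :=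
    td_pd_comm F.cdX2 (mem_dmn hp' ht)
  have hmY : td T (pd T F.Y2) (p, t) = pd T (td T F.Y2) (p, t) :=
    td_pd_comm F.cdY2 (mem_dmn hp' ht)
  -- identify the derivative of alpha
  have hda : deriv (fun r => F.alpha r t) p = pd T F.al2 (p, t) := by
    have heq : (fun r => F.alpha r t) =ᶠ[nhds p] (fun r => F.al2 (r, t)) := by
      filter_upwards [hIcc] with r hr
      exact F.alpha_eq hr ht
    exact (hal.congr_of_eventuallyEq heq).deriv
  -- put everything together
  have hxv : pd T F.X2 (p, t) = F.tx2 (p, t) * F.vv (p, t) := by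
    have hne := (F.vv_pos hp' ht).ne'
    rw [tx2]; field_simp
  have hyv : pd T F.Y2 (p, t) = F.ty2 (p, t) * F.vv (p, t) := by
    have hne := (F.vv_pos hp' ht).ne'
    rw [ty2]; field_simp
  have e0 : F.vt2 (p, t) = (pd T F.X2 (p, t) * td T (pd T F.X2) (p, t)
      + pd T F.Y2 (p, t) * td T (pd T F.Y2) (p, t)) / F.vv (p, t) := rfl
  have hsum : F.vt2 (p, t) = F.tx2 (p, t) * pd T (td T F.X2) (p, t)
      + F.ty2 (p, t) * pd T (td T F.Y2) (p, t) := by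
    rw [e0, hmX, hmY, hxv, hyv]
    have hne := (F.vv_pos hp' ht).ne'
    field_simp
  rw [hsum, hD1, hD2, hda]
  linear_combination (F.al2 (p, t)) * hunit' - (F.kap (p, t) - c) * hkv
    + pd T F.al2 (p, t) * (F.unit2 hp' ht)

lemma yt_boundary {t : ℝ} {ψp ψm : ℝ} (hsol : F.Solves ψp ψm) (ht : t ∈ Set.Ioo (0:ℝ) T)
    {p : ℝ} (hy : ∀ τ ∈ Set.Ico (0:ℝ) T, F.y p τ = 0) : F.yt p t = 0 := by
  rw [yt]
  have heq : (fun τ => F.y p τ) =ᶠ[nhds t] (fun _ => (0:ℝ)) := by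
    filter_upwards [Ioo_mem_nhds ht.1 ht.2] with τ hτ
    exact hy τ (Ioo_subset_Ico_self hτ)
  rw [Filter.EventuallyEq.deriv_eq heq, deriv_const]

lemma alpha_right {ψp ψm : ℝ} (hsol : F.Solves ψp ψm) (hψp : ψp ∈ Set.Ioo 0 π)
    {t : ℝ} (ht : t ∈ Set.Ioo (0:ℝ) T) :
    F.alpha 1 t = Real.cot ψp * (F.kappa 1 t - F.lineInt F.kappa t / F.len t) := by
  have h1 : (1:ℝ) ∈ Set.Icc (-1:ℝ) 1 := by norm_num
  have hyt : F.yt 1 t = 0 := F.yt_boundary hsol ht (fun τ hτ => (hsol.2.1 τ hτ).2)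
  have hN := (hsol.2.2 t (Ioo_subset_Ico_self ht)).2
  have hty : F.ty 1 t = - Real.sin ψp := by
    have := hN.1; rw [nx] at this; linarith
  have htx : F.tx 1 t = Real.cos ψp := by
    have := hN.2; rw [ny] at this; exact this
  have hsin : Real.sin ψp ≠ 0 :=
    (Real.sin_pos_of_pos_of_lt_pi hψp.1 hψp.2).ne'
  have hpde := hsol.1 1 h1 t ht
  rw [nx, ny, hyt, hty, htx] at hpde
  rw [alpha, hyt, hty, htx, Real.cot_eq_cos_div_sin]
  have hxt : F.xt 1 t * Real.sin ψp = F.kappa 1 t - F.lineInt F.kappa t / F.len t := by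
    linarith [hpde]
  field_simp
  linear_combination Real.cos ψp * hxt

lemma alpha_left {ψp ψm : ℝ} (hsol : F.Solves ψp ψm) (hψm : ψm ∈ Set.Ioo 0 π)
    {t : ℝ} (ht : t ∈ Set.Ioo (0:ℝ) T) :
    F.alpha (-1) t
      = - (Real.cot ψm * (F.kappa (-1) t - F.lineInt F.kappa t / F.len t)) := by
  have h1 : (-1:ℝ) ∈ Set.Icc (-1:ℝ) 1 := by norm_num
  have hyt : F.yt (-1) t = 0 := F.yt_boundary hsol ht (fun τ hτ => (hsol.2.1 τ hτ).1)
  have hN := (hsol.2.2 t (Ioo_subset_Ico_self ht)).1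
  have hty : F.ty (-1) t = Real.sin ψm := by
    have := hN.1; rw [nx] at this; linarith
  have htx : F.tx (-1) t = Real.cos ψm := by
    have := hN.2; rw [ny] at this; exact this
  have hsin : Real.sin ψm ≠ 0 :=
    (Real.sin_pos_of_pos_of_lt_pi hψm.1 hψm.2).ne'
  have hpde := hsol.1 (-1) h1 t ht
  rw [nx, ny, hyt, hty, htx] at hpde
  rw [alpha, hyt, hty, htx, Real.cot_eq_cos_div_sin]
  have hxt : - (F.xt (-1) t * Real.sin ψm) = F.kappa (-1) t - F.lineInt F.kappa t / F.len t := by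
    linarith [hpde]
  field_simp
  linear_combination (- Real.cos ψm) * hxt

end CurveFlow

open AuxCF MeasureTheory in

/-- **Evolution of the length.**
If `X` solves the area-preserving curvature flow with contact angle condition and
satisfies the total curvature condition, then for all `0 < t < T`,
`d/dt L(t) = cot ψ₊ (κ(1,t) + (ψ₊+ψ₋)/L(t)) + cot ψ₋ (κ(-1,t) + (ψ₊+ψ₋)/L(t))
+ (ψ₊+ψ₋)²/L(t) − ∫_{γ(t)} κ² ds`. -/
theorem length_derivative
    (ψp ψm T : ℝ) (hψp : ψp ∈ Set.Ioo 0 π) (hψm : ψm ∈ Set.Ioo 0 π)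
    (F : CurveFlow T) (hsol : F.Solves ψp ψm) (htc : F.TotalCurvature ψp ψm) :
    ∀ t ∈ Set.Ioo (0:ℝ) T,
      HasDerivAt F.len
        (Real.cot ψp * (F.kappa 1 t + (ψp + ψm) / F.len t)
          + Real.cot ψm * (F.kappa (-1) t + (ψp + ψm) / F.len t)
          + (ψp + ψm)^2 / F.len t
          - F.lineInt (fun p τ => (F.kappa p τ)^2) t) t := by
  intro t ht
  have hle : (-1:ℝ) ≤ 1 := by norm_num
  have hu1 : Set.uIcc (-1:ℝ) 1 = Set.Icc (-1:ℝ) 1 := uIcc_of_le hle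
  have hu2 : Set.uIoc (-1:ℝ) 1 = Set.Ioc (-1:ℝ) 1 := uIoc_of_le hle
  have hmap : Set.MapsTo (fun p : ℝ => (p, t)) (Set.Icc (-1:ℝ) 1) (dmn T) :=
    fun p hp => mem_dmn hp ht
  have hcontPair : ContinuousOn (fun p : ℝ => (p, t)) (Set.Icc (-1:ℝ) 1) :=
    (continuous_id.prodMk continuous_const).continuousOn
  have hvvcont : ContinuousOn (fun p => F.vv (p, t)) (Set.Icc (-1:ℝ) 1) :=
    F.cd_vv.continuousOn.comp hcontPair hmap
  have hvcont : ContinuousOn (fun p => F.v p t) (Set.Icc (-1:ℝ) 1) :=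
    hvvcont.congr (fun p hp => F.v_eq hp ht)
  have hvcont' : ContinuousOn (fun p => F.v p t) (Set.uIcc (-1:ℝ) 1) := by
    rw [hu1]; exact hvcont
  have hlen0 : F.len t = ∫ p in (-1:ℝ)..1, F.v p t := rfl
  have hLpos : 0 < F.len t := by
    rw [hlen0]
    refine intervalIntegral.intervalIntegral_pos_of_pos_on hvcont'.intervalIntegrable ?_
      (by norm_num)
    intro p hp
    rw [F.v_eq (Ioo_subset_Icc_self hp) ht]
    exact F.vv_pos (Ioo_subset_Icc_self hp) ht
  -- define ε and the compact neighborhood in time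
  set ε := min t (T - t) / 2 with hεdef
  have hεpos : 0 < ε := by
    have h1 := ht.1
    have h2 := ht.2
    have : 0 < min t (T - t) := lt_min h1 (by linarith)
    positivity
  have hball : Metric.ball t ε ⊆ Set.Icc (t - ε) (t + ε) := by
    intro τ hτ
    rw [Real.ball_eq_Ioo] at hτ
    exact Ioo_subset_Icc_self hτ
  have hsubIoo : Set.Icc (t - ε) (t + ε) ⊆ Set.Ioo (0:ℝ) T := by
    intro τ hτ
    have hm1 : min t (T - t) ≤ t := min_le_left _ _
    have hm2 : min t (T - t) ≤ T - t := min_le_right _ _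
    constructor
    · have : ε ≤ t / 2 := by rw [hεdef]; linarith
      have ht1 := ht.1
      linarith [hτ.1]
    · have : ε ≤ (T - t) / 2 := by rw [hεdef]; linarith
      have ht2 := ht.2
      linarith [hτ.2]
  have hK : IsCompact (Set.Icc (-1:ℝ) 1 ×ˢ Set.Icc (t - ε) (t + ε)) :=
    isCompact_Icc.prod isCompact_Icc
  have hKsub : Set.Icc (-1:ℝ) 1 ×ˢ Set.Icc (t - ε) (t + ε) ⊆ dmn T :=
    Set.prod_mono_right hsubIoo
  obtain ⟨C, hC⟩ := hK.exists_bound_of_continuousOn (F.cd_vt2.continuousOn.mono hKsub)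
  -- differentiation under the integral sign
  have hmeas : ∀ᶠ τ in nhds t, AEStronglyMeasurable (fun p => F.v p τ)
      (volume.restrict (Set.uIoc (-1:ℝ) 1)) := by
    filter_upwards [Ioo_mem_nhds ht.1 ht.2] with τ hτ
    rw [hu2]
    exact (((F.cd_vv.continuousOn.comp
      ((continuous_id.prodMk continuous_const).continuousOn)
      (fun p hp => mem_dmn hp hτ)).congr
      (fun p hp => F.v_eq hp hτ)).mono Ioc_subset_Icc_self).aestronglyMeasurable
      measurableSet_Ioc
  have hvt2cont : ContinuousOn (fun p => F.vt2 (p, t)) (Set.Icc (-1:ℝ) 1) :=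
    F.cd_vt2.continuousOn.comp hcontPair hmap
  have hmeas' : AEStronglyMeasurable (fun p => F.vt2 (p, t))
      (volume.restrict (Set.uIoc (-1:ℝ) 1)) := by
    rw [hu2]
    exact (hvt2cont.mono Ioc_subset_Icc_self).aestronglyMeasurable measurableSet_Ioc
  have hint : IntervalIntegrable (fun p => F.v p t) volume (-1) 1 :=
    hvcont'.intervalIntegrable
  have hbound : ∀ᵐ p ∂volume, p ∈ Set.uIoc (-1:ℝ) 1 →
      ∀ τ ∈ Metric.ball t ε, ‖F.vt2 (p, τ)‖ ≤ C := by
    refine MeasureTheory.ae_of_all _ ?_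
    intro p hp τ hτ
    refine hC (p, τ) (Set.mk_mem_prod ?_ (hball hτ))
    rw [hu2] at hp
    exact Ioc_subset_Icc_self hp
  have hdiff : ∀ᵐ p ∂volume, p ∈ Set.uIoc (-1:ℝ) 1 →
      ∀ τ ∈ Metric.ball t ε, HasDerivAt (fun τ' => F.v p τ') (F.vt2 (p, τ)) τ := by
    refine MeasureTheory.ae_of_all _ ?_
    intro p hp τ hτ
    rw [hu2] at hp
    exact F.hasDerivAt_v (Ioc_subset_Icc_self hp) (hsubIoo (hball hτ))
  obtain ⟨-, hDer⟩ :=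
    intervalIntegral.hasDerivAt_integral_of_dominated_loc_of_deriv_le
      (F := fun τ p => F.v p τ) (F' := fun τ p => F.vt2 (p, τ)) (bound := fun _ => C)
      (Metric.ball_mem_nhds t hεpos) hmeas hint hmeas' hbound intervalIntegrable_const hdiff
  -- compute the integral of vt2
  set c := F.lineInt F.kappa t / F.len t with hc
  have hlint : F.lineInt F.kappa t = -(ψp + ψm) := by
    have := htc t (Ioo_subset_Ico_self ht); linarith
  have hkapcont : ContinuousOn (fun p => F.kap (p, t)) (Set.Icc (-1:ℝ) 1) :=
    F.cd_kap.continuousOn.comp hcontPair hmap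
  have hψcont : ContinuousOn
      (fun p => (F.kap (p,t) - c) * F.kap (p,t) * F.vv (p,t)) (Set.Icc (-1:ℝ) 1) :=
    ((hkapcont.sub continuousOn_const).mul hkapcont).mul hvvcont
  have hI1 : IntervalIntegrable (fun p => F.vt2 (p, t)) volume (-1) 1 := by
    apply ContinuousOn.intervalIntegrable; rw [hu1]; exact hvt2cont
  have hI2 : IntervalIntegrable
      (fun p => (F.kap (p,t) - c) * F.kap (p,t) * F.vv (p,t)) volume (-1) 1 := by
    apply ContinuousOn.intervalIntegrable; rw [hu1]; exact hψcont
  have hαcont : ContinuousOn (fun r => F.alpha r t) (Set.Icc (-1:ℝ) 1) :=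
    (F.cd_al2.continuousOn.comp hcontPair hmap).congr (fun p hp => F.alpha_eq hp ht)
  have hkey : ∀ p ∈ Set.Ioo (-1:ℝ) 1, F.vt2 (p, t)
      = deriv (fun r => F.alpha r t) p - (F.kap (p,t) - c) * F.kap (p,t) * F.vv (p,t) :=
    fun p hp => F.vt2_eq hsol hp ht
  have hFTC : (∫ p in (-1:ℝ)..1,
        (F.vt2 (p,t) + (F.kap (p,t) - c) * F.kap (p,t) * F.vv (p,t)))
      = F.alpha 1 t - F.alpha (-1) t := by
    refine intervalIntegral.integral_eq_sub_of_hasDeriv_right_of_le hle hαcont ?_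
      (hI1.add hI2)
    intro p hp
    have hα : HasDerivAt (fun r => F.alpha r t) (pd T F.al2 (p,t)) p := by
      have h := (slice_p (F.cd_al2.differentiableOn (by simp))
        (Ioo_subset_Icc_self hp) ht).hasDerivAt (Icc_mem_nhds hp.1 hp.2)
      refine h.congr_of_eventuallyEq ?_
      filter_upwards [Icc_mem_nhds hp.1 hp.2] with r hr
      exact F.alpha_eq hr ht
    have hval : F.vt2 (p,t) + (F.kap (p,t) - c) * F.kap (p,t) * F.vv (p,t)
        = pd T F.al2 (p,t) := by
      have h1 := hkey p hp
      rw [hα.deriv] at h1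
      linarith
    rw [hval]
    exact hα.hasDerivWithinAt
  have hsplit : (∫ p in (-1:ℝ)..1, F.vt2 (p,t))
      = (F.alpha 1 t - F.alpha (-1) t)
        - ∫ p in (-1:ℝ)..1, (F.kap (p,t) - c) * F.kap (p,t) * F.vv (p,t) := by
    rw [← hFTC, intervalIntegral.integral_add hI1 hI2]
    ring
  have hI2a : IntervalIntegrable (fun p => (F.kappa p t)^2 * F.v p t) volume (-1) 1 := by
    apply ContinuousOn.intervalIntegrable; rw [hu1]
    refine (((hkapcont.mul hkapcont).mul hvvcont)).congr ?_
    intro p hp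
    show F.kappa p t ^ 2 * F.v p t = F.kap (p, t) * F.kap (p, t) * F.vv (p, t)
    rw [F.kappa_eq hp ht, F.v_eq hp ht]
    ring
  have hI2b : IntervalIntegrable (fun p => F.kappa p t * F.v p t) volume (-1) 1 := by
    apply ContinuousOn.intervalIntegrable; rw [hu1]
    refine ((hkapcont.mul hvvcont)).congr ?_
    intro p hp
    show F.kappa p t * F.v p t = F.kap (p, t) * F.vv (p, t)
    rw [F.kappa_eq hp ht, F.v_eq hp ht]
  have hψint : (∫ p in (-1:ℝ)..1, (F.kap (p,t) - c) * F.kap (p,t) * F.vv (p,t))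
      = F.lineInt (fun p τ => (F.kappa p τ)^2) t - c * F.lineInt F.kappa t := by
    have e1 : (∫ p in (-1:ℝ)..1, (F.kap (p,t) - c) * F.kap (p,t) * F.vv (p,t))
        = ∫ p in (-1:ℝ)..1,
            ((F.kappa p t)^2 * F.v p t - c * (F.kappa p t * F.v p t)) := by
      apply intervalIntegral.integral_congr
      intro p hp
      rw [hu1] at hp
      show (F.kap (p,t) - c) * F.kap (p,t) * F.vv (p,t)
        = (F.kappa p t)^2 * F.v p t - c * (F.kappa p t * F.v p t)
      rw [F.kappa_eq hp ht, F.v_eq hp ht]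
      ring
    rw [e1, intervalIntegral.integral_sub hI2a (hI2b.const_mul c),
      intervalIntegral.integral_const_mul]
    rfl
  have hval2 : (∫ p in (-1:ℝ)..1, F.vt2 (p, t))
      = Real.cot ψp * (F.kappa 1 t + (ψp + ψm) / F.len t)
        + Real.cot ψm * (F.kappa (-1) t + (ψp + ψm) / F.len t)
        + (ψp + ψm)^2 / F.len t - F.lineInt (fun p τ => (F.kappa p τ)^2) t := by
    rw [hsplit, hψint, F.alpha_right hsol hψp ht, F.alpha_left hsol hψm ht, hc, hlint]
    have hLne := hLpos.ne'
    field_simp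
    ring
  have hfin : HasDerivAt F.len (∫ p in (-1:ℝ)..1, F.vt2 (p, t)) t := hDer
  rw [hval2] at hfin
  exact hfin
end
end

section
/- Let X be a smooth flow of curves solving the area-preserving curvature flow with contact angle condition on [-1,1]×[0,T), satisfying the total curvature condition −∫_{γ(t)} κ ds = ψ₊ + ψ₋ for every t. Then the x-coordinate of the left endpoint satisfies, for all 0 < t < T, ∂x/∂t(-1,t) = −(1/sin ψ₋) · (κ(-1,t) + (ψ₊+ψ₋)/L(t)), and the x-coordinate of the right endpoint satisfies ∂x/∂t(1,t) = (1/sin ψ₊) · (κ(1,t) + (ψ₊+ψ₋)/L(t)). -/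
noncomputable section

open Real Set intervalIntegral

/-- **Motion of the endpoints.**
If `X` solves the area-preserving curvature flow with contact angle condition and
satisfies the total curvature condition, then for all `0 < t < T`,
`∂x/∂t(-1,t) = −(1/sin ψ₋)(κ(-1,t) + (ψ₊+ψ₋)/L(t))` and
`∂x/∂t(1,t) = (1/sin ψ₊)(κ(1,t) + (ψ₊+ψ₋)/L(t))`. -/
theorem endpoint_velocity
    (ψp ψm T : ℝ) (hψp : ψp ∈ Set.Ioo 0 π) (hψm : ψm ∈ Set.Ioo 0 π)
    (F : CurveFlow T) (hsol : F.Solves ψp ψm) (htc : F.TotalCurvature ψp ψm) :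
    ∀ t ∈ Set.Ioo (0:ℝ) T,
      HasDerivAt (fun τ => F.x (-1) τ)
        (- (1 / Real.sin ψm) * (F.kappa (-1) t + (ψp + ψm) / F.len t)) t
      ∧ HasDerivAt (fun τ => F.x 1 τ)
        ((1 / Real.sin ψp) * (F.kappa 1 t + (ψp + ψm) / F.len t)) t := by
  intro t ht
  have hIoo : Set.Ioo (0:ℝ) T ∈ nhds t := isOpen_Ioo.mem_nhds ht
  have htIco : t ∈ Set.Ico (0:ℝ) T := ⟨le_of_lt ht.1, ht.2⟩
  -- differentiability of τ ↦ x p τ at t for endpoint p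
  have hdiff : ∀ p ∈ Set.Icc (-1:ℝ) 1, DifferentiableAt ℝ (fun τ => F.x p τ) t := by
    intro p hp
    have h1 : DifferentiableOn ℝ (fun q : ℝ × ℝ => (F.x q.1 q.2, F.y q.1 q.2))
        (Set.Icc (-1:ℝ) 1 ×ˢ Set.Ioo (0:ℝ) T) := F.smooth.differentiableOn (by simp)
    have hg : DifferentiableOn ℝ (fun τ : ℝ => ((p, τ) : ℝ × ℝ)) (Set.Ioo (0:ℝ) T) :=
      (Differentiable.prodMk (differentiable_const p) differentiable_id).differentiableOn
    have hmaps : Set.MapsTo (fun τ : ℝ => ((p, τ) : ℝ × ℝ)) (Set.Ioo (0:ℝ) T)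
        (Set.Icc (-1:ℝ) 1 ×ˢ Set.Ioo (0:ℝ) T) := fun τ hτ => ⟨hp, hτ⟩
    have h2 : DifferentiableAt ℝ (fun τ => (F.x p τ, F.y p τ)) t :=
      ((h1.comp hg hmaps).differentiableAt hIoo)
    exact h2.fst
  have hm1 : (-1:ℝ) ∈ Set.Icc (-1:ℝ) 1 := ⟨le_refl _, by norm_num⟩
  have hp1 : (1:ℝ) ∈ Set.Icc (-1:ℝ) 1 := ⟨by norm_num, le_refl _⟩
  -- y is identically 0 at the endpoints, so yt = 0 there
  have hyt : ∀ p ∈ Set.Icc (-1:ℝ) 1, (∀ τ ∈ Set.Ico (0:ℝ) T, F.y p τ = 0) →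
      F.yt p t = 0 := by
    intro p _ hy
    have hEq : (fun τ => F.y p τ) =ᶠ[nhds t] fun _ => (0:ℝ) :=
      Filter.eventuallyEq_of_mem hIoo (fun τ hτ => hy τ ⟨le_of_lt hτ.1, hτ.2⟩)
    have := hEq.deriv_eq
    simpa [CurveFlow.yt] using this
  have hytm : F.yt (-1) t = 0 :=
    hyt (-1) hm1 (fun τ hτ => (hsol.2.1 τ hτ).1)
  have hytp : F.yt 1 t = 0 :=
    hyt 1 hp1 (fun τ hτ => (hsol.2.1 τ hτ).2)
  -- total curvature
  have hli : F.lineInt F.kappa t = -(ψp + ψm) := by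
    have := htc t htIco; linarith
  -- flow equations at the endpoints
  have heqm := hsol.1 (-1) hm1 t ht
  have heqp := hsol.1 1 hp1 t ht
  have hnm := (hsol.2.2 t htIco).1.1
  have hnp := (hsol.2.2 t htIco).2.1
  have hsm : Real.sin ψm ≠ 0 :=
    ne_of_gt (Real.sin_pos_of_pos_of_lt_pi hψm.1 hψm.2)
  have hsp : Real.sin ψp ≠ 0 :=
    ne_of_gt (Real.sin_pos_of_pos_of_lt_pi hψp.1 hψp.2)
  rw [hytm, hnm, hli] at heqm
  rw [hytp, hnp, hli] at heqp
  rw [neg_div] at heqm heqp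
  have hxtm : F.xt (-1) t
      = - (1 / Real.sin ψm) * (F.kappa (-1) t + (ψp + ψm) / F.len t) := by
    have h : F.xt (-1) t * (-Real.sin ψm)
        = F.kappa (-1) t + (ψp + ψm) / F.len t := by linarith
    rw [(eq_div_iff (neg_ne_zero.mpr hsm)).mpr h]
    ring
  have hxtp : F.xt 1 t
      = (1 / Real.sin ψp) * (F.kappa 1 t + (ψp + ψm) / F.len t) := by
    have h : F.xt 1 t * Real.sin ψp
        = F.kappa 1 t + (ψp + ψm) / F.len t := by linarith
    rw [(eq_div_iff hsp).mpr h]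
    ring
  constructor
  · have hD := (hdiff (-1) hm1).hasDerivAt
    rwa [show deriv (fun τ => F.x (-1) τ) t = F.xt (-1) t from rfl, hxtm] at hD
  · have hD := (hdiff 1 hp1).hasDerivAt
    rwa [show deriv (fun τ => F.x 1 τ) t = F.xt 1 t from rfl, hxtp] at hD
end
end

section
/- Let X be a smooth flow of curves solving the area-preserving curvature flow with contact angle condition on [-1,1]×[0,T), satisfying the total curvature condition −∫_{γ(t)} κ ds = ψ₊ + ψ₋ for every t, and additionally suppose the parametrization satisfies |∂X/∂p(p,t)| = L(t)/2 for all (p,t). Then the tangential velocity α = ⟨∂X/∂t, T⟩ is given by α(p,t) = ∫_{-1}^{p} [ (L(t)/2)·κ(p̃,t)·(κ(p̃,t) + (ψ₊+ψ₋)/L(t)) + L'(t)/2 ] dp̃ − cot ψ₋ · (κ(-1,t) + (ψ₊+ψ₋)/L(t)) for all (p,t) ∈ [-1,1]×(0,T), where L'(t) denotes the time derivative of L(t). -/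
noncomputable section

open Real Set intervalIntegral

section Aux
open Filter Topology

lemma aux_line_p {f : ℝ×ℝ → ℝ} {p t : ℝ} (hf : DifferentiableAt ℝ f (p,t)) :
    HasDerivAt (fun q => f (q,t)) (fderiv ℝ f (p,t) (1,0)) p :=
  hf.hasFDerivAt.comp_hasDerivAt p ((hasDerivAt_id p).prodMk (hasDerivAt_const p t))

lemma aux_line_t {f : ℝ×ℝ → ℝ} {p t : ℝ} (hf : DifferentiableAt ℝ f (p,t)) :
    HasDerivAt (fun τ => f (p,τ)) (fderiv ℝ f (p,t) (0,1)) t :=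
  hf.hasFDerivAt.comp_hasDerivAt t ((hasDerivAt_const t p).prodMk (hasDerivAt_id t))

lemma aux_fderiv_line_t {f : ℝ×ℝ → ℝ} {p t : ℝ} (v : ℝ×ℝ) (hf : ContDiffAt ℝ (⊤ : ℕ∞) f (p,t)) :
    HasDerivAt (fun τ => fderiv ℝ f (p,τ) v) (fderiv ℝ (fderiv ℝ f) (p,t) (0,1) v) t := by
  have h1 : DifferentiableAt ℝ (fderiv ℝ f) (p,t) :=
    (hf.fderiv_right (m := (⊤ : ℕ∞)) (by simp)).differentiableAt (by simp)
  have h2 : HasDerivAt (fun τ => fderiv ℝ f (p,τ)) (fderiv ℝ (fderiv ℝ f) (p,t) (0,1)) t :=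
    h1.hasFDerivAt.comp_hasDerivAt t ((hasDerivAt_const t p).prodMk (hasDerivAt_id t))
  simpa using h2.clm_apply (hasDerivAt_const t v)

lemma aux_fderiv_line_p {f : ℝ×ℝ → ℝ} {p t : ℝ} (v : ℝ×ℝ) (hf : ContDiffAt ℝ (⊤ : ℕ∞) f (p,t)) :
    HasDerivAt (fun q => fderiv ℝ f (q,t) v) (fderiv ℝ (fderiv ℝ f) (p,t) (1,0) v) p := by
  have h1 : DifferentiableAt ℝ (fderiv ℝ f) (p,t) :=
    (hf.fderiv_right (m := (⊤ : ℕ∞)) (by simp)).differentiableAt (by simp)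
  have h2 : HasDerivAt (fun q => fderiv ℝ f (q,t)) (fderiv ℝ (fderiv ℝ f) (p,t) (1,0)) p :=
    h1.hasFDerivAt.comp_hasDerivAt p ((hasDerivAt_id p).prodMk (hasDerivAt_const p t))
  simpa using h2.clm_apply (hasDerivAt_const p v)

lemma aux_schwarz {f : ℝ×ℝ → ℝ} {p t : ℝ} (hf : ContDiffAt ℝ (⊤ : ℕ∞) f (p,t)) :
    fderiv ℝ (fderiv ℝ f) (p,t) (0,1) (1,0) = fderiv ℝ (fderiv ℝ f) (p,t) (1,0) (0,1) :=
  (hf.isSymmSndFDerivAt (by rw [minSmoothness_of_isRCLikeNormedField]; exact WithTop.coe_le_coe.mpr le_top)) (0,1) (1,0)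

end Aux

set_option maxHeartbeats 2000000 in
/-- **Formula for the tangential velocity under the constant-speed parametrization.**
If `X` solves the area-preserving curvature flow with contact angle condition,
satisfies the total curvature condition, and is parametrized with
`|∂X/∂p(p,t)| = L(t)/2`, then for all `t ∈ (0,T)` and `p ∈ [-1,1]`,
`α(p,t) = ∫_{-1}^{p} [(L(t)/2) κ (κ + (ψ₊+ψ₋)/L(t)) + L'(t)/2] dp̃
  − cot ψ₋ (κ(-1,t) + (ψ₊+ψ₋)/L(t))`. -/
theorem tangential_velocity_formula
    (ψp ψm T : ℝ) (hψp : ψp ∈ Set.Ioo 0 π) (hψm : ψm ∈ Set.Ioo 0 π)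
    (F : CurveFlow T) (hsol : F.Solves ψp ψm) (htc : F.TotalCurvature ψp ψm)
    (hpar : ∀ p ∈ Set.Icc (-1:ℝ) 1, ∀ t ∈ Set.Ico (0:ℝ) T, F.v p t = F.len t / 2) :
    ∀ t ∈ Set.Ioo (0:ℝ) T, ∀ p ∈ Set.Icc (-1:ℝ) 1,
      F.alpha p t
        = (∫ q in (-1:ℝ)..p,
            ((F.len t / 2) * F.kappa q t * (F.kappa q t + (ψp + ψm) / F.len t)
              + deriv F.len t / 2))
          - Real.cot ψm * (F.kappa (-1) t + (ψp + ψm) / F.len t) := by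
  classical
  intro t ht p hp
  obtain ⟨ht0, htT⟩ := ht
  have htI : t ∈ Set.Ico (0:ℝ) T := ⟨ht0.le, htT⟩
  set I : Set ℝ := Set.Icc (-1:ℝ) 1 with hIdef
  set Ω : Set ℝ := Set.Ioo (0:ℝ) T with hΩdef
  have hΩnhds : Ω ∈ nhds t := isOpen_Ioo.mem_nhds ⟨ht0, htT⟩
  set ux : ℝ×ℝ → ℝ := fun z => F.x z.1 z.2 with huxdef
  set uy : ℝ×ℝ → ℝ := fun z => F.y z.1 z.2 with huydef
  have hux : ContDiffOn ℝ (⊤ : ℕ∞) ux (I ×ˢ Ω) := contDiff_fst.comp_contDiffOn F.smooth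
  have huy : ContDiffOn ℝ (⊤ : ℕ∞) uy (I ×ˢ Ω) := contDiff_snd.comp_contDiffOn F.smooth
  have hsubI : Set.Ioo (-1:ℝ) 1 ⊆ I := Set.Ioo_subset_Icc_self
  have hmemS : ∀ q ∈ Set.Ioo (-1:ℝ) 1, ∀ τ ∈ Ω, (I ×ˢ Ω) ∈ nhds ((q,τ) : ℝ×ℝ) := by
    intro q hq τ hτ
    exact prod_mem_nhds (Icc_mem_nhds hq.1 hq.2) (isOpen_Ioo.mem_nhds hτ)
  have huxA : ∀ q ∈ Set.Ioo (-1:ℝ) 1, ∀ τ ∈ Ω, ContDiffAt ℝ (⊤ : ℕ∞) ux (q,τ) :=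
    fun q hq τ hτ => hux.contDiffAt (hmemS q hq τ hτ)
  have huyA : ∀ q ∈ Set.Ioo (-1:ℝ) 1, ∀ τ ∈ Ω, ContDiffAt ℝ (⊤ : ℕ∞) uy (q,τ) :=
    fun q hq τ hτ => huy.contDiffAt (hmemS q hq τ hτ)
  -- identification of p-derivatives at interior points
  have hxp_eq : ∀ q ∈ Set.Ioo (-1:ℝ) 1, ∀ τ ∈ Ω, F.xp q τ = fderiv ℝ ux (q,τ) (1,0) := by
    intro q hq τ hτ
    have h1 : derivWithin (fun r => F.x r τ) I q = deriv (fun r => F.x r τ) q :=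
      derivWithin_of_mem_nhds (Icc_mem_nhds hq.1 hq.2)
    have h2 : HasDerivAt (fun r => ux (r,τ)) (fderiv ℝ ux (q,τ) (1,0)) q :=
      aux_line_p ((huxA q hq τ hτ).differentiableAt (by simp))
    rw [CurveFlow.xp, h1]
    exact h2.deriv
  have hyp_eq : ∀ q ∈ Set.Ioo (-1:ℝ) 1, ∀ τ ∈ Ω, F.yp q τ = fderiv ℝ uy (q,τ) (1,0) := by
    intro q hq τ hτ
    have h1 : derivWithin (fun r => F.y r τ) I q = deriv (fun r => F.y r τ) q :=
      derivWithin_of_mem_nhds (Icc_mem_nhds hq.1 hq.2)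
    have h2 : HasDerivAt (fun r => uy (r,τ)) (fderiv ℝ uy (q,τ) (1,0)) q :=
      aux_line_p ((huyA q hq τ hτ).differentiableAt (by simp))
    rw [CurveFlow.yp, h1]
    exact h2.deriv
  -- identification of t-derivatives at interior points
  have hxt_eq : ∀ q ∈ Set.Ioo (-1:ℝ) 1, ∀ τ ∈ Ω, F.xt q τ = fderiv ℝ ux (q,τ) (0,1) := by
    intro q hq τ hτ
    exact (aux_line_t ((huxA q hq τ hτ).differentiableAt (by simp))).deriv
  have hyt_eq : ∀ q ∈ Set.Ioo (-1:ℝ) 1, ∀ τ ∈ Ω, F.yt q τ = fderiv ℝ uy (q,τ) (0,1) := by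
    intro q hq τ hτ
    exact (aux_line_t ((huyA q hq τ hτ).differentiableAt (by simp))).deriv
  -- positivity of v and len
  have hv_sq : ∀ q τ, F.v q τ ^ 2 = F.xp q τ^2 + F.yp q τ^2 := by
    intro q τ
    exact Real.sq_sqrt (by positivity)
  have hv0 : 0 < F.v p t := by
    have hreg := F.regular p hp t htI
    have h1 : F.xp p t ≠ 0 ∨ F.yp p t ≠ 0 := by
      by_contra h
      push_neg at h
      exact hreg (by rw [show derivWithin (fun q => F.x q t) (Set.Icc (-1:ℝ) 1) p = F.xp p t from rfl] ; rw [show derivWithin (fun q => F.y q t) (Set.Icc (-1:ℝ) 1) p = F.yp p t from rfl]; rw [h.1, h.2])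
    have h2 : 0 < F.xp p t^2 + F.yp p t^2 := by
      rcases h1 with h | h
      · positivity
      · positivity
    exact Real.sqrt_pos.mpr h2
  have hL0 : 0 < F.len t := by
    have := hpar p hp t htI
    linarith
  set c : ℝ := F.len t / 2 with hcdef
  have hc0 : 0 < c := by positivity
  have hvc : ∀ q ∈ I, F.v q t = c := fun q hq => hpar q hq t htI
  have hnormI : ∀ q ∈ I, F.xp q t^2 + F.yp q t^2 = c^2 := by
    intro q hq
    rw [← hv_sq, hvc q hq]
  -- t-derivatives of xp, yp at interior points
  have hxp_t : ∀ q ∈ Set.Ioo (-1:ℝ) 1,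
      HasDerivAt (fun τ => F.xp q τ) (fderiv ℝ (fderiv ℝ ux) (q,t) (0,1) (1,0)) t := by
    intro q hq
    have h1 := aux_fderiv_line_t (f := ux) (p := q) (t := t) (1,0) (huxA q hq t ⟨ht0,htT⟩)
    apply h1.congr_of_eventuallyEq
    filter_upwards [hΩnhds] with τ hτ
    exact hxp_eq q hq τ hτ
  have hyp_t : ∀ q ∈ Set.Ioo (-1:ℝ) 1,
      HasDerivAt (fun τ => F.yp q τ) (fderiv ℝ (fderiv ℝ uy) (q,t) (0,1) (1,0)) t := by
    intro q hq
    have h1 := aux_fderiv_line_t (f := uy) (p := q) (t := t) (1,0) (huyA q hq t ⟨ht0,htT⟩)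
    apply h1.congr_of_eventuallyEq
    filter_upwards [hΩnhds] with τ hτ
    exact hyp_eq q hq τ hτ
  -- derivative of v in t at interior points
  have hv_t : ∀ q ∈ Set.Ioo (-1:ℝ) 1,
      HasDerivAt (fun τ => F.v q τ)
        ((2 * F.xp q t * fderiv ℝ (fderiv ℝ ux) (q,t) (0,1) (1,0)
          + 2 * F.yp q t * fderiv ℝ (fderiv ℝ uy) (q,t) (0,1) (1,0)) / (2 * F.v q t)) t := by
    intro q hq
    have hsq : HasDerivAt (fun τ => F.xp q τ^2 + F.yp q τ^2)
        (2 * F.xp q t * fderiv ℝ (fderiv ℝ ux) (q,t) (0,1) (1,0)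
          + 2 * F.yp q t * fderiv ℝ (fderiv ℝ uy) (q,t) (0,1) (1,0)) t := by
      have h1 := ((hxp_t q hq).pow 2).add ((hyp_t q hq).pow 2)
      refine h1.congr_deriv ?_
      simp only [Nat.cast_ofNat, Nat.reduceSub, pow_one]
    have hne : F.xp q t^2 + F.yp q t^2 ≠ 0 := by
      rw [hnormI q (hsubI hq)]; positivity
    have := hsq.sqrt hne
    exact this
  -- len has derivative
  have h0I : (0:ℝ) ∈ Set.Ioo (-1:ℝ) 1 := by norm_num
  have hlen_ev : ∀ q ∈ Set.Ioo (-1:ℝ) 1, F.len =ᶠ[nhds t] fun τ => 2 * F.v q τ := by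
    intro q hq
    filter_upwards [hΩnhds] with τ hτ
    have := hpar q (hsubI hq) τ ⟨hτ.1.le, hτ.2⟩
    linarith
  have hlen_d : HasDerivAt F.len
      ((2 * F.xp 0 t * fderiv ℝ (fderiv ℝ ux) (0,t) (0,1) (1,0)
        + 2 * F.yp 0 t * fderiv ℝ (fderiv ℝ uy) (0,t) (0,1) (1,0)) / F.v 0 t) t := by
    have h1 := (hv_t 0 h0I).const_mul 2
    have h2 := h1.congr_of_eventuallyEq (hlen_ev 0 h0I)
    refine h2.congr_deriv ?_
    have : F.v 0 t ≠ 0 := by rw [hvc 0 (hsubI h0I)]; positivity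
    field_simp
  -- key identity: xp * xpt + yp * ypt = c * (L'/2) at interior points
  have hE : ∀ q ∈ Set.Ioo (-1:ℝ) 1,
      F.xp q t * fderiv ℝ (fderiv ℝ ux) (q,t) (0,1) (1,0)
        + F.yp q t * fderiv ℝ (fderiv ℝ uy) (q,t) (0,1) (1,0) = c * (deriv F.len t / 2) := by
    intro q hq
    have h1 := hv_t q hq
    have h2 : HasDerivAt (fun τ => F.v q τ) (deriv F.len t / 2) t := by
      have h3 : HasDerivAt (fun τ => F.len τ / 2) (deriv F.len t / 2) t := by
        have := hlen_d.deriv ▸ hlen_d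
        exact this.div_const 2
      apply h3.congr_of_eventuallyEq
      filter_upwards [hΩnhds] with τ hτ
      exact hpar q (hsubI hq) τ ⟨hτ.1.le, hτ.2⟩
    have h4 := h1.unique h2
    have hvq : F.v q t = c := hvc q (hsubI hq)
    rw [hvq] at h4
    have hcne : c ≠ 0 := ne_of_gt hc0
    field_simp at h4
    linarith
  -- p-derivatives at interior points, as functions of r
  have hxt_p : ∀ q ∈ Set.Ioo (-1:ℝ) 1,
      HasDerivAt (fun r => F.xt r t) (fderiv ℝ (fderiv ℝ ux) (q,t) (1,0) (0,1)) q := by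
    intro q hq
    have h1 := aux_fderiv_line_p (f := ux) (p := q) (t := t) (0,1) (huxA q hq t ⟨ht0,htT⟩)
    apply h1.congr_of_eventuallyEq
    filter_upwards [Ioo_mem_nhds hq.1 hq.2] with r hr
    exact hxt_eq r hr t ⟨ht0, htT⟩
  have hyt_p : ∀ q ∈ Set.Ioo (-1:ℝ) 1,
      HasDerivAt (fun r => F.yt r t) (fderiv ℝ (fderiv ℝ uy) (q,t) (1,0) (0,1)) q := by
    intro q hq
    have h1 := aux_fderiv_line_p (f := uy) (p := q) (t := t) (0,1) (huyA q hq t ⟨ht0,htT⟩)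
    apply h1.congr_of_eventuallyEq
    filter_upwards [Ioo_mem_nhds hq.1 hq.2] with r hr
    exact hyt_eq r hr t ⟨ht0, htT⟩
  have hxp_p : ∀ q ∈ Set.Ioo (-1:ℝ) 1,
      HasDerivAt (fun r => F.xp r t) (fderiv ℝ (fderiv ℝ ux) (q,t) (1,0) (1,0)) q := by
    intro q hq
    have h1 := aux_fderiv_line_p (f := ux) (p := q) (t := t) (1,0) (huxA q hq t ⟨ht0,htT⟩)
    apply h1.congr_of_eventuallyEq
    filter_upwards [Ioo_mem_nhds hq.1 hq.2] with r hr
    exact hxp_eq r hr t ⟨ht0, htT⟩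
  have hyp_p : ∀ q ∈ Set.Ioo (-1:ℝ) 1,
      HasDerivAt (fun r => F.yp r t) (fderiv ℝ (fderiv ℝ uy) (q,t) (1,0) (1,0)) q := by
    intro q hq
    have h1 := aux_fderiv_line_p (f := uy) (p := q) (t := t) (1,0) (huyA q hq t ⟨ht0,htT⟩)
    apply h1.congr_of_eventuallyEq
    filter_upwards [Ioo_mem_nhds hq.1 hq.2] with r hr
    exact hyp_eq r hr t ⟨ht0, htT⟩
  -- tangent components as functions of r near interior q
  have htx_p : ∀ q ∈ Set.Ioo (-1:ℝ) 1,
      HasDerivAt (fun r => F.tx r t) (fderiv ℝ (fderiv ℝ ux) (q,t) (1,0) (1,0) / c) q := by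
    intro q hq
    have h1 := (hxp_p q hq).div_const c
    apply h1.congr_of_eventuallyEq
    filter_upwards [Ioo_mem_nhds hq.1 hq.2] with r hr
    show F.tx r t = F.xp r t / c
    rw [CurveFlow.tx, hvc r (hsubI hr)]
  have hty_p : ∀ q ∈ Set.Ioo (-1:ℝ) 1,
      HasDerivAt (fun r => F.ty r t) (fderiv ℝ (fderiv ℝ uy) (q,t) (1,0) (1,0) / c) q := by
    intro q hq
    have h1 := (hyp_p q hq).div_const c
    apply h1.congr_of_eventuallyEq
    filter_upwards [Ioo_mem_nhds hq.1 hq.2] with r hr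
    show F.ty r t = F.yp r t / c
    rw [CurveFlow.ty, hvc r (hsubI hr)]
  -- the derivative of alpha at interior points
  have halpha_deriv : ∀ q ∈ Set.Ioo (-1:ℝ) 1,
      HasDerivAt (fun r => F.alpha r t)
        (c * F.kappa q t * (F.kappa q t + (ψp + ψm) / F.len t) + deriv F.len t / 2) q := by
    intro q hq
    set P := fderiv ℝ (fderiv ℝ ux) (q,t) (1,0) (1,0) with hP
    set Q := fderiv ℝ (fderiv ℝ uy) (q,t) (1,0) (1,0) with hQ
    set R := fderiv ℝ (fderiv ℝ ux) (q,t) (1,0) (0,1) with hR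
    set S := fderiv ℝ (fderiv ℝ uy) (q,t) (1,0) (0,1) with hS
    set a := F.xp q t with ha
    set b := F.yp q t with hb
    set X1 := F.xt q t with hX1
    set Y1 := F.yt q t with hY1
    set κ := F.kappa q t with hκ
    set l' := deriv F.len t with hl'
    have hqI : q ∈ I := hsubI hq
    -- Schwarz
    have hswx : fderiv ℝ (fderiv ℝ ux) (q,t) (0,1) (1,0) = R := aux_schwarz (huxA q hq t ⟨ht0,htT⟩)
    have hswy : fderiv ℝ (fderiv ℝ uy) (q,t) (0,1) (1,0) = S := aux_schwarz (huyA q hq t ⟨ht0,htT⟩)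
    -- f1
    have hf1 : a * R + b * S = c * (l' / 2) := by
      have := hE q hq
      rw [hswx, hswy] at this
      exact this
    -- f2
    have hf2 : a^2 + b^2 = c^2 := hnormI q hqI
    -- f3 : a*P + b*Q = 0
    have hf3 : a * P + b * Q = 0 := by
      have h1 : HasDerivAt (fun r => F.xp r t^2 + F.yp r t^2) (2*a*P + 2*b*Q) q := by
        have := ((hxp_p q hq).pow 2).add ((hyp_p q hq).pow 2)
        refine this.congr_deriv ?_
        simp only [Nat.cast_ofNat, Nat.reduceSub, pow_one]
        rfl
      have h2 : HasDerivAt (fun r => F.xp r t^2 + F.yp r t^2) 0 q := by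
        apply (hasDerivAt_const q (c^2)).congr_of_eventuallyEq
        filter_upwards [Ioo_mem_nhds hq.1 hq.2] with r hr
        exact hnormI r (hsubI hr)
      have := h1.unique h2
      linarith
    -- normal components
    have hvq : F.v q t = c := hvc q hqI
    have hnxv : F.nx q t = -(b / c) := by rw [CurveFlow.nx, CurveFlow.ty, hvq]
    have hnyv : F.ny q t = a / c := by rw [CurveFlow.ny, CurveFlow.tx, hvq]
    -- kappa in terms of second derivatives
    have hκv : κ = (P / c / c) * (-(b/c)) + (Q / c / c) * (a/c) := by
      rw [hκ, CurveFlow.kappa,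
        derivWithin_of_mem_nhds (Icc_mem_nhds hq.1 hq.2),
        derivWithin_of_mem_nhds (Icc_mem_nhds hq.1 hq.2),
        (htx_p q hq).deriv, (hty_p q hq).deriv, hvq, hnxv, hnyv]
    -- the PDE with total curvature
    have hβ : X1 * (-(b/c)) + Y1 * (a/c) = κ + (ψp + ψm) / F.len t := by
      have h1 := hsol.1 q hqI t ⟨ht0, htT⟩
      have h2 : F.lineInt F.kappa t = -(ψp + ψm) := by
        have := htc t htI; linarith
      rw [h2] at h1
      rw [← hnxv, ← hnyv]
      rw [← hX1, ← hY1, ← hκ] at h1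
      rw [h1]
      ring_nf
    set β := κ + (ψp + ψm) / F.len t with hβdef
    -- assemble derivative of alpha
    have hA : HasDerivAt (fun r => F.alpha r t)
        (R * F.tx q t + X1 * (P / c) + (S * F.ty q t + Y1 * (Q / c))) q :=
      ((hxt_p q hq).mul (htx_p q hq)).add ((hyt_p q hq).mul (hty_p q hq))
    have htxv : F.tx q t = a / c := by rw [CurveFlow.tx, hvq]
    have htyv : F.ty q t = b / c := by rw [CurveFlow.ty, hvq]
    rw [htxv, htyv] at hA
    convert hA using 1
    -- algebra: show c*κ*β + l'/2 = R*(a/c) + X1*(P/c) + (S*(b/c) + Y1*(Q/c))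
    have hcne : c ≠ 0 := ne_of_gt hc0
    have hκc : Q * a - P * b = κ * c^3 := by
      have hmul : (Q * a - P * b) * (c*c*c) = κ * c^3 * (c*c*c) := by
        field_simp at hκv
        first
        | linear_combination hκv
        | linear_combination (-(c*c*c)) * hκv
      exact mul_right_cancel₀ (by positivity) hmul
    have hβc : Y1 * a - X1 * b = β * c := by
      have hmul : (Y1 * a - X1 * b) * c = β * c * c := by
        field_simp at hβ
        first
        | linear_combination hβ
        | linear_combination c * hβ
      exact mul_right_cancel₀ hcne hmul
    have hring : (Y1*a - X1*b)*(Q*a - P*b)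
        = (a^2 + b^2)*(X1*P + Y1*Q) - (a*X1 + b*Y1)*(a*P + b*Q) := by ring
    rw [hβc, hκc, hf2, hf3] at hring
    have hkey : X1*P + Y1*Q = κ * β * c^2 := by
      have hc2 : c^2 ≠ 0 := pow_ne_zero 2 hcne
      have : c^2 * (X1*P + Y1*Q) = c^2 * (κ * β * c^2) := by ring_nf; ring_nf at hring; linarith
      exact mul_left_cancel₀ hc2 this
    field_simp
    linarith [hkey, hf1]
  -- boundary value of alpha at p = -1
  have hm1I : (-1:ℝ) ∈ I := by constructor <;> norm_num
  have hyt0 : F.yt (-1) t = 0 := by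
    have hev : (fun τ => F.y (-1) τ) =ᶠ[nhds t] fun _ => (0:ℝ) := by
      filter_upwards [hΩnhds] with τ hτ
      exact (hsol.2.1 τ ⟨hτ.1.le, hτ.2⟩).1
    rw [CurveFlow.yt, hev.deriv_eq, deriv_const]
  have hN := (hsol.2.2 t htI).1
  have hsin : (0:ℝ) < Real.sin ψm := Real.sin_pos_of_pos_of_lt_pi hψm.1 hψm.2
  have hαm1 : F.alpha (-1) t
      = -(Real.cot ψm * (F.kappa (-1) t + (ψp + ψm) / F.len t)) := by
    have hPDEm := hsol.1 (-1) hm1I t ⟨ht0, htT⟩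
    have hli : F.lineInt F.kappa t = -(ψp + ψm) := by
      have := htc t htI; linarith
    rw [hli, hN.1, hN.2, hyt0] at hPDEm
    -- hPDEm : F.xt (-1) t * (-sin ψm) + 0 * cos ψm = κ(-1) + (ψp+ψm)/len
    have htxm : F.tx (-1) t = Real.cos ψm := hN.2
    have htym : F.ty (-1) t = Real.sin ψm := by
      have : F.nx (-1) t = - F.ty (-1) t := rfl
      rw [this] at hN
      linarith [hN.1]
    rw [CurveFlow.alpha, hyt0, htxm, htym, Real.cot_eq_cos_div_sin]
    have hxtm : F.xt (-1) t = -(F.kappa (-1) t - -(ψp + ψm) / F.len t) / Real.sin ψm := by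
      have hsne : Real.sin ψm ≠ 0 := ne_of_gt hsin
      have hLne : F.len t ≠ 0 := ne_of_gt hL0
      field_simp at hPDEm ⊢
      linarith [hPDEm]
    rw [hxtm]
    have hsne : Real.sin ψm ≠ 0 := ne_of_gt hsin
    field_simp
    ring
  -- continuity of time-derivatives on all of I, via fderivWithin
  have hUD : UniqueDiffOn ℝ (I ×ˢ Ω) :=
    (uniqueDiffOn_Icc (by norm_num)).prod isOpen_Ioo.uniqueDiffOn
  set XX : ℝ×ℝ → ℝ×ℝ := fun z => (F.x z.1 z.2, F.y z.1 z.2) with hXXdef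
  set W : ℝ×ℝ → (ℝ×ℝ) →L[ℝ] (ℝ×ℝ) := fderivWithin ℝ XX (I ×ˢ Ω) with hWdef
  have hXsm : ContDiffOn ℝ (⊤ : ℕ∞) XX (I ×ˢ Ω) := F.smooth
  have hXt_pair : ∀ q ∈ I, HasDerivAt (fun τ => XX (q,τ)) (W (q,t) (0,1)) t := by
    intro q hq
    have hd : HasFDerivWithinAt XX (W (q,t)) (I ×ˢ Ω) (q,t) :=
      (hXsm.differentiableOn (by simp) (q,t) ⟨hq, ⟨ht0, htT⟩⟩).hasFDerivWithinAt
    have hline : HasDerivWithinAt (fun τ : ℝ => ((q,τ) : ℝ×ℝ)) ((0:ℝ),(1:ℝ)) Ω t :=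
      ((hasDerivAt_const t q).prodMk (hasDerivAt_id t)).hasDerivWithinAt
    have hγ : HasDerivWithinAt ((fun z => XX z) ∘ (fun τ : ℝ => ((q,τ) : ℝ×ℝ)))
        (W (q,t) (0,1)) Ω t :=
      hd.comp_hasDerivWithinAt t hline (fun τ hτ => ⟨hq, hτ⟩)
    exact hγ.hasDerivAt hΩnhds
  have hxt_eqW : ∀ q ∈ I, F.xt q t = (W (q,t) (0,1)).1 := by
    intro q hq
    have h := ((ContinuousLinearMap.fst ℝ ℝ ℝ).hasFDerivAt).comp_hasDerivAt t (hXt_pair q hq)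
    exact h.deriv
  have hyt_eqW : ∀ q ∈ I, F.yt q t = (W (q,t) (0,1)).2 := by
    intro q hq
    have h := ((ContinuousLinearMap.snd ℝ ℝ ℝ).hasFDerivAt).comp_hasDerivAt t (hXt_pair q hq)
    exact h.deriv
  have hWc : ContinuousOn W (I ×ˢ Ω) := hXsm.continuousOn_fderivWithin hUD (by simp)
  have hWtc : ContinuousOn (fun q => W (q,t)) I :=
    hWc.comp ((continuous_id.prodMk continuous_const).continuousOn)
      (fun q hq => ⟨hq, ⟨ht0, htT⟩⟩)
  have hWapp : ContinuousOn (fun q => W (q,t) (0,1)) I := hWtc.clm_apply continuousOn_const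
  have hxt_cont : ContinuousOn (fun q => F.xt q t) I := by
    apply ContinuousOn.congr hWapp.fst hxt_eqW
  have hyt_cont : ContinuousOn (fun q => F.yt q t) I := by
    apply ContinuousOn.congr hWapp.snd hyt_eqW
  -- continuity of space-derivatives on I
  have hUDI : UniqueDiffOn ℝ I := uniqueDiffOn_Icc (by norm_num)
  have hsx : ContDiffOn ℝ (⊤ : ℕ∞) (fun q => F.x q t) I :=
    hux.comp ((contDiff_id.prodMk contDiff_const).contDiffOn) (fun q hq => ⟨hq, ⟨ht0, htT⟩⟩)
  have hsy : ContDiffOn ℝ (⊤ : ℕ∞) (fun q => F.y q t) I :=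
    huy.comp ((contDiff_id.prodMk contDiff_const).contDiffOn) (fun q hq => ⟨hq, ⟨ht0, htT⟩⟩)
  have hxp_smooth : ContDiffOn ℝ (⊤ : ℕ∞) (fun q => F.xp q t) I := ContDiffOn.derivWithin (m := (⊤ : ℕ∞)) hsx hUDI (by simp)
  have hyp_smooth : ContDiffOn ℝ (⊤ : ℕ∞) (fun q => F.yp q t) I := ContDiffOn.derivWithin (m := (⊤ : ℕ∞)) hsy hUDI (by simp)
  have hxp_cont : ContinuousOn (fun q => F.xp q t) I := hxp_smooth.continuousOn
  have hyp_cont : ContinuousOn (fun q => F.yp q t) I := hyp_smooth.continuousOn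
  have htx_eqI : Set.EqOn (fun q => F.tx q t) (fun q => F.xp q t / c) I := by
    intro q hq
    show F.tx q t = F.xp q t / c
    rw [CurveFlow.tx, hvc q hq]
  have hty_eqI : Set.EqOn (fun q => F.ty q t) (fun q => F.yp q t / c) I := by
    intro q hq
    show F.ty q t = F.yp q t / c
    rw [CurveFlow.ty, hvc q hq]
  have htx_cont : ContinuousOn (fun q => F.tx q t) I :=
    (hxp_cont.div_const c).congr htx_eqI
  have hty_cont : ContinuousOn (fun q => F.ty q t) I :=
    (hyp_cont.div_const c).congr hty_eqI
  have hdtx_cont : ContinuousOn (fun q => derivWithin (fun r => F.tx r t) I q) I := by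
    have h2 : ContinuousOn (derivWithin (fun q => F.xp q t / c) I) I :=
      (ContDiffOn.derivWithin (m := (⊤ : ℕ∞)) (hxp_smooth.div_const c) hUDI (by simp)).continuousOn
    apply h2.congr
    intro q hq
    exact derivWithin_congr htx_eqI (htx_eqI hq)
  have hdty_cont : ContinuousOn (fun q => derivWithin (fun r => F.ty r t) I q) I := by
    have h2 : ContinuousOn (derivWithin (fun q => F.yp q t / c) I) I :=
      (ContDiffOn.derivWithin (m := (⊤ : ℕ∞)) (hyp_smooth.div_const c) hUDI (by simp)).continuousOn
    apply h2.congr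
    intro q hq
    exact derivWithin_congr hty_eqI (hty_eqI hq)
  have hκ_cont : ContinuousOn (fun q => F.kappa q t) I := by
    have heq : Set.EqOn (fun q => F.kappa q t)
        (fun q => (derivWithin (fun r => F.tx r t) I q / c) * (-(F.yp q t / c))
          + (derivWithin (fun r => F.ty r t) I q / c) * (F.xp q t / c)) I := by
      intro q hq
      show F.kappa q t = _
      rw [CurveFlow.kappa, hvc q hq, CurveFlow.nx, CurveFlow.ny, CurveFlow.ty, CurveFlow.tx,
        hvc q hq]
    exact ContinuousOn.congr
      (((hdtx_cont.div_const c).mul (hyp_cont.div_const c).neg).add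
        ((hdty_cont.div_const c).mul (hxp_cont.div_const c))) heq
  have hα_cont : ContinuousOn (fun q => F.alpha q t) I :=
    (hxt_cont.mul htx_cont).add (hyt_cont.mul hty_cont)
  -- FTC
  have hsub2 : Set.Icc (-1:ℝ) p ⊆ I := Set.Icc_subset_Icc le_rfl hp.2
  have hg_cont : ContinuousOn
      (fun q => c * F.kappa q t * (F.kappa q t + (ψp + ψm) / F.len t) + deriv F.len t / 2) I :=
    ((continuousOn_const.mul hκ_cont).mul (hκ_cont.add continuousOn_const)).add continuousOn_const
  have hint : IntervalIntegrable
      (fun q => c * F.kappa q t * (F.kappa q t + (ψp + ψm) / F.len t) + deriv F.len t / 2)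
      MeasureTheory.volume (-1) p := by
    apply ContinuousOn.intervalIntegrable
    apply hg_cont.mono
    rw [Set.uIcc_of_le hp.1]
    exact hsub2
  have hderiv : ∀ q ∈ Set.Ioo (-1:ℝ) p, HasDerivWithinAt (fun r => F.alpha r t)
      (c * F.kappa q t * (F.kappa q t + (ψp + ψm) / F.len t) + deriv F.len t / 2)
      (Set.Ioi q) q :=
    fun q hq => (halpha_deriv q ⟨hq.1, lt_of_lt_of_le hq.2 hp.2⟩).hasDerivWithinAt
  have hftc := intervalIntegral.integral_eq_sub_of_hasDeriv_right_of_le hp.1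
      (hα_cont.mono hsub2) hderiv hint
  rw [hftc, hαm1]
  ring
end
end

section
/- Let X be a smooth flow of curves solving the area-preserving curvature flow with contact angle condition on [-1,1]×[0,T), satisfying the total curvature condition −∫_{γ(t)} κ ds = ψ₊ + ψ₋ for every t. Define the energy E(t) := L(t) − x(1,t) cos ψ₊ + x(-1,t) cos ψ₋. Then for all 0 < t < T, d/dt E(t) = −∫_{γ(t)} (κ + (ψ₊+ψ₋)/L(t))² ds; in particular E is non-increasing in t. -/
noncomputable section

open Real Set intervalIntegral

namespace EAux

open Set MeasureTheory Filter CurveFlow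

variable {T : ℝ} (F : CurveFlow T)

def SS (T : ℝ) : Set (ℝ × ℝ) := Icc (-1:ℝ) 1 ×ˢ Ioo (0:ℝ) T

lemma hSu (T : ℝ) : UniqueDiffOn ℝ (SS T) :=
  (uniqueDiffOn_Icc (by norm_num)).prod isOpen_Ioo.uniqueDiffOn

def ff : ℝ × ℝ → ℝ × ℝ := fun q => (F.x q.1 q.2, F.y q.1 q.2)

def DD : ℝ × ℝ → (ℝ × ℝ) →L[ℝ] (ℝ × ℝ) := fderivWithin ℝ (ff F) (SS T)

def fp (q : ℝ × ℝ) : ℝ × ℝ := DD F q (1, 0)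
def ft (q : ℝ × ℝ) : ℝ × ℝ := DD F q (0, 1)
def Dp : ℝ × ℝ → (ℝ × ℝ) →L[ℝ] (ℝ × ℝ) := fderivWithin ℝ (fp F) (SS T)
def Dt : ℝ × ℝ → (ℝ × ℝ) →L[ℝ] (ℝ × ℝ) := fderivWithin ℝ (ft F) (SS T)
def fpp (q : ℝ × ℝ) : ℝ × ℝ := Dp F q (1, 0)
def fpt (q : ℝ × ℝ) : ℝ × ℝ := Dp F q (0, 1)
def ftp (q : ℝ × ℝ) : ℝ × ℝ := Dt F q (1, 0)

lemma hff : ContDiffOn ℝ (⊤ : ℕ∞) (ff F) (SS T) := F.smooth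

lemma hDD : ContDiffOn ℝ (⊤ : ℕ∞) (DD F) (SS T) := F.smooth.fderivWithin (hSu T) (by simp)

lemma hfp : ContDiffOn ℝ (⊤ : ℕ∞) (fp F) (SS T) := (hDD F).clm_apply contDiffOn_const
lemma hft : ContDiffOn ℝ (⊤ : ℕ∞) (ft F) (SS T) := (hDD F).clm_apply contDiffOn_const
lemma hDp : ContDiffOn ℝ (⊤ : ℕ∞) (Dp F) (SS T) := (hfp F).fderivWithin (hSu T) (by simp)
lemma hDt : ContDiffOn ℝ (⊤ : ℕ∞) (Dt F) (SS T) := (hft F).fderivWithin (hSu T) (by simp)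

/-- p-slice derivative of a smooth map on `SS`. -/
lemma sliceP {g : ℝ × ℝ → ℝ × ℝ} (hg : ContDiffOn ℝ (⊤ : ℕ∞) g (SS T)) {p t : ℝ}
    (hp : p ∈ Icc (-1:ℝ) 1) (ht : t ∈ Ioo (0:ℝ) T) :
    HasDerivWithinAt (fun p' => g (p', t)) (fderivWithin ℝ g (SS T) (p, t) (1, 0))
      (Icc (-1:ℝ) 1) p := by
  have hdiff : DifferentiableWithinAt ℝ g (SS T) (p, t) :=
    (hg.differentiableOn (by simp)) _ ⟨hp, ht⟩
  have h1 : HasDerivWithinAt (fun p' : ℝ => (p', t)) (((1:ℝ), (0:ℝ)) : ℝ × ℝ)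
      (Icc (-1:ℝ) 1) p := (HasDerivAt.prodMk (hasDerivAt_id p) (hasDerivAt_const p t)).hasDerivWithinAt
  have := hdiff.hasFDerivWithinAt.comp_hasDerivWithinAt p h1 (fun p' hp' => (⟨hp', ht⟩ : (p', t) ∈ SS T))
  exact this

/-- t-slice derivative of a smooth map on `SS`. -/
lemma sliceT {g : ℝ × ℝ → ℝ × ℝ} (hg : ContDiffOn ℝ (⊤ : ℕ∞) g (SS T)) {p t : ℝ}
    (hp : p ∈ Icc (-1:ℝ) 1) (ht : t ∈ Ioo (0:ℝ) T) :
    HasDerivAt (fun τ => g (p, τ)) (fderivWithin ℝ g (SS T) (p, t) (0, 1)) t := by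
  have hdiff : DifferentiableWithinAt ℝ g (SS T) (p, t) :=
    (hg.differentiableOn (by simp)) _ ⟨hp, ht⟩
  have h1 : HasDerivWithinAt (fun τ : ℝ => (p, τ)) (((0:ℝ), (1:ℝ)) : ℝ × ℝ)
      (Ioo (0:ℝ) T) t := (HasDerivAt.prodMk (hasDerivAt_const t p) (hasDerivAt_id t)).hasDerivWithinAt
  have h2 := hdiff.hasFDerivWithinAt.comp_hasDerivWithinAt t h1 (fun τ hτ => ⟨hp, hτ⟩)
  have h3 : HasDerivWithinAt (fun τ => g (p, τ)) (fderivWithin ℝ g (SS T) (p, t) (0, 1))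
      (Ioo (0:ℝ) T) t := by exact h2
  exact h3.hasDerivAt (Ioo_mem_nhds ht.1 ht.2)

lemma fst_hasDerivWithinAt {h : ℝ → ℝ × ℝ} {d : ℝ × ℝ} {s : Set ℝ} {x : ℝ}
    (hh : HasDerivWithinAt h d s x) :
    HasDerivWithinAt (fun z => (h z).1) d.1 s x := by
  exact (ContinuousLinearMap.fst ℝ ℝ ℝ).hasFDerivAt.comp_hasDerivWithinAt x hh

lemma snd_hasDerivWithinAt {h : ℝ → ℝ × ℝ} {d : ℝ × ℝ} {s : Set ℝ} {x : ℝ}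
    (hh : HasDerivWithinAt h d s x) :
    HasDerivWithinAt (fun z => (h z).2) d.2 s x := by
  exact (ContinuousLinearMap.snd ℝ ℝ ℝ).hasFDerivAt.comp_hasDerivWithinAt x hh

lemma fst_hasDerivAt {h : ℝ → ℝ × ℝ} {d : ℝ × ℝ} {x : ℝ}
    (hh : HasDerivAt h d x) : HasDerivAt (fun z => (h z).1) d.1 x := by
  exact (ContinuousLinearMap.fst ℝ ℝ ℝ).hasFDerivAt.comp_hasDerivAt x hh

lemma snd_hasDerivAt {h : ℝ → ℝ × ℝ} {d : ℝ × ℝ} {x : ℝ}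
    (hh : HasDerivAt h d x) : HasDerivAt (fun z => (h z).2) d.2 x := by
  exact (ContinuousLinearMap.snd ℝ ℝ ℝ).hasFDerivAt.comp_hasDerivAt x hh


lemma uIcc_eq : uIcc (-1:ℝ) 1 = Icc (-1:ℝ) 1 := uIcc_of_le (by norm_num)
lemma uIoc_eq : uIoc (-1:ℝ) 1 = Ioc (-1:ℝ) 1 := uIoc_of_le (by norm_num)
lemma uDi : UniqueDiffOn ℝ (Icc (-1:ℝ) 1) := uniqueDiffOn_Icc (by norm_num)

section PT
variable {p t : ℝ}

/-- `F.x (·, t)` has p-derivative `(fp q).1` -/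
lemma hxHasP (hp : p ∈ Icc (-1:ℝ) 1) (ht : t ∈ Ioo (0:ℝ) T) : HasDerivWithinAt (fun p' => F.x p' t) ((fp F (p, t)).1) (Icc (-1:ℝ) 1) p :=
  fst_hasDerivWithinAt (sliceP (hff F) hp ht)

lemma hyHasP (hp : p ∈ Icc (-1:ℝ) 1) (ht : t ∈ Ioo (0:ℝ) T) : HasDerivWithinAt (fun p' => F.y p' t) ((fp F (p, t)).2) (Icc (-1:ℝ) 1) p :=
  snd_hasDerivWithinAt (sliceP (hff F) hp ht)

lemma hxpEq (hp : p ∈ Icc (-1:ℝ) 1) (ht : t ∈ Ioo (0:ℝ) T) : F.xp p t = (fp F (p, t)).1 := (hxHasP F hp ht).derivWithin (uDi p hp)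
lemma hypEq (hp : p ∈ Icc (-1:ℝ) 1) (ht : t ∈ Ioo (0:ℝ) T) : F.yp p t = (fp F (p, t)).2 := (hyHasP F hp ht).derivWithin (uDi p hp)

lemma hxHasT (hp : p ∈ Icc (-1:ℝ) 1) (ht : t ∈ Ioo (0:ℝ) T) : HasDerivAt (fun τ => F.x p τ) ((ft F (p, t)).1) t :=
  fst_hasDerivAt (sliceT (hff F) hp ht)
lemma hyHasT (hp : p ∈ Icc (-1:ℝ) 1) (ht : t ∈ Ioo (0:ℝ) T) : HasDerivAt (fun τ => F.y p τ) ((ft F (p, t)).2) t :=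
  snd_hasDerivAt (sliceT (hff F) hp ht)

lemma hxtEq (hp : p ∈ Icc (-1:ℝ) 1) (ht : t ∈ Ioo (0:ℝ) T) : F.xt p t = (ft F (p, t)).1 := (hxHasT F hp ht).deriv
lemma hytEq (hp : p ∈ Icc (-1:ℝ) 1) (ht : t ∈ Ioo (0:ℝ) T) : F.yt p t = (ft F (p, t)).2 := (hyHasT F hp ht).deriv

/-- p-derivative of `F.xp` -/
lemma hxpHasP (hp : p ∈ Icc (-1:ℝ) 1) (ht : t ∈ Ioo (0:ℝ) T) : HasDerivWithinAt (fun p' => F.xp p' t) ((fpp F (p, t)).1) (Icc (-1:ℝ) 1) p := by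
  refine (fst_hasDerivWithinAt (sliceP (hfp F) hp ht)).congr (fun p' hp' => hxpEq F hp' ht)
    (hxpEq F hp ht)
lemma hypHasP (hp : p ∈ Icc (-1:ℝ) 1) (ht : t ∈ Ioo (0:ℝ) T) : HasDerivWithinAt (fun p' => F.yp p' t) ((fpp F (p, t)).2) (Icc (-1:ℝ) 1) p := by
  refine (snd_hasDerivWithinAt (sliceP (hfp F) hp ht)).congr (fun p' hp' => hypEq F hp' ht)
    (hypEq F hp ht)

/-- p-derivative of `F.xt` -/
lemma hxtHasP (hp : p ∈ Icc (-1:ℝ) 1) (ht : t ∈ Ioo (0:ℝ) T) : HasDerivWithinAt (fun p' => F.xt p' t) ((ftp F (p, t)).1) (Icc (-1:ℝ) 1) p := by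
  refine (fst_hasDerivWithinAt (sliceP (hft F) hp ht)).congr (fun p' hp' => hxtEq F hp' ht)
    (hxtEq F hp ht)
lemma hytHasP (hp : p ∈ Icc (-1:ℝ) 1) (ht : t ∈ Ioo (0:ℝ) T) : HasDerivWithinAt (fun p' => F.yt p' t) ((ftp F (p, t)).2) (Icc (-1:ℝ) 1) p := by
  refine (snd_hasDerivWithinAt (sliceP (hft F) hp ht)).congr (fun p' hp' => hytEq F hp' ht)
    (hytEq F hp ht)

/-- t-derivative of `F.xp` -/
lemma hxpHasT (hp : p ∈ Icc (-1:ℝ) 1) (ht : t ∈ Ioo (0:ℝ) T) : HasDerivAt (fun τ => F.xp p τ) ((fpt F (p, t)).1) t := by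
  refine (fst_hasDerivAt (sliceT (hfp F) hp ht)).congr_of_eventuallyEq ?_
  filter_upwards [Ioo_mem_nhds ht.1 ht.2] with τ hτ
  exact hxpEq F hp hτ
lemma hypHasT (hp : p ∈ Icc (-1:ℝ) 1) (ht : t ∈ Ioo (0:ℝ) T) : HasDerivAt (fun τ => F.yp p τ) ((fpt F (p, t)).2) t := by
  refine (snd_hasDerivAt (sliceT (hfp F) hp ht)).congr_of_eventuallyEq ?_
  filter_upwards [Ioo_mem_nhds ht.1 ht.2] with τ hτ
  exact hypEq F hp hτ

end PT

/-- symmetry of second derivatives on all of `SS` -/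
lemma hSym : ∀ q ∈ SS T, fpt F q = ftp F q := by
  -- first on the open interior rectangle
  have hO : IsOpen (Ioo (-1:ℝ) 1 ×ˢ Ioo (0:ℝ) T) := isOpen_Ioo.prod isOpen_Ioo
  have hOS : (Ioo (-1:ℝ) 1 ×ˢ Ioo (0:ℝ) T) ⊆ SS T := prod_mono_left Ioo_subset_Icc_self
  have hint : ∀ q ∈ Ioo (-1:ℝ) 1 ×ˢ Ioo (0:ℝ) T, fpt F q = ftp F q := by
    intro q hq
    have hqn : SS T ∈ nhds q := mem_nhds_iff.2 ⟨_, hOS, hO, hq⟩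
    have hev : ∀ᶠ y in nhds q, HasFDerivAt (ff F) (DD F y) y := by
      filter_upwards [hO.mem_nhds hq] with y hy
      have hyn : SS T ∈ nhds y := mem_nhds_iff.2 ⟨_, hOS, hO, hy⟩
      have hdy : DifferentiableAt ℝ (ff F) y :=
        ((F.smooth.differentiableOn (by simp)) y (hOS hy)).differentiableAt hyn
      have : DD F y = fderiv ℝ (ff F) y := fderivWithin_of_mem_nhds hyn
      rw [this]; exact hdy.hasFDerivAt
    have hDq : DifferentiableAt ℝ (DD F) q :=
      (((hDD F).differentiableOn (by simp)) q (hOS hq)).differentiableAt hqn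
    have hsym := second_derivative_symmetric_of_eventually hev hDq.hasFDerivAt (0,1) (1,0)
    -- identify fpt and ftp with the second derivative
    have hDsq : fderivWithin ℝ (DD F) (SS T) q = fderiv ℝ (DD F) q :=
      fderivWithin_of_mem_nhds hqn
    have hfpt : fpt F q = (fderiv ℝ (DD F) q (0,1)) (1,0) := by
      have : fp F = fun y => ((ContinuousLinearMap.apply ℝ (ℝ × ℝ)) ((1:ℝ),(0:ℝ))) (DD F y) := rfl
      have hdw : DifferentiableWithinAt ℝ (DD F) (SS T) q :=
        ((hDD F).differentiableOn (by simp)) q (hOS hq)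
      have h2 : fderivWithin ℝ (fp F) (SS T) q =
          ((ContinuousLinearMap.apply ℝ (ℝ × ℝ)) ((1:ℝ),(0:ℝ))).comp
            (fderivWithin ℝ (DD F) (SS T) q) := by
        rw [this]
        exact (((ContinuousLinearMap.apply ℝ (ℝ × ℝ)) ((1:ℝ),(0:ℝ))).hasFDerivAt.comp_hasFDerivWithinAt q
          hdw.hasFDerivWithinAt).fderivWithin ((hSu T) q (hOS hq))
      show (fderivWithin ℝ (fp F) (SS T) q) (0,1) = _
      rw [h2, hDsq]; rfl
    have hftp : ftp F q = (fderiv ℝ (DD F) q (1,0)) (0,1) := by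
      have : ft F = fun y => ((ContinuousLinearMap.apply ℝ (ℝ × ℝ)) ((0:ℝ),(1:ℝ))) (DD F y) := rfl
      have hdw : DifferentiableWithinAt ℝ (DD F) (SS T) q :=
        ((hDD F).differentiableOn (by simp)) q (hOS hq)
      have h2 : fderivWithin ℝ (ft F) (SS T) q =
          ((ContinuousLinearMap.apply ℝ (ℝ × ℝ)) ((0:ℝ),(1:ℝ))).comp
            (fderivWithin ℝ (DD F) (SS T) q) := by
        rw [this]
        exact (((ContinuousLinearMap.apply ℝ (ℝ × ℝ)) ((0:ℝ),(1:ℝ))).hasFDerivAt.comp_hasFDerivWithinAt q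
          hdw.hasFDerivWithinAt).fderivWithin ((hSu T) q (hOS hq))
      show (fderivWithin ℝ (ft F) (SS T) q) (1,0) = _
      rw [h2, hDsq]; rfl
    rw [hfpt, hftp, hsym]
  -- extend to the boundary by continuity
  intro q hq
  have hcont : ContinuousOn (fun y => fpt F y - ftp F y) (SS T) :=
    (((hDp F).clm_apply contDiffOn_const).continuousOn).sub
      (((hDt F).clm_apply contDiffOn_const).continuousOn)
  have hq_cl : q ∈ closure (Ioo (-1:ℝ) 1 ×ˢ Ioo (0:ℝ) T) := by
    rw [closure_prod_eq]
    exact ⟨by simpa [closure_Ioo (by norm_num : (-1:ℝ) ≠ 1)] using hq.1,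
      subset_closure hq.2⟩
  have hne : (nhdsWithin q (Ioo (-1:ℝ) 1 ×ˢ Ioo (0:ℝ) T)).NeBot :=
    mem_closure_iff_nhdsWithin_neBot.1 hq_cl
  have h1 : Filter.Tendsto (fun y => fpt F y - ftp F y)
      (nhdsWithin q (Ioo (-1:ℝ) 1 ×ˢ Ioo (0:ℝ) T)) (nhds (fpt F q - ftp F q)) :=
    (hcont q hq).mono_left (nhdsWithin_mono q hOS)
  have h2 : Filter.Tendsto (fun y => fpt F y - ftp F y)
      (nhdsWithin q (Ioo (-1:ℝ) 1 ×ˢ Ioo (0:ℝ) T)) (nhds 0) := by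
    apply Filter.Tendsto.congr' _ tendsto_const_nhds
    filter_upwards [self_mem_nhdsWithin] with y hy
    rw [hint y hy, sub_self]
  have := tendsto_nhds_unique h1 h2
  exact sub_eq_zero.1 this


lemma master (a b a' b' c d c' d' v : ℝ) (hv : v ≠ 0) (hv2 : v^2 = a^2+b^2) :
  (a*c' + b*d')/v
    = (c'*(a/v) + c*((a'*v - a*((a*a'+b*b')/v))/v^2) + (d'*(b/v) + d*((b'*v - b*((a*a'+b*b')/v))/v^2)))
      - (a*b' - a'*b)/v^3 * (c * -(b/v) + d * (a/v)) * v := by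
  field_simp
  linear_combination (-(c*a'+d*b'))*hv2

section PT2
variable {p t : ℝ}

lemma hv2pos (hp : p ∈ Icc (-1:ℝ) 1) (ht : t ∈ Ico (0:ℝ) T) :
    0 < F.xp p t ^ 2 + F.yp p t ^ 2 := by
  have hreg := F.regular p hp t ht
  have h2 : F.xp p t ≠ 0 ∨ F.yp p t ≠ 0 := by
    by_contra h
    push_neg at h
    exact hreg (by simp [CurveFlow.xp, CurveFlow.yp] at h ⊢; exact ⟨h.1, h.2⟩)
  rcases h2 with h | h
  · have := lt_of_le_of_ne (sq_nonneg (F.xp p t)) (Ne.symm (pow_ne_zero 2 h))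
    nlinarith [sq_nonneg (F.yp p t)]
  · have := lt_of_le_of_ne (sq_nonneg (F.yp p t)) (Ne.symm (pow_ne_zero 2 h))
    nlinarith [sq_nonneg (F.xp p t)]

lemma hvpos (hp : p ∈ Icc (-1:ℝ) 1) (ht : t ∈ Ico (0:ℝ) T) : 0 < F.v p t :=
  Real.sqrt_pos.2 (hv2pos F hp ht)

lemma hvsq (hp : p ∈ Icc (-1:ℝ) 1) (ht : t ∈ Ico (0:ℝ) T) :
    F.v p t ^ 2 = F.xp p t ^ 2 + F.yp p t ^ 2 :=
  Real.sq_sqrt (hv2pos F hp ht).le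

end PT2

/-- time derivative of the length element -/
def vt (p t : ℝ) : ℝ :=
  (F.xp p t * (fpt F (p, t)).1 + F.yp p t * (fpt F (p, t)).2) / F.v p t

section PT3
variable {p t : ℝ}

lemma hvHasT (hp : p ∈ Icc (-1:ℝ) 1) (ht : t ∈ Ioo (0:ℝ) T) : HasDerivAt (fun τ => F.v p τ) (vt F p t) t := by
  have ht' : t ∈ Ico (0:ℝ) T := ⟨ht.1.le, ht.2⟩
  have h1 : HasDerivAt (fun τ => (F.xp p τ) ^ 2 + (F.yp p τ) ^ 2)
      ((2:ℕ) * F.xp p t ^ (2-1) * (fpt F (p,t)).1 + (2:ℕ) * F.yp p t ^ (2-1) * (fpt F (p,t)).2) t :=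
    ((hxpHasT F hp ht).pow 2).add ((hypHasT F hp ht).pow 2)
  have h2 := h1.sqrt (ne_of_gt (hv2pos F hp ht'))
  have h3 : HasDerivAt (fun τ => F.v p τ)
      (((2:ℕ) * F.xp p t ^ (2-1) * (fpt F (p,t)).1 + (2:ℕ) * F.yp p t ^ (2-1) * (fpt F (p,t)).2)
        / (2 * Real.sqrt (F.xp p t ^ 2 + F.yp p t ^ 2))) t := h2
  have h4 : ((2:ℕ) * F.xp p t ^ (2-1) * (fpt F (p,t)).1 + (2:ℕ) * F.yp p t ^ (2-1) * (fpt F (p,t)).2)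
        / (2 * Real.sqrt (F.xp p t ^ 2 + F.yp p t ^ 2)) = vt F p t := by
    have hvne : F.v p t ≠ 0 := ne_of_gt (hvpos F hp ht')
    have : Real.sqrt (F.xp p t ^ 2 + F.yp p t ^ 2) = F.v p t := rfl
    rw [this, vt]
    field_simp
    ring
  rw [h4] at h3
  exact h3

lemma hvHasP (hp : p ∈ Icc (-1:ℝ) 1) (ht : t ∈ Ioo (0:ℝ) T) : HasDerivWithinAt (fun p' => F.v p' t)
    ((F.xp p t * (fpp F (p,t)).1 + F.yp p t * (fpp F (p,t)).2) / F.v p t) (Icc (-1:ℝ) 1) p := by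
  have ht' : t ∈ Ico (0:ℝ) T := ⟨ht.1.le, ht.2⟩
  have h1 : HasDerivWithinAt (fun p' => (F.xp p' t) ^ 2 + (F.yp p' t) ^ 2)
      ((2:ℕ) * F.xp p t ^ (2-1) * (fpp F (p,t)).1 + (2:ℕ) * F.yp p t ^ (2-1) * (fpp F (p,t)).2)
      (Icc (-1:ℝ) 1) p :=
    ((hxpHasP F hp ht).pow 2).add ((hypHasP F hp ht).pow 2)
  have h2 := h1.sqrt (ne_of_gt (hv2pos F hp ht'))
  have h3 : HasDerivWithinAt (fun p' => F.v p' t)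
      (((2:ℕ) * F.xp p t ^ (2-1) * (fpp F (p,t)).1 + (2:ℕ) * F.yp p t ^ (2-1) * (fpp F (p,t)).2)
        / (2 * Real.sqrt (F.xp p t ^ 2 + F.yp p t ^ 2))) (Icc (-1:ℝ) 1) p := h2
  have h4 : ((2:ℕ) * F.xp p t ^ (2-1) * (fpp F (p,t)).1 + (2:ℕ) * F.yp p t ^ (2-1) * (fpp F (p,t)).2)
        / (2 * Real.sqrt (F.xp p t ^ 2 + F.yp p t ^ 2))
      = (F.xp p t * (fpp F (p,t)).1 + F.yp p t * (fpp F (p,t)).2) / F.v p t := by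
    have hvne : F.v p t ≠ 0 := ne_of_gt (hvpos F hp ht')
    have : Real.sqrt (F.xp p t ^ 2 + F.yp p t ^ 2) = F.v p t := rfl
    rw [this]
    field_simp
    ring
  rw [h4] at h3
  exact h3

lemma htxHasP (hp : p ∈ Icc (-1:ℝ) 1) (ht : t ∈ Ioo (0:ℝ) T) : HasDerivWithinAt (fun p' => F.tx p' t)
    (((fpp F (p,t)).1 * F.v p t - F.xp p t *
        ((F.xp p t * (fpp F (p,t)).1 + F.yp p t * (fpp F (p,t)).2) / F.v p t)) / F.v p t ^ 2)
    (Icc (-1:ℝ) 1) p :=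
  (hxpHasP F hp ht).div (hvHasP F hp ht) (ne_of_gt (hvpos F hp ⟨ht.1.le, ht.2⟩))

lemma htyHasP (hp : p ∈ Icc (-1:ℝ) 1) (ht : t ∈ Ioo (0:ℝ) T) : HasDerivWithinAt (fun p' => F.ty p' t)
    (((fpp F (p,t)).2 * F.v p t - F.yp p t *
        ((F.xp p t * (fpp F (p,t)).1 + F.yp p t * (fpp F (p,t)).2) / F.v p t)) / F.v p t ^ 2)
    (Icc (-1:ℝ) 1) p :=
  (hypHasP F hp ht).div (hvHasP F hp ht) (ne_of_gt (hvpos F hp ⟨ht.1.le, ht.2⟩))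

lemma hKappaEq (hp : p ∈ Icc (-1:ℝ) 1) (ht : t ∈ Ioo (0:ℝ) T) : F.kappa p t =
    (F.xp p t * (fpp F (p,t)).2 - (fpp F (p,t)).1 * F.yp p t) / F.v p t ^ 3 := by
  have hvne : F.v p t ≠ 0 := ne_of_gt (hvpos F hp ⟨ht.1.le, ht.2⟩)
  have h1 : derivWithin (fun q => F.tx q t) (Icc (-1:ℝ) 1) p =
      ((fpp F (p,t)).1 * F.v p t - F.xp p t *
        ((F.xp p t * (fpp F (p,t)).1 + F.yp p t * (fpp F (p,t)).2) / F.v p t)) / F.v p t ^ 2 :=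
    (htxHasP F hp ht).derivWithin (uDi p hp)
  have h2 : derivWithin (fun q => F.ty q t) (Icc (-1:ℝ) 1) p =
      ((fpp F (p,t)).2 * F.v p t - F.yp p t *
        ((F.xp p t * (fpp F (p,t)).1 + F.yp p t * (fpp F (p,t)).2) / F.v p t)) / F.v p t ^ 2 :=
    (htyHasP F hp ht).derivWithin (uDi p hp)
  rw [CurveFlow.kappa, h1, h2]
  simp only [CurveFlow.nx, CurveFlow.ny, CurveFlow.tx, CurveFlow.ty]
  field_simp
  ring

end PT3


/-- p-derivative of the tangential velocity α -/
def Ap (p t : ℝ) : ℝ :=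
  (ftp F (p,t)).1 * (F.xp p t / F.v p t)
    + F.xt p t * (((fpp F (p,t)).1 * F.v p t - F.xp p t *
        ((F.xp p t * (fpp F (p,t)).1 + F.yp p t * (fpp F (p,t)).2) / F.v p t)) / F.v p t ^ 2)
    + ((ftp F (p,t)).2 * (F.yp p t / F.v p t)
    + F.yt p t * (((fpp F (p,t)).2 * F.v p t - F.yp p t *
        ((F.xp p t * (fpp F (p,t)).1 + F.yp p t * (fpp F (p,t)).2) / F.v p t)) / F.v p t ^ 2))

section PT4
variable {p t : ℝ}

lemma hAlphaHasP (hp : p ∈ Icc (-1:ℝ) 1) (ht : t ∈ Ioo (0:ℝ) T) :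
    HasDerivWithinAt (fun p' => F.alpha p' t) (Ap F p t) (Icc (-1:ℝ) 1) p := by
  have h5 : HasDerivWithinAt (fun p' => F.xt p' t * F.tx p' t)
      ((ftp F (p,t)).1 * (F.xp p t / F.v p t)
        + F.xt p t * (((fpp F (p,t)).1 * F.v p t - F.xp p t *
          ((F.xp p t * (fpp F (p,t)).1 + F.yp p t * (fpp F (p,t)).2) / F.v p t)) / F.v p t ^ 2))
      (Icc (-1:ℝ) 1) p := (hxtHasP F hp ht).mul (htxHasP F hp ht)
  have h6 : HasDerivWithinAt (fun p' => F.yt p' t * F.ty p' t)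
      ((ftp F (p,t)).2 * (F.yp p t / F.v p t)
        + F.yt p t * (((fpp F (p,t)).2 * F.v p t - F.yp p t *
          ((F.xp p t * (fpp F (p,t)).1 + F.yp p t * (fpp F (p,t)).2) / F.v p t)) / F.v p t ^ 2))
      (Icc (-1:ℝ) 1) p := (hytHasP F hp ht).mul (htyHasP F hp ht)
  exact h5.add h6

/-- the key pointwise identity: `∂v/∂t = ∂α/∂p − κ ⟨X_t, N⟩ v`. -/
lemma hPoint (hp : p ∈ Icc (-1:ℝ) 1) (ht : t ∈ Ioo (0:ℝ) T) :
    vt F p t = Ap F p t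
      - F.kappa p t * (F.xt p t * F.nx p t + F.yt p t * F.ny p t) * F.v p t := by
  have ht' : t ∈ Ico (0:ℝ) T := ⟨ht.1.le, ht.2⟩
  have hvne : F.v p t ≠ 0 := ne_of_gt (hvpos F hp ht')
  have hv2 : F.v p t ^ 2 = F.xp p t ^ 2 + F.yp p t ^ 2 := hvsq F hp ht'
  have hsym := hSym F (p, t) ⟨hp, ht⟩
  rw [hKappaEq F hp ht]
  simp only [vt, Ap, CurveFlow.nx, CurveFlow.ny, CurveFlow.tx, CurveFlow.ty, hsym]
  field_simp
  linear_combination (-((F.xt p t) * (fpp F (p,t)).1 + (F.yt p t) * (fpp F (p,t)).2)) * hv2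

end PT4


lemma hfpC : ContinuousOn (fp F) (SS T) := ((hDD F).clm_apply contDiffOn_const).continuousOn
lemma hftC : ContinuousOn (ft F) (SS T) := ((hDD F).clm_apply contDiffOn_const).continuousOn
lemma hfppC : ContinuousOn (fpp F) (SS T) := ((hDp F).clm_apply contDiffOn_const).continuousOn
lemma hfptC : ContinuousOn (fpt F) (SS T) := ((hDp F).clm_apply contDiffOn_const).continuousOn
lemma hftpC : ContinuousOn (ftp F) (SS T) := ((hDt F).clm_apply contDiffOn_const).continuousOn

lemma sliceCont {β : Type*} [TopologicalSpace β] {g : ℝ × ℝ → β}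
    (hg : ContinuousOn g (SS T)) {t : ℝ} (ht : t ∈ Ioo (0:ℝ) T) :
    ContinuousOn (fun p => g (p, t)) (Icc (-1:ℝ) 1) :=
  hg.comp ((continuous_id.prodMk continuous_const).continuousOn) (fun p hp => ⟨hp, ht⟩)

section Cont
variable {t : ℝ}

lemma hCxp (ht : t ∈ Ioo (0:ℝ) T) : ContinuousOn (fun p => F.xp p t) (Icc (-1:ℝ) 1) :=
  ((sliceCont (hfpC F) ht).fst).congr (fun p hp => hxpEq F hp ht)
lemma hCyp (ht : t ∈ Ioo (0:ℝ) T) : ContinuousOn (fun p => F.yp p t) (Icc (-1:ℝ) 1) :=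
  ((sliceCont (hfpC F) ht).snd).congr (fun p hp => hypEq F hp ht)
lemma hCxt (ht : t ∈ Ioo (0:ℝ) T) : ContinuousOn (fun p => F.xt p t) (Icc (-1:ℝ) 1) :=
  ((sliceCont (hftC F) ht).fst).congr (fun p hp => hxtEq F hp ht)
lemma hCyt (ht : t ∈ Ioo (0:ℝ) T) : ContinuousOn (fun p => F.yt p t) (Icc (-1:ℝ) 1) :=
  ((sliceCont (hftC F) ht).snd).congr (fun p hp => hytEq F hp ht)
lemma hCfpp (ht : t ∈ Ioo (0:ℝ) T) :
    ContinuousOn (fun p => fpp F (p, t)) (Icc (-1:ℝ) 1) := sliceCont (hfppC F) ht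
lemma hCfpt (ht : t ∈ Ioo (0:ℝ) T) :
    ContinuousOn (fun p => fpt F (p, t)) (Icc (-1:ℝ) 1) := sliceCont (hfptC F) ht
lemma hCftp (ht : t ∈ Ioo (0:ℝ) T) :
    ContinuousOn (fun p => ftp F (p, t)) (Icc (-1:ℝ) 1) := sliceCont (hftpC F) ht

lemma hCv (ht : t ∈ Ioo (0:ℝ) T) : ContinuousOn (fun p => F.v p t) (Icc (-1:ℝ) 1) :=
  Real.continuous_sqrt.comp_continuousOn
    (((hCxp F ht).pow 2).add ((hCyp F ht).pow 2))

lemma hCvne (ht : t ∈ Ioo (0:ℝ) T) : ∀ p ∈ Icc (-1:ℝ) 1, F.v p t ≠ 0 :=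
  fun p hp => ne_of_gt (hvpos F hp ⟨ht.1.le, ht.2⟩)

lemma hCkappa (ht : t ∈ Ioo (0:ℝ) T) : ContinuousOn (fun p => F.kappa p t) (Icc (-1:ℝ) 1) := by
  refine ContinuousOn.congr ?_ (fun p hp => hKappaEq F hp ht)
  exact (((hCxp F ht).mul (hCfpp F ht).snd).sub ((hCfpp F ht).fst.mul (hCyp F ht))).div
    ((hCv F ht).pow 3) (fun p hp => pow_ne_zero 3 (hCvne F ht p hp))

lemma hCalpha (ht : t ∈ Ioo (0:ℝ) T) : ContinuousOn (fun p => F.alpha p t) (Icc (-1:ℝ) 1) :=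
  ((hCxt F ht).mul ((hCxp F ht).div (hCv F ht) (hCvne F ht))).add
    ((hCyt F ht).mul ((hCyp F ht).div (hCv F ht) (hCvne F ht)))

lemma hCAp (ht : t ∈ Ioo (0:ℝ) T) : ContinuousOn (fun p => Ap F p t) (Icc (-1:ℝ) 1) := by
  unfold Ap
  refine ContinuousOn.add (ContinuousOn.add ?_ ?_) (ContinuousOn.add ?_ ?_)
  · exact (hCftp F ht).fst.mul ((hCxp F ht).div (hCv F ht) (hCvne F ht))
  · refine (hCxt F ht).mul (ContinuousOn.div ?_ ((hCv F ht).pow 2)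
      (fun p hp => pow_ne_zero 2 (hCvne F ht p hp)))
    exact ((hCfpp F ht).fst.mul (hCv F ht)).sub ((hCxp F ht).mul
      ((((hCxp F ht).mul (hCfpp F ht).fst).add ((hCyp F ht).mul (hCfpp F ht).snd)).div
        (hCv F ht) (hCvne F ht)))
  · exact (hCftp F ht).snd.mul ((hCyp F ht).div (hCv F ht) (hCvne F ht))
  · refine (hCyt F ht).mul (ContinuousOn.div ?_ ((hCv F ht).pow 2)
      (fun p hp => pow_ne_zero 2 (hCvne F ht p hp)))
    exact ((hCfpp F ht).snd.mul (hCv F ht)).sub ((hCyp F ht).mul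
      ((((hCxp F ht).mul (hCfpp F ht).fst).add ((hCyp F ht).mul (hCfpp F ht).snd)).div
        (hCv F ht) (hCvne F ht)))

lemma hCvt (ht : t ∈ Ioo (0:ℝ) T) : ContinuousOn (fun p => vt F p t) (Icc (-1:ℝ) 1) := by
  unfold vt
  exact (((hCxp F ht).mul (hCfpt F ht).fst).add ((hCyp F ht).mul (hCfpt F ht).snd)).div
    (hCv F ht) (hCvne F ht)

end Cont

/-- joint continuity of `vt` on `SS` -/
lemma hvtCq : ContinuousOn (fun q => vt F q.1 q.2) (SS T) := by
  have hvvC : ContinuousOn (fun q => Real.sqrt ((fp F q).1 ^ 2 + (fp F q).2 ^ 2)) (SS T) :=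
    Real.continuous_sqrt.comp_continuousOn (((hfpC F).fst.pow 2).add ((hfpC F).snd.pow 2))
  have hvEqOn : ∀ q ∈ SS T, F.v q.1 q.2 = Real.sqrt ((fp F q).1 ^ 2 + (fp F q).2 ^ 2) := by
    intro q hq
    rw [CurveFlow.v, hxpEq F hq.1 hq.2, hypEq F hq.1 hq.2]
  have hvvne : ∀ q ∈ SS T, Real.sqrt ((fp F q).1 ^ 2 + (fp F q).2 ^ 2) ≠ 0 := by
    intro q hq
    rw [← hvEqOn q hq]
    exact ne_of_gt (hvpos F hq.1 ⟨hq.2.1.le, hq.2.2⟩)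
  refine ContinuousOn.congr
    (((((hfpC F).fst.mul (hfptC F).fst).add ((hfpC F).snd.mul (hfptC F).snd)).div hvvC hvvne))
    (fun q hq => ?_)
  rw [vt, hxpEq F hq.1 hq.2, hypEq F hq.1 hq.2, hvEqOn q hq]
  simp

/-- derivative of the length -/
lemma hLenHasDeriv {t₀ : ℝ} (ht₀ : t₀ ∈ Ioo (0:ℝ) T) :
    HasDerivAt (fun τ => F.len τ) (∫ p in (-1:ℝ)..1, vt F p t₀) t₀ := by
  set ε := min t₀ (T - t₀) / 2 with hεdef
  have hε : 0 < ε := by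
    have h1 := ht₀.1; have h2 := ht₀.2
    have : 0 < min t₀ (T - t₀) := lt_min h1 (by linarith)
    positivity
  have hsub : Icc (t₀ - ε) (t₀ + ε) ⊆ Ioo (0:ℝ) T := by
    intro τ hτ
    have h1 := ht₀.1; have h2 := ht₀.2
    have ha := min_le_left t₀ (T - t₀); have hb := min_le_right t₀ (T - t₀)
    have h3 := hτ.1; have h4 := hτ.2
    constructor <;> [nlinarith; nlinarith]
  have hKS : (Icc (-1:ℝ) 1 ×ˢ Icc (t₀ - ε) (t₀ + ε)) ⊆ SS T :=
    Set.prod_mono Subset.rfl hsub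
  obtain ⟨C, hC⟩ := (isCompact_Icc.prod isCompact_Icc).exists_bound_of_continuousOn
    ((hvtCq F).mono hKS)
  have hballIcc : Metric.ball t₀ ε ⊆ Icc (t₀ - ε) (t₀ + ε) := by
    rw [Real.ball_eq_Ioo]; exact Ioo_subset_Icc_self
  have hmain := intervalIntegral.hasDerivAt_integral_of_dominated_loc_of_deriv_le
    (F := fun τ p => F.v p τ) (F' := fun τ p => vt F p τ) (bound := fun _ => C)
    (a := (-1:ℝ)) (b := 1) (x₀ := t₀) (μ := volume) (s := Metric.ball t₀ ε) (Metric.ball_mem_nhds t₀ hε)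
    ?_ ?_ ?_ ?_ ?_ ?_
  · exact hmain.2
  · filter_upwards [Ioo_mem_nhds ht₀.1 ht₀.2] with τ hτ
    rw [uIoc_eq]
    exact ((hCv F hτ).mono Ioc_subset_Icc_self).aestronglyMeasurable measurableSet_Ioc
  · exact (uIcc_eq ▸ (hCv F ht₀)).intervalIntegrable
  · rw [uIoc_eq]
    exact ((hCvt F ht₀).mono Ioc_subset_Icc_self).aestronglyMeasurable measurableSet_Ioc
  · refine MeasureTheory.ae_of_all _ (fun p hp τ hτ => ?_)
    rw [uIoc_eq] at hp
    exact hC (p, τ) ⟨Ioc_subset_Icc_self hp, hballIcc hτ⟩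
  · exact intervalIntegrable_const
  · refine MeasureTheory.ae_of_all _ (fun p hp τ hτ => ?_)
    rw [uIoc_eq] at hp
    exact hvHasT F (Ioc_subset_Icc_self hp) (hsub (hballIcc hτ))

/-- fundamental theorem of calculus for α -/
lemma hAlphaFTC {t : ℝ} (ht : t ∈ Ioo (0:ℝ) T) :
    ∫ p in (-1:ℝ)..1, Ap F p t = F.alpha 1 t - F.alpha (-1) t := by
  refine intervalIntegral.integral_eq_sub_of_hasDeriv_right_of_le
    (f := fun p => F.alpha p t) (f' := fun p => Ap F p t) (by norm_num) ?_ ?_ ?_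
  · exact hCalpha F ht
  · intro x hx
    exact ((hAlphaHasP F (Ioo_subset_Icc_self hx) ht).hasDerivAt
      (Icc_mem_nhds hx.1 hx.2)).hasDerivWithinAt
  · exact (uIcc_eq ▸ (hCAp F ht)).intervalIntegrable


section Main
variable {ψp ψm : ℝ} (hsol : F.Solves ψp ψm) (htc : F.TotalCurvature ψp ψm)

lemma hyt0 {t : ℝ} (ht : t ∈ Ioo (0:ℝ) T) {p : ℝ} (hy : ∀ τ ∈ Ico (0:ℝ) T, F.y p τ = 0) :
    F.yt p t = 0 := by
  have hev : (fun τ => F.y p τ) =ᶠ[nhds t] (fun _ => (0:ℝ)) := by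
    filter_upwards [Ioo_mem_nhds ht.1 ht.2] with τ hτ
    exact hy τ ⟨hτ.1.le, hτ.2⟩
  rw [CurveFlow.yt, hev.deriv_eq, deriv_const]

include hsol in
lemma hAlpha1 {t : ℝ} (ht : t ∈ Ioo (0:ℝ) T) :
    F.alpha 1 t = F.xt 1 t * Real.cos ψp := by
  have ht' : t ∈ Ico (0:ℝ) T := ⟨ht.1.le, ht.2⟩
  have htx : F.tx 1 t = Real.cos ψp := (hsol.2.2 t ht').2.2
  have hyt : F.yt 1 t = 0 := hyt0 F ht (fun τ hτ => (hsol.2.1 τ hτ).2)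
  rw [CurveFlow.alpha, htx, hyt]
  ring

include hsol in
lemma hAlpham1 {t : ℝ} (ht : t ∈ Ioo (0:ℝ) T) :
    F.alpha (-1) t = F.xt (-1) t * Real.cos ψm := by
  have ht' : t ∈ Ico (0:ℝ) T := ⟨ht.1.le, ht.2⟩
  have htx : F.tx (-1) t = Real.cos ψm := (hsol.2.2 t ht').1.2
  have hyt : F.yt (-1) t = 0 := hyt0 F ht (fun τ hτ => (hsol.2.1 τ hτ).1)
  rw [CurveFlow.alpha, htx, hyt]
  ring

lemma hLpos {t : ℝ} (ht : t ∈ Ioo (0:ℝ) T) : 0 < F.len t := by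
  refine intervalIntegral.intervalIntegral_pos_of_pos_on
    ((uIcc_eq ▸ (hCv F ht)).intervalIntegrable) ?_ (by norm_num)
  exact fun p hp => hvpos F (Ioo_subset_Icc_self hp) ⟨ht.1.le, ht.2⟩

include hsol htc in
/-- the main derivative computation -/
lemma mainDeriv {t₀ : ℝ} (ht₀ : t₀ ∈ Ioo (0:ℝ) T) :
    HasDerivAt (fun τ => F.len τ - F.x 1 τ * Real.cos ψp + F.x (-1) τ * Real.cos ψm)
      (- F.lineInt (fun p τ => (F.kappa p τ + (ψp + ψm) / F.len τ)^2) t₀) t₀ := by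
  have ht₀' : t₀ ∈ Ico (0:ℝ) T := ⟨ht₀.1.le, ht₀.2⟩
  have h1 : ((1:ℝ)) ∈ Icc (-1:ℝ) 1 := by norm_num
  have hm1 : ((-1:ℝ)) ∈ Icc (-1:ℝ) 1 := by norm_num
  have hX1 : HasDerivAt (fun τ => F.x 1 τ) (F.xt 1 t₀) t₀ :=
    (hxtEq F h1 ht₀) ▸ hxHasT F h1 ht₀
  have hXm1 : HasDerivAt (fun τ => F.x (-1) τ) (F.xt (-1) t₀) t₀ :=
    (hxtEq F hm1 ht₀) ▸ hxHasT F hm1 ht₀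
  have hE : HasDerivAt (fun τ => F.len τ - F.x 1 τ * Real.cos ψp + F.x (-1) τ * Real.cos ψm)
      ((∫ p in (-1:ℝ)..1, vt F p t₀) - F.xt 1 t₀ * Real.cos ψp + F.xt (-1) t₀ * Real.cos ψm)
      t₀ := ((hLenHasDeriv F ht₀).sub (hX1.mul_const _)).add (hXm1.mul_const _)
  -- integrability facts
  have hIv : IntervalIntegrable (fun p => F.v p t₀) volume (-1) 1 :=
    (uIcc_eq ▸ (hCv F ht₀)).intervalIntegrable
  have hIκv : IntervalIntegrable (fun p => F.kappa p t₀ * F.v p t₀) volume (-1) 1 :=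
    (uIcc_eq ▸ ((hCkappa F ht₀).mul (hCv F ht₀))).intervalIntegrable
  have hIκ2v : IntervalIntegrable (fun p => F.kappa p t₀ ^ 2 * F.v p t₀) volume (-1) 1 :=
    (uIcc_eq ▸ (((hCkappa F ht₀).pow 2).mul (hCv F ht₀))).intervalIntegrable
  have hIAp : IntervalIntegrable (fun p => Ap F p t₀) volume (-1) 1 :=
    (uIcc_eq ▸ (hCAp F ht₀)).intervalIntegrable
  have hL : F.len t₀ ≠ 0 := ne_of_gt (hLpos F ht₀)
  have hlint : F.lineInt F.kappa t₀ = -(ψp + ψm) := by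
    have := htc t₀ ht₀'
    linarith
  have hκI : (∫ p in (-1:ℝ)..1, F.kappa p t₀ * F.v p t₀) = -(ψp + ψm) := hlint
  -- rewrite the integral of vt
  have e1 : (∫ p in (-1:ℝ)..1, vt F p t₀)
      = (∫ p in (-1:ℝ)..1, Ap F p t₀)
        - ∫ p in (-1:ℝ)..1, (F.kappa p t₀ ^ 2 * F.v p t₀
            + (ψp + ψm) / F.len t₀ * (F.kappa p t₀ * F.v p t₀)) := by
    rw [← intervalIntegral.integral_sub hIAp (hIκ2v.add (hIκv.const_mul _))]
    apply intervalIntegral.integral_congr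
    intro p hp
    rw [uIcc_eq] at hp
    have h := hPoint F hp ht₀
    have hV := hsol.1 p hp t₀ ht₀
    show vt F p t₀ = Ap F p t₀ - (F.kappa p t₀ ^ 2 * F.v p t₀
      + (ψp + ψm) / F.len t₀ * (F.kappa p t₀ * F.v p t₀))
    rw [h, hV, hlint]
    ring
  have e2 : (∫ p in (-1:ℝ)..1, (F.kappa p t₀ ^ 2 * F.v p t₀
      + (ψp + ψm) / F.len t₀ * (F.kappa p t₀ * F.v p t₀)))
      = (∫ p in (-1:ℝ)..1, F.kappa p t₀ ^ 2 * F.v p t₀)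
        + (ψp + ψm) / F.len t₀ * (∫ p in (-1:ℝ)..1, F.kappa p t₀ * F.v p t₀) := by
    rw [intervalIntegral.integral_add hIκ2v (hIκv.const_mul _),
      intervalIntegral.integral_const_mul]
  have e3 : F.lineInt (fun p τ => (F.kappa p τ + (ψp + ψm) / F.len τ)^2) t₀
      = (∫ p in (-1:ℝ)..1, F.kappa p t₀ ^ 2 * F.v p t₀)
        + 2 * ((ψp + ψm) / F.len t₀) * (∫ p in (-1:ℝ)..1, F.kappa p t₀ * F.v p t₀)
        + ((ψp + ψm) / F.len t₀) ^ 2 * F.len t₀ := by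
    have : F.lineInt (fun p τ => (F.kappa p τ + (ψp + ψm) / F.len τ)^2) t₀
        = ∫ p in (-1:ℝ)..1, (F.kappa p t₀ ^ 2 * F.v p t₀
            + (2 * ((ψp + ψm) / F.len t₀) * (F.kappa p t₀ * F.v p t₀)
              + ((ψp + ψm) / F.len t₀) ^ 2 * F.v p t₀)) := by
      apply intervalIntegral.integral_congr
      intro p hp
      show (F.kappa p t₀ + (ψp + ψm) / F.len t₀)^2 * F.v p t₀ = _
      ring
    rw [this, intervalIntegral.integral_add hIκ2v ((hIκv.const_mul _).add (hIv.const_mul _)),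
      intervalIntegral.integral_add (hIκv.const_mul _) (hIv.const_mul _),
      intervalIntegral.integral_const_mul, intervalIntegral.integral_const_mul]
    have hlen : (∫ p in (-1:ℝ)..1, F.v p t₀) = F.len t₀ := rfl
    rw [hlen]
    ring
  have hFTC := hAlphaFTC F ht₀
  have hA1 := hAlpha1 F hsol ht₀
  have hAm1 := hAlpham1 F hsol ht₀
  -- final scalar computation
  have hval : (∫ p in (-1:ℝ)..1, vt F p t₀) - F.xt 1 t₀ * Real.cos ψp
      + F.xt (-1) t₀ * Real.cos ψm
      = - F.lineInt (fun p τ => (F.kappa p τ + (ψp + ψm) / F.len τ)^2) t₀ := by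
    rw [e1, e2, e3, hFTC, hA1, hAm1, hκI]
    field_simp
    ring
  rw [hval] at hE
  exact hE

end Main

end EAux

/-- **The energy `E(t) = L(t) − x(1,t) cos ψ₊ + x(-1,t) cos ψ₋` is non-increasing**,
with `d/dt E(t) = −∫_{γ(t)} (κ + (ψ₊+ψ₋)/L(t))² ds`. -/
theorem energy_dissipation
    (ψp ψm T : ℝ) (hψp : ψp ∈ Set.Ioo 0 π) (hψm : ψm ∈ Set.Ioo 0 π)
    (F : CurveFlow T) (hsol : F.Solves ψp ψm) (htc : F.TotalCurvature ψp ψm) :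
    (∀ t ∈ Set.Ioo (0:ℝ) T,
      HasDerivAt (fun τ => F.len τ - F.x 1 τ * Real.cos ψp + F.x (-1) τ * Real.cos ψm)
        (- F.lineInt (fun p τ => (F.kappa p τ + (ψp + ψm) / F.len τ)^2) t) t)
    ∧ (∀ t₁ ∈ Set.Ioo (0:ℝ) T, ∀ t₂ ∈ Set.Ioo (0:ℝ) T, t₁ ≤ t₂ →
        F.len t₂ - F.x 1 t₂ * Real.cos ψp + F.x (-1) t₂ * Real.cos ψm
          ≤ F.len t₁ - F.x 1 t₁ * Real.cos ψp + F.x (-1) t₁ * Real.cos ψm) := by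
  constructor
  · intro t ht
    exact EAux.mainDeriv F hsol htc ht
  · intro t₁ ht₁ t₂ ht₂ h12
    have hsub : Set.Icc t₁ t₂ ⊆ Set.Ioo (0:ℝ) T :=
      fun τ hτ => ⟨lt_of_lt_of_le ht₁.1 hτ.1, lt_of_le_of_lt hτ.2 ht₂.2⟩
    have hmono : AntitoneOn
        (fun τ => F.len τ - F.x 1 τ * Real.cos ψp + F.x (-1) τ * Real.cos ψm)
        (Set.Icc t₁ t₂) := by
      apply antitoneOn_of_deriv_nonpos (convex_Icc t₁ t₂)
      · intro τ hτ
        exact ((EAux.mainDeriv F hsol htc (hsub hτ)).continuousAt).continuousWithinAt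
      · rw [interior_Icc]
        intro τ hτ
        exact ((EAux.mainDeriv F hsol htc
          (hsub (Set.Ioo_subset_Icc_self hτ))).differentiableAt).differentiableWithinAt
      · rw [interior_Icc]
        intro τ hτ
        have hτ' := hsub (Set.Ioo_subset_Icc_self hτ)
        rw [(EAux.mainDeriv F hsol htc hτ').deriv]
        have hnn : 0 ≤ F.lineInt (fun p τ' => (F.kappa p τ' + (ψp + ψm) / F.len τ')^2) τ := by
          show 0 ≤ ∫ p in (-1:ℝ)..1, (F.kappa p τ + (ψp + ψm) / F.len τ)^2 * F.v p τ
          apply intervalIntegral.integral_nonneg (by norm_num)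
          intro u hu
          exact mul_nonneg (sq_nonneg _) (Real.sqrt_nonneg _)
        linarith
    exact hmono (Set.left_mem_Icc.2 h12) (Set.right_mem_Icc.2 h12) h12
end
end

section
/- Let κ(θ,t) be a smooth negative solution of the curvature flow equation in tangent-angle variables on [−ψ₊,ψ₋]×[0,T). If ∫_{−ψ₊}^{ψ₋} sin θ / κ(θ,0) dθ = 0, then ∫_{−ψ₊}^{ψ₋} sin θ / κ(θ,t) dθ = 0 for every t ∈ [0,T); indeed the time derivative of ∫_{−ψ₊}^{ψ₋} sin θ / κ(θ,t) dθ vanishes identically for any such solution. -/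
noncomputable section

open Real Set intervalIntegral

/-- The length `L(t) = −∫_{−ψ₊}^{ψ₋} dθ/κ(θ,t)` associated to a negative curvature
function in the tangent-angle variable. -/
def angLen (ψp ψm : ℝ) (κ : ℝ → ℝ → ℝ) (t : ℝ) : ℝ :=
  - ∫ θ in (-ψp)..ψm, 1 / κ θ t

/-- `κ_θ` (one-sided at the endpoints of `[−ψ₊,ψ₋]`). -/
def angDθ (ψp ψm : ℝ) (κ : ℝ → ℝ → ℝ) (θ t : ℝ) : ℝ :=
  derivWithin (fun θ' => κ θ' t) (Set.Icc (-ψp) ψm) θ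

/-- `κ_{θθ}` -/
def angDθθ (ψp ψm : ℝ) (κ : ℝ → ℝ → ℝ) (θ t : ℝ) : ℝ :=
  derivWithin (fun θ' => angDθ ψp ψm κ θ' t) (Set.Icc (-ψp) ψm) θ

/-- `κ_t` (one-sided at the endpoints of the time interval `J`). -/
def angDt (J : Set ℝ) (κ : ℝ → ℝ → ℝ) (θ t : ℝ) : ℝ :=
  derivWithin (fun τ => κ θ τ) J t

/-- `κ` is a smooth negative solution of the curvature flow equation in
tangent-angle variables on `[−ψ₊,ψ₋] × J`:
`κ_t = κ²(κ_{θθ} + κ + S/L(t))` with the boundary conditions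
`κ_θ(ψ₋,t) = cot ψ₋ (κ(ψ₋,t) + S/L(t))`,
`κ_θ(−ψ₊,t) = −cot ψ₊ (κ(−ψ₊,t) + S/L(t))`, where `S = ψ₊ + ψ₋`. -/
def SolvesAngle (ψp ψm : ℝ) (J : Set ℝ) (κ : ℝ → ℝ → ℝ) : Prop :=
  ContDiffOn ℝ (⊤ : ℕ∞) (fun q : ℝ × ℝ => κ q.1 q.2) (Set.Icc (-ψp) ψm ×ˢ J)
  ∧ (∀ θ ∈ Set.Icc (-ψp) ψm, ∀ t ∈ J, κ θ t < 0)
  ∧ (∀ θ ∈ Set.Ioo (-ψp) ψm, ∀ t ∈ J,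
      angDt J κ θ t
        = (κ θ t)^2 * (angDθθ ψp ψm κ θ t + κ θ t + (ψp + ψm) / angLen ψp ψm κ t))
  ∧ (∀ t ∈ J,
      angDθ ψp ψm κ ψm t = Real.cot ψm * (κ ψm t + (ψp + ψm) / angLen ψp ψm κ t)
      ∧ angDθ ψp ψm κ (-ψp) t
          = - Real.cot ψp * (κ (-ψp) t + (ψp + ψm) / angLen ψp ψm κ t))

section Aux

open scoped ContDiff
open MeasureTheory

variable {ψp ψm T : ℝ} {κ : ℝ → ℝ → ℝ}

/-- The inner spatial integral of `∂ₜ(sin θ / κ)` vanishes: integration by parts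
plus the boundary conditions. -/
lemma integral_H_zero (hψp : ψp ∈ Set.Ioo 0 π) (hψm : ψm ∈ Set.Ioo 0 π)
    (hκ : SolvesAngle ψp ψm (Set.Ico 0 T) κ) {t : ℝ} (ht : t ∈ Set.Ico 0 T) :
    ∫ θ in (-ψp)..ψm, -(Real.sin θ * angDt (Set.Ico 0 T) κ θ t) / (κ θ t) ^ 2 = 0 := by
  obtain ⟨hsm, hneg, hpde, hbc⟩ := hκ
  set c : ℝ := (ψp + ψm) / angLen ψp ψm κ t with hc
  have hab : (-ψp) < ψm := by have := hψp.1; have := hψm.1; linarith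
  have hud : UniqueDiffOn ℝ (Set.Icc (-ψp) ψm) := uniqueDiffOn_Icc hab
  -- slice regularity in θ
  have hf : ContDiffOn ℝ ∞ (fun θ => κ θ t) (Set.Icc (-ψp) ψm) :=
    (hsm.of_le (by simp)).comp ((contDiff_id.prodMk contDiff_const).contDiffOn)
      (fun θ hθ => Set.mk_mem_prod hθ ht)
  have hf' : ContDiffOn ℝ ∞ (fun θ => angDθ ψp ψm κ θ t) (Set.Icc (-ψp) ψm) :=
    hf.derivWithin hud (by norm_num)
  have hf''c : ContinuousOn (fun θ => angDθθ ψp ψm κ θ t) (Set.Icc (-ψp) ψm) :=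
    hf'.continuousOn_derivWithin hud (by norm_num)
  have hDf : ∀ θ ∈ Set.Ioo (-ψp) ψm, HasDerivAt (fun θ' => κ θ' t) (angDθ ψp ψm κ θ t) θ := by
    intro θ hθ
    exact ((hf.differentiableOn (by norm_num) θ (Ioo_subset_Icc_self hθ)).hasDerivWithinAt).hasDerivAt
      (Icc_mem_nhds hθ.1 hθ.2)
  have hDf' : ∀ θ ∈ Set.Ioo (-ψp) ψm,
      HasDerivAt (fun θ' => angDθ ψp ψm κ θ' t) (angDθθ ψp ψm κ θ t) θ := by
    intro θ hθ
    exact ((hf'.differentiableOn (by norm_num) θ (Ioo_subset_Icc_self hθ)).hasDerivWithinAt).hasDerivAt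
      (Icc_mem_nhds hθ.1 hθ.2)
  -- integration by parts via FTC
  have key : ∫ θ in (-ψp)..ψm, Real.sin θ * (angDθθ ψp ψm κ θ t + κ θ t)
      = (Real.sin ψm * angDθ ψp ψm κ ψm t - Real.cos ψm * κ ψm t)
        - (Real.sin (-ψp) * angDθ ψp ψm κ (-ψp) t - Real.cos (-ψp) * κ (-ψp) t) := by
    apply intervalIntegral.integral_eq_sub_of_hasDeriv_right_of_le
      (f := fun θ => Real.sin θ * angDθ ψp ψm κ θ t - Real.cos θ * κ θ t) hab.le
    · exact (Real.continuous_sin.continuousOn.mul hf'.continuousOn).sub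
        (Real.continuous_cos.continuousOn.mul hf.continuousOn)
    · intro θ hθ
      have h : HasDerivAt (fun θ' => Real.sin θ' * angDθ ψp ψm κ θ' t - Real.cos θ' * κ θ' t)
          (Real.sin θ * (angDθθ ψp ψm κ θ t + κ θ t)) θ := by
        have := ((Real.hasDerivAt_sin θ).mul (hDf' θ hθ)).sub
          ((Real.hasDerivAt_cos θ).mul (hDf θ hθ))
        exact this.congr_deriv (by ring)
      exact h.hasDerivWithinAt
    · apply ContinuousOn.intervalIntegrable
      rw [uIcc_of_le hab.le]
      exact Real.continuous_sin.continuousOn.mul (hf''c.add hf.continuousOn)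
  -- replace the integrand using the PDE
  have hcongr : ∫ θ in (-ψp)..ψm, -(Real.sin θ * angDt (Set.Ico 0 T) κ θ t) / (κ θ t) ^ 2
      = ∫ θ in (-ψp)..ψm,
          (-(Real.sin θ * (angDθθ ψp ψm κ θ t + κ θ t)) + (-c) * Real.sin θ) := by
    apply intervalIntegral.integral_congr_ae
    have hsing : (volume : Measure ℝ) {ψm} = 0 := measure_singleton _
    filter_upwards [compl_mem_ae_iff.2 hsing] with θ hθne hθmem
    rw [Set.uIoc_of_le hab.le] at hθmem
    have hθo : θ ∈ Set.Ioo (-ψp) ψm :=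
      ⟨hθmem.1, lt_of_le_of_ne hθmem.2 (by simpa using hθne)⟩
    have hκne : κ θ t ≠ 0 := (hneg θ (Ioo_subset_Icc_self hθo) t ht).ne
    rw [hpde θ hθo t ht, ← hc]
    field_simp
    ring
  rw [hcongr]
  have hint1 : IntervalIntegrable
      (fun θ => -(Real.sin θ * (angDθθ ψp ψm κ θ t + κ θ t))) volume (-ψp) ψm := by
    apply ContinuousOn.intervalIntegrable
    rw [uIcc_of_le hab.le]
    exact (Real.continuous_sin.continuousOn.mul (hf''c.add hf.continuousOn)).neg
  have hint2 : IntervalIntegrable (fun θ => (-c) * Real.sin θ) volume (-ψp) ψm :=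
    (continuous_const.mul Real.continuous_sin).intervalIntegrable _ _
  rw [intervalIntegral.integral_add hint1 hint2, intervalIntegral.integral_neg,
    intervalIntegral.integral_const_mul, integral_sin, key,
    (hbc t ht).1, (hbc t ht).2, ← hc]
  have hsm' : Real.sin ψm ≠ 0 := (Real.sin_pos_of_pos_of_lt_pi hψm.1 hψm.2).ne'
  have hsp : Real.sin ψp ≠ 0 := (Real.sin_pos_of_pos_of_lt_pi hψp.1 hψp.2).ne'
  rw [Real.cot_eq_cos_div_sin, Real.cot_eq_cos_div_sin, Real.sin_neg, Real.cos_neg]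
  field_simp
  ring

/-- Joint continuity of the time derivative `κ_t` on the space-time domain. -/
lemma angDt_continuousOn (hab : (-ψp) < ψm) (hT : 0 < T)
    (hsm : ContDiffOn ℝ (⊤ : ℕ∞) (fun q : ℝ × ℝ => κ q.1 q.2) (Set.Icc (-ψp) ψm ×ˢ Set.Ico 0 T)) :
    ContinuousOn (fun q : ℝ × ℝ => angDt (Set.Ico 0 T) κ q.1 q.2)
      (Set.Icc (-ψp) ψm ×ˢ Set.Ico 0 T) := by
  set s : Set (ℝ × ℝ) := Set.Icc (-ψp) ψm ×ˢ Set.Ico 0 T with hs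
  have hud : UniqueDiffOn ℝ s := (uniqueDiffOn_Icc hab).prod (uniqueDiffOn_Ico 0 T)
  have hd : DifferentiableOn ℝ (fun q : ℝ × ℝ => κ q.1 q.2) s :=
    (hsm.of_le (by simp)).differentiableOn (n := ∞) (by norm_num)
  have hfc : ContinuousOn (fderivWithin ℝ (fun q : ℝ × ℝ => κ q.1 q.2) s) s :=
    (hsm.of_le (by simp)).continuousOn_fderivWithin (n := ∞) hud (by norm_num)
  have heq : Set.EqOn (fun q : ℝ × ℝ => angDt (Set.Ico 0 T) κ q.1 q.2)
      (fun q => (fderivWithin ℝ (fun q : ℝ × ℝ => κ q.1 q.2) s q) ((0 : ℝ), (1 : ℝ))) s := by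
    rintro ⟨θ, τ⟩ hq
    have hq1 : θ ∈ Set.Icc (-ψp) ψm := hq.1
    have hq2 : τ ∈ Set.Ico 0 T := hq.2
    have hφ : HasDerivWithinAt (fun u : ℝ => (θ, u)) ((0 : ℝ), (1 : ℝ)) (Set.Ico 0 T) τ :=
      ((hasDerivAt_const τ θ).prodMk (hasDerivAt_id τ)).hasDerivWithinAt
    have hD := (hd (θ, τ) hq).hasFDerivWithinAt
    have hcomp := hD.comp_hasDerivWithinAt τ hφ (fun u hu => Set.mk_mem_prod hq1 hu)
    exact hcomp.derivWithin (uniqueDiffOn_Ico 0 T τ hq2)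
  exact ContinuousOn.congr (hfc.clm_apply continuousOn_const) heq

/-- The quantity `∫ sin θ / κ(θ,t) dθ` is constant in time. -/
lemma F_const (hψp : ψp ∈ Set.Ioo 0 π) (hψm : ψm ∈ Set.Ioo 0 π) (hT : 0 < T)
    (hκ : SolvesAngle ψp ψm (Set.Ico 0 T) κ) {t : ℝ} (ht : t ∈ Set.Ico 0 T) :
    (∫ θ in (-ψp)..ψm, Real.sin θ / κ θ t) = ∫ θ in (-ψp)..ψm, Real.sin θ / κ θ 0 := by
  obtain ⟨hsm, hneg, hpde, hbc⟩ := hκ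
  have hab : (-ψp) < ψm := by have := hψp.1; have := hψm.1; linarith
  have h0T : (0 : ℝ) ∈ Set.Ico 0 T := ⟨le_refl 0, hT⟩
  set J : Set ℝ := Set.Ico 0 T with hJ
  set H : ℝ → ℝ → ℝ := fun θ s => -(Real.sin θ * angDt J κ θ s) / (κ θ s) ^ 2 with hH
  -- joint continuity of H
  have hκc : ContinuousOn (fun q : ℝ × ℝ => κ q.1 q.2) (Set.Icc (-ψp) ψm ×ˢ J) :=
    hsm.continuousOn
  have hκne : ∀ q ∈ Set.Icc (-ψp) ψm ×ˢ J, (κ q.1 q.2) ^ 2 ≠ 0 := by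
    rintro ⟨θ, s⟩ hq
    exact pow_ne_zero _ (hneg θ hq.1 s hq.2).ne
  have hHc : ContinuousOn (fun q : ℝ × ℝ => H q.1 q.2) (Set.Icc (-ψp) ψm ×ˢ J) := by
    apply ContinuousOn.div
    · exact ((Real.continuous_sin.comp continuous_fst).continuousOn.mul
        (angDt_continuousOn hab hT hsm)).neg
    · exact hκc.pow 2
    · exact hκne
  -- slice: time regularity
  have hslice : ∀ θ ∈ Set.Icc (-ψp) ψm, ContDiffOn ℝ ∞ (fun τ => κ θ τ) J :=
    fun θ hθ => (hsm.of_le (by simp)).comp ((contDiff_const.prodMk contDiff_id).contDiffOn)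
      (fun τ hτ => Set.mk_mem_prod hθ hτ)
  -- inner FTC in time
  have hinner : ∀ θ ∈ Set.Icc (-ψp) ψm,
      ∫ s in (0:ℝ)..t, H θ s = Real.sin θ / κ θ t - Real.sin θ / κ θ 0 := by
    intro θ hθ
    have hsub : Set.Icc (0:ℝ) t ⊆ J := fun s hs => ⟨hs.1, lt_of_le_of_lt hs.2 ht.2⟩
    apply intervalIntegral.integral_eq_sub_of_hasDeriv_right_of_le ht.1
    · apply ContinuousOn.div continuousOn_const (((hslice θ hθ).continuousOn).mono hsub)
      exact fun s hs => (hneg θ hθ s (hsub hs)).ne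
    · intro s hs
      have hsJ : s ∈ J := hsub ⟨hs.1.le, hs.2.le⟩
      have hdw : HasDerivWithinAt (fun τ => κ θ τ) (angDt J κ θ s) J s :=
        (((hslice θ hθ).differentiableOn (by norm_num)) s hsJ).hasDerivWithinAt
      have hda : HasDerivAt (fun τ => κ θ τ) (angDt J κ θ s) s :=
        hdw.hasDerivAt (Ico_mem_nhds hs.1 (lt_of_lt_of_le hs.2 ht.2.le))
      have hκs : κ θ s ≠ 0 := (hneg θ hθ s hsJ).ne
      have h : HasDerivAt (fun τ => Real.sin θ / κ θ τ) (H θ s) s := by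
        have := (hasDerivAt_const s (Real.sin θ)).div hda hκs
        exact this.congr_deriv (by simp only [hH]; ring)
      exact h.hasDerivWithinAt
    · apply ContinuousOn.intervalIntegrable
      rw [uIcc_of_le ht.1]
      have : ContinuousOn (fun s => H θ s) J := by
        have := hHc.comp (f := fun s : ℝ => (θ, s))
          (continuous_const.prodMk continuous_id).continuousOn
          (fun s hs => Set.mk_mem_prod hθ hs)
        exact this
      exact this.mono hsub
  -- integrability in θ of the slices at times t and 0
  have hθint : ∀ τ ∈ J, IntervalIntegrable (fun θ => Real.sin θ / κ θ τ) volume (-ψp) ψm := by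
    intro τ hτ
    apply ContinuousOn.intervalIntegrable
    rw [uIcc_of_le hab.le]
    apply ContinuousOn.div Real.continuous_sin.continuousOn
    · exact hκc.comp (continuous_id.prodMk continuous_const).continuousOn
        (fun θ hθ => Set.mk_mem_prod hθ hτ)
    · exact fun θ hθ => (hneg θ hθ τ hτ).ne
  -- Fubini
  have hswap : ∫ θ in (-ψp)..ψm, (∫ s in (0:ℝ)..t, H θ s)
      = ∫ s in (0:ℝ)..t, (∫ θ in (-ψp)..ψm, H θ s) := by
    simp only [intervalIntegral.integral_of_le ht.1, intervalIntegral.integral_of_le hab.le]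
    apply MeasureTheory.integral_integral_swap
    have hKsub : Set.Ioc (-ψp) ψm ×ˢ Set.Ioc (0:ℝ) t ⊆ Set.Icc (-ψp) ψm ×ˢ Set.Icc 0 t :=
      Set.prod_mono Set.Ioc_subset_Icc_self Set.Ioc_subset_Icc_self
    have hKsub2 : Set.Icc (-ψp) ψm ×ˢ Set.Icc (0:ℝ) t ⊆ Set.Icc (-ψp) ψm ×ˢ J :=
      Set.prod_mono subset_rfl (fun s hs => ⟨hs.1, lt_of_le_of_lt hs.2 ht.2⟩)
    have hint : IntegrableOn (fun q : ℝ × ℝ => H q.1 q.2)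
        (Set.Icc (-ψp) ψm ×ˢ Set.Icc 0 t) (volume : Measure (ℝ × ℝ)) :=
      (hHc.mono hKsub2).integrableOn_compact (isCompact_Icc.prod isCompact_Icc)
    have hint2 : IntegrableOn (fun q : ℝ × ℝ => H q.1 q.2)
        (Set.Ioc (-ψp) ψm ×ˢ Set.Ioc 0 t) (volume : Measure (ℝ × ℝ)) :=
      hint.mono_set hKsub
    rw [Function.uncurry_def]
    rw [Measure.prod_restrict]
    rw [← Measure.volume_eq_prod]
    exact hint2
  -- the inner θ-integral vanishes for a.e. (indeed all) times in (0, t]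
  have hzero : ∀ s ∈ Set.Ioc (0:ℝ) t, (∫ θ in (-ψp)..ψm, H θ s) = 0 := by
    intro s hs
    exact integral_H_zero hψp hψm ⟨hsm, hneg, hpde, hbc⟩ ⟨hs.1.le, lt_of_le_of_lt hs.2 ht.2⟩
  have houter : ∫ s in (0:ℝ)..t, (∫ θ in (-ψp)..ψm, H θ s) = 0 := by
    rw [intervalIntegral.integral_of_le ht.1]
    rw [MeasureTheory.setIntegral_congr_fun measurableSet_Ioc hzero]
    simp
  -- put everything together
  have hmain : ∫ θ in (-ψp)..ψm, (∫ s in (0:ℝ)..t, H θ s)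
      = (∫ θ in (-ψp)..ψm, Real.sin θ / κ θ t) - ∫ θ in (-ψp)..ψm, Real.sin θ / κ θ 0 := by
    rw [intervalIntegral.integral_congr (g := fun θ => Real.sin θ / κ θ t - Real.sin θ / κ θ 0)
      (by intro θ hθ; rw [uIcc_of_le hab.le] at hθ; exact hinner θ hθ)]
    exact intervalIntegral.integral_sub (hθint t ht) (hθint 0 h0T)
  have := hmain.symm.trans (hswap.trans houter)
  linarith [this]

end Aux

/-- **The endpoint condition `∫ sin θ/κ dθ = 0` is preserved**: its time derivative
vanishes identically for any smooth negative solution of the curvature flow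
equation in tangent-angle variables, so if it holds at `t = 0` it holds forever. -/
theorem endpoint_condition_preserved
    (ψp ψm T : ℝ) (hψp : ψp ∈ Set.Ioo 0 π) (hψm : ψm ∈ Set.Ioo 0 π) (hT : 0 < T)
    (κ : ℝ → ℝ → ℝ) (hκ : SolvesAngle ψp ψm (Set.Ico 0 T) κ) :
    (∀ t ∈ Set.Ico (0:ℝ) T,
      HasDerivWithinAt (fun τ => ∫ θ in (-ψp)..ψm, Real.sin θ / κ θ τ) 0
        (Set.Ico (0:ℝ) T) t)
    ∧ ((∫ θ in (-ψp)..ψm, Real.sin θ / κ θ 0) = 0 →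
        ∀ t ∈ Set.Ico (0:ℝ) T, (∫ θ in (-ψp)..ψm, Real.sin θ / κ θ t) = 0) := by
  have hconst : ∀ t ∈ Set.Ico (0:ℝ) T,
      (∫ θ in (-ψp)..ψm, Real.sin θ / κ θ t) = ∫ θ in (-ψp)..ψm, Real.sin θ / κ θ 0 :=
    fun t ht => F_const hψp hψm hT hκ ht
  constructor
  · intro t ht
    have h0 : HasDerivWithinAt (fun _ : ℝ => ∫ θ in (-ψp)..ψm, Real.sin θ / κ θ 0) 0
        (Set.Ico (0:ℝ) T) t := (hasDerivWithinAt_const t _ _)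
    exact h0.congr (fun τ hτ => hconst τ hτ) (hconst t ht)
  · intro h0 t ht
    rw [hconst t ht, h0]
end
end

section
/- Let κ(θ,t) be a smooth negative solution of the curvature flow equation in tangent-angle variables on I×[ε,T], where I = [−ψ₊,ψ₋] and 0 < ε < T < ∞. Then sup_{I×[ε,T]} (κ² + κ_θ²) ≤ max{ sup_{I×[ε,T]} κ², sup_{θ∈I} (κ²(θ,ε) + κ_θ²(θ,ε)), sup_{t∈[ε,T]} max(κ²(−ψ₊,t) + κ_θ²(−ψ₊,t), κ²(ψ₋,t) + κ_θ²(ψ₋,t)) }. -/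
noncomputable section

open Real Set intervalIntegral

private lemma hasDerivWithinAt_slice_fst {S J : Set ℝ} {g : ℝ × ℝ → ℝ} {θ t : ℝ}
    (ht : t ∈ J) (hg : DifferentiableWithinAt ℝ g (S ×ˢ J) (θ, t)) :
    HasDerivWithinAt (fun θ' => g (θ', t))
      (fderivWithin ℝ g (S ×ˢ J) (θ, t) (1, 0)) S θ :=
  hg.hasFDerivWithinAt.comp_hasDerivWithinAt θ
    (((hasDerivAt_id θ).prodMk (hasDerivAt_const θ t)).hasDerivWithinAt)
    (fun _ hθ' => Set.mk_mem_prod hθ' ht)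

private lemma hasDerivWithinAt_slice_snd {S J : Set ℝ} {g : ℝ × ℝ → ℝ} {θ t : ℝ}
    (hθ : θ ∈ S) (hg : DifferentiableWithinAt ℝ g (S ×ˢ J) (θ, t)) :
    HasDerivWithinAt (fun τ => g (θ, τ))
      (fderivWithin ℝ g (S ×ˢ J) (θ, t) (0, 1)) J t :=
  hg.hasFDerivWithinAt.comp_hasDerivWithinAt t
    (((hasDerivAt_const t θ).prodMk (hasDerivAt_id t)).hasDerivWithinAt)
    (fun _ hτ => ⟨hθ, hτ⟩)

private lemma second_deriv_nonpos_aux {u u1 : ℝ → ℝ} {A B θ0 u2 : ℝ}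
    (hA : A < θ0) (hB : θ0 < B)
    (hu : ContinuousOn u (Set.Icc A B))
    (hmax : ∀ x ∈ Set.Icc A B, u x ≤ u θ0)
    (hu1 : ∀ x ∈ Set.Icc A B, HasDerivWithinAt u (u1 x) (Set.Icc A B) x)
    (hu10 : u1 θ0 = 0)
    (hu2 : HasDerivAt u1 u2 θ0) : u2 ≤ 0 := by
  by_contra hpos
  push_neg at hpos
  have hev : ∀ᶠ x in nhdsWithin θ0 (Set.Ioi θ0), 0 < u1 x := by
    have h := hasDerivAt_iff_tendsto_slope.1 hu2
    have h2 : Filter.Tendsto (slope u1 θ0) (nhdsWithin θ0 (Set.Ioi θ0)) (nhds u2) :=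
      h.mono_left (nhdsWithin_mono _ (fun x hx => ne_of_gt hx))
    have h3 : ∀ᶠ x in nhdsWithin θ0 (Set.Ioi θ0), 0 < slope u1 θ0 x :=
      h2.eventually (eventually_gt_nhds hpos)
    filter_upwards [h3, self_mem_nhdsWithin] with x hx hx'
    have hne : x - θ0 ≠ 0 := sub_ne_zero.2 (ne_of_gt hx')
    have h4 : 0 < (u1 x - u1 θ0) / (x - θ0) := by rwa [slope_def_field] at hx
    rw [hu10, sub_zero] at h4
    have h5 := mul_pos h4 (sub_pos.2 hx')
    rwa [div_mul_cancel₀ _ hne] at h5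
  rcases mem_nhdsGT_iff_exists_Ioo_subset.1 hev with ⟨c, hc, hsub⟩
  have hθm : θ0 < min c B := lt_min hc hB
  set x' := (θ0 + min c B) / 2 with hx'def
  have h1 : θ0 < x' := by simp only [hx'def]; linarith
  have h2 : x' < min c B := by simp only [hx'def]; linarith
  have hx'B : x' < B := lt_of_lt_of_le h2 (min_le_right c B)
  have hx'c : x' < c := lt_of_lt_of_le h2 (min_le_left c B)
  have hmono : StrictMonoOn u (Set.Icc θ0 x') := by
    apply strictMonoOn_of_deriv_pos (convex_Icc _ _)
    · exact hu.mono (Set.Icc_subset_Icc hA.le hx'B.le)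
    · intro x hx
      rw [interior_Icc] at hx
      have hxAB : x ∈ Set.Ioo A B := ⟨lt_trans hA hx.1, lt_trans hx.2 hx'B⟩
      have hd : HasDerivAt u (u1 x) x :=
        (hu1 x (Set.Ioo_subset_Icc_self hxAB)).hasDerivAt (Icc_mem_nhds hxAB.1 hxAB.2)
      rw [hd.deriv]
      exact hsub ⟨hx.1, lt_trans hx.2 hx'c⟩
  have hlt : u θ0 < u x' :=
    hmono (Set.left_mem_Icc.2 h1.le) (Set.right_mem_Icc.2 h1.le) h1
  exact absurd (hmax x' ⟨(lt_trans hA h1).le, hx'B.le⟩) (not_le.2 hlt)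

private lemma time_deriv_nonneg_aux {v : ℝ → ℝ} {d ε T t0 : ℝ} (hε : ε < t0) (ht0 : t0 ≤ T)
    (hmax : ∀ τ ∈ Set.Icc ε T, v τ ≤ v t0)
    (hv : HasDerivWithinAt v d (Set.Icc ε T) t0) : 0 ≤ d := by
  have hy : (ε - t0) ∈ posTangentConeAt (Set.Icc ε T) t0 := by
    apply mem_posTangentConeAt_of_segment_subset
    rw [show t0 + (ε - t0) = ε by ring, segment_symm, segment_eq_Icc hε.le]
    exact Set.Icc_subset_Icc le_rfl ht0
  have hM : IsMaxOn v (Set.Icc ε T) t0 := isMaxOn_iff.2 hmax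
  have h := hM.localize.hasFDerivWithinAt_nonpos hv.hasFDerivWithinAt hy
  simp only [ContinuousLinearMap.toSpanSingleton_apply, ContinuousLinearMap.smulRight_apply, ContinuousLinearMap.one_apply,
    smul_eq_mul] at h
  by_contra hcon
  push_neg at hcon
  nlinarith

private lemma final_arith {k k1 k2 k3 kt k1t C : ℝ}
    (hk : k < 0) (hk1 : k1 ≠ 0) (hC : 0 < C)
    (hk2 : k2 = -k)
    (hkt : kt = k^2 * (k2 + k + C))
    (hk1t : k1t = 2 * k * k1 * (k2 + k + C) + k^2 * (k3 + k1))
    (hu2 : 2*k1*k1 + 2*k*k2 + 2*k2*k2 + 2*k1*k3 ≤ 0)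
    (htd : 0 ≤ 2*k*kt + 2*k1*k1t) : False := by
  subst hk2
  subst hkt
  subst hk1t
  have hk1sq : 0 < k1^2 := by positivity
  have h5 : k^2 * (2*k1*k1 + 2*k*(-k) + 2*(-k)*(-k) + 2*k1*k3) ≤ 0 :=
    mul_nonpos_of_nonneg_of_nonpos (sq_nonneg k) hu2
  have h6 : 2*k*C*(k^2 + 2*k1^2) < 0 := by
    have hp : 0 < k^2 + 2*k1^2 := by positivity
    have h7 : 0 < C * (k^2 + 2*k1^2) := mul_pos hC hp
    nlinarith
  nlinarith [htd, h5, h6]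

/-- **Gradient estimate** (maximum principle for `κ² + κ_θ²`):
for a smooth negative solution on `I × [ε,T]`,
`sup (κ² + κ_θ²) ≤ max { sup κ², sup over the initial time, sup over the lateral
boundary }`. -/
theorem gradient_estimate
    (ψp ψm ε T : ℝ) (hψp : ψp ∈ Set.Ioo 0 π) (hψm : ψm ∈ Set.Ioo 0 π)
    (hε : 0 < ε) (hεT : ε < T)
    (κ : ℝ → ℝ → ℝ) (hκ : SolvesAngle ψp ψm (Set.Icc ε T) κ) :
    ∀ θ ∈ Set.Icc (-ψp) ψm, ∀ t ∈ Set.Icc ε T,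
      (κ θ t)^2 + (angDθ ψp ψm κ θ t)^2
        ≤ max (sSup ((fun q : ℝ × ℝ => (κ q.1 q.2)^2) ''
              (Set.Icc (-ψp) ψm ×ˢ Set.Icc ε T)))
          (max
            (sSup ((fun θ' => (κ θ' ε)^2 + (angDθ ψp ψm κ θ' ε)^2) ''
              Set.Icc (-ψp) ψm))
            (sSup ((fun τ => max ((κ (-ψp) τ)^2 + (angDθ ψp ψm κ (-ψp) τ)^2)
                ((κ ψm τ)^2 + (angDθ ψp ψm κ ψm τ)^2)) '' Set.Icc ε T))) := by
  obtain ⟨hsm, hneg, hpde, hbc⟩ := hκ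
  have hab : -ψp < ψm := lt_trans (neg_neg_iff_pos.2 hψp.1) hψm.1
  set D : Set (ℝ × ℝ) := Set.Icc (-ψp) ψm ×ˢ Set.Icc ε T with hDdef
  have hDu : UniqueDiffOn ℝ D := (uniqueDiffOn_Icc hab).prod (uniqueDiffOn_Icc hεT)
  have hDc : IsCompact D := isCompact_Icc.prod isCompact_Icc
  have hεm : ε ∈ Set.Icc ε T := ⟨le_rfl, hεT.le⟩
  -- smoothness bookkeeping
  have hf3 : ContDiffOn ℝ 3 (fun q : ℝ × ℝ => κ q.1 q.2) D := hsm.of_le (WithTop.coe_le_coe.2 le_top)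
  have hfd : DifferentiableOn ℝ (fun q : ℝ × ℝ => κ q.1 q.2) D :=
    hf3.differentiableOn (by norm_num)
  set κθ' : ℝ × ℝ → ℝ :=
    fun q => fderivWithin ℝ (fun q : ℝ × ℝ => κ q.1 q.2) D q (1, 0) with hκθ'def
  have hF1 : ContDiffOn ℝ 2 (fderivWithin ℝ (fun q : ℝ × ℝ => κ q.1 q.2) D) D :=
    hf3.fderivWithin hDu (by norm_num)
  have hκθ'2 : ContDiffOn ℝ 2 κθ' D := hF1.clm_apply contDiffOn_const
  have hκθ'd : DifferentiableOn ℝ κθ' D := hκθ'2.differentiableOn (by norm_num)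
  set κθθ' : ℝ × ℝ → ℝ := fun q => fderivWithin ℝ κθ' D q (1, 0) with hκθθ'def
  have hF2 : ContDiffOn ℝ 1 (fderivWithin ℝ κθ' D) D := hκθ'2.fderivWithin hDu (by norm_num)
  have hκθθ'1 : ContDiffOn ℝ 1 κθθ' D := hF2.clm_apply contDiffOn_const
  have hκθθ'd : DifferentiableOn ℝ κθθ' D := hκθθ'1.differentiableOn one_ne_zero
  set κt' : ℝ × ℝ → ℝ :=
    fun q => fderivWithin ℝ (fun q : ℝ × ℝ => κ q.1 q.2) D q (0, 1) with hκt'def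
  have hκt'2 : ContDiffOn ℝ 2 κt' D := hF1.clm_apply contDiffOn_const
  have hκt'd : DifferentiableOn ℝ κt' D := hκt'2.differentiableOn (by norm_num)
  -- bridges
  have hBθ : ∀ θ t, (θ, t) ∈ D → angDθ ψp ψm κ θ t = κθ' (θ, t) := by
    intro θ t hq
    exact (hasDerivWithinAt_slice_fst hq.2 (hfd _ hq)).derivWithin
      (uniqueDiffOn_Icc hab θ hq.1)
  have hBθθ : ∀ θ t, (θ, t) ∈ D → angDθθ ψp ψm κ θ t = κθθ' (θ, t) := by
    intro θ t hq
    have h1 : Set.EqOn (fun θ'' => angDθ ψp ψm κ θ'' t) (fun θ'' => κθ' (θ'', t))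
        (Set.Icc (-ψp) ψm) := fun θ' h => hBθ θ' t ⟨h, hq.2⟩
    show derivWithin (fun θ'' => angDθ ψp ψm κ θ'' t) (Set.Icc (-ψp) ψm) θ = _
    rw [derivWithin_congr h1 (hBθ θ t hq)]
    exact (hasDerivWithinAt_slice_fst hq.2 (hκθ'd _ hq)).derivWithin
      (uniqueDiffOn_Icc hab θ hq.1)
  have hBt : ∀ θ t, (θ, t) ∈ D → angDt (Set.Icc ε T) κ θ t = κt' (θ, t) := by
    intro θ t hq
    exact (hasDerivWithinAt_slice_snd hq.1 (hfd _ hq)).derivWithin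
      (uniqueDiffOn_Icc hεT t hq.2)
  -- positivity of the length
  have hL : ∀ t ∈ Set.Icc ε T, 0 < angLen ψp ψm κ t := by
    intro t ht
    have hcont : ContinuousOn (fun θ' => κ θ' t) (Set.Icc (-ψp) ψm) :=
      hsm.continuousOn.comp ((continuous_id.prodMk continuous_const).continuousOn)
        (fun θ hθ => ⟨hθ, ht⟩)
    have hne : ∀ θ' ∈ Set.Icc (-ψp) ψm, κ θ' t ≠ 0 := fun θ' h => (hneg θ' h t ht).ne
    have hint : IntervalIntegrable (fun θ' => -(1 / κ θ' t)) MeasureTheory.volume (-ψp) ψm := by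
      apply ContinuousOn.intervalIntegrable
      rw [uIcc_of_le hab.le]
      exact (continuousOn_const.div hcont hne).neg
    have hpos : 0 < ∫ θ' in (-ψp)..ψm, -(1 / κ θ' t) := by
      refine intervalIntegral_pos_of_pos_on hint (fun x hx => ?_) hab
      have := hneg x (Set.Ioo_subset_Icc_self hx) t ht
      have h1 : 1 / κ x t < 0 := one_div_neg.2 this
      linarith
    rw [intervalIntegral.integral_neg] at hpos
    exact hpos
  -- the energy
  set W : ℝ × ℝ → ℝ := fun q => (κ q.1 q.2)^2 + (κθ' q)^2 with hWdef
  have hWc : ContinuousOn W D :=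
    (hsm.continuousOn.pow 2).add ((hκθ'2.continuousOn).pow 2)
  obtain ⟨p, hpD, hpmax'⟩ := hDc.exists_isMaxOn
    ⟨((-ψp : ℝ), ε), ⟨⟨le_rfl, hab.le⟩, hεm⟩⟩ hWc
  have hpmax : ∀ q ∈ D, W q ≤ W p := isMaxOn_iff.1 hpmax'
  obtain ⟨θ0, t0⟩ := p
  obtain ⟨⟨hθ0a, hθ0b⟩, ht0a, ht0b⟩ := hpD
  have hpD : (θ0, t0) ∈ D := ⟨⟨hθ0a, hθ0b⟩, ht0a, ht0b⟩
  -- bounds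
  have hB1 : BddAbove ((fun q : ℝ × ℝ => (κ q.1 q.2)^2) '' D) :=
    (hDc.image_of_continuousOn (hsm.continuousOn.pow 2)).bddAbove
  have hWε : ContinuousOn (fun θ' => W (θ', ε)) (Set.Icc (-ψp) ψm) :=
    hWc.comp ((continuous_id.prodMk continuous_const).continuousOn)
      (fun θ hθ => ⟨hθ, hεm⟩)
  have hB2 : BddAbove ((fun θ' => (κ θ' ε)^2 + (angDθ ψp ψm κ θ' ε)^2) ''
      Set.Icc (-ψp) ψm) := by
    refine (IsCompact.image_of_continuousOn isCompact_Icc ?_).bddAbove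
    exact hWε.congr (fun θ' h => by
      show (κ θ' ε)^2 + (angDθ ψp ψm κ θ' ε)^2 = W (θ', ε)
      rw [hBθ θ' ε ⟨h, hεm⟩])
  have ham : (-ψp : ℝ) ∈ Set.Icc (-ψp) ψm := ⟨le_rfl, hab.le⟩
  have hbm : ψm ∈ Set.Icc (-ψp) ψm := ⟨hab.le, le_rfl⟩
  have hB3 : BddAbove ((fun τ => max ((κ (-ψp) τ)^2 + (angDθ ψp ψm κ (-ψp) τ)^2)
      ((κ ψm τ)^2 + (angDθ ψp ψm κ ψm τ)^2)) '' Set.Icc ε T) := by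
    refine (IsCompact.image_of_continuousOn isCompact_Icc ?_).bddAbove
    have hc1 : ContinuousOn (fun τ => W ((-ψp : ℝ), τ)) (Set.Icc ε T) :=
      hWc.comp ((continuous_const.prodMk continuous_id).continuousOn)
        (fun τ hτ => ⟨ham, hτ⟩)
    have hc2 : ContinuousOn (fun τ => W (ψm, τ)) (Set.Icc ε T) :=
      hWc.comp ((continuous_const.prodMk continuous_id).continuousOn)
        (fun τ hτ => ⟨hbm, hτ⟩)
    exact (hc1.sup hc2).congr (fun τ hτ => by
      show max ((κ (-ψp) τ)^2 + (angDθ ψp ψm κ (-ψp) τ)^2)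
        ((κ ψm τ)^2 + (angDθ ψp ψm κ ψm τ)^2) = max (W (-ψp, τ)) (W (ψm, τ))
      rw [hBθ (-ψp) τ ⟨ham, hτ⟩, hBθ ψm τ ⟨hbm, hτ⟩])
  -- reduce to bounding W at the max point
  intro θ hθ t ht
  have hq : (θ, t) ∈ D := ⟨hθ, ht⟩
  rw [hBθ θ t hq]
  refine le_trans (hpmax _ hq) ?_
  -- goal now : W (θ0, t0) ≤ max M1 (max M2 M3)
  have ht0m : t0 ∈ Set.Icc ε T := ⟨ht0a, ht0b⟩
  have hθ0m : θ0 ∈ Set.Icc (-ψp) ψm := ⟨hθ0a, hθ0b⟩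
  rcases eq_or_lt_of_le hθ0a with h1 | h1
  · -- θ0 = -ψp : lateral boundary
    refine le_trans ?_ (le_max_of_le_right (le_max_of_le_right
      (le_csSup hB3 ⟨t0, ht0m, rfl⟩)))
    show W (θ0, t0) ≤ max ((κ (-ψp) t0)^2 + (angDθ ψp ψm κ (-ψp) t0)^2)
        ((κ ψm t0)^2 + (angDθ ψp ψm κ ψm t0)^2)
    rw [hBθ (-ψp) t0 ⟨ham, ht0m⟩, hBθ ψm t0 ⟨hbm, ht0m⟩, h1]
    exact le_max_left _ _
  rcases eq_or_lt_of_le hθ0b with h2 | h2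
  · -- θ0 = ψm : lateral boundary
    refine le_trans ?_ (le_max_of_le_right (le_max_of_le_right
      (le_csSup hB3 ⟨t0, ht0m, rfl⟩)))
    show W (θ0, t0) ≤ max ((κ (-ψp) t0)^2 + (angDθ ψp ψm κ (-ψp) t0)^2)
        ((κ ψm t0)^2 + (angDθ ψp ψm κ ψm t0)^2)
    rw [hBθ (-ψp) t0 ⟨ham, ht0m⟩, hBθ ψm t0 ⟨hbm, ht0m⟩, ← h2]
    exact le_max_right _ _
  rcases eq_or_lt_of_le ht0a with h3 | h3
  · -- t0 = ε : initial time
    refine le_trans ?_ (le_max_of_le_right (le_max_of_le_left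
      (le_csSup hB2 ⟨θ0, hθ0m, rfl⟩)))
    show W (θ0, t0) ≤ (κ θ0 ε)^2 + (angDθ ψp ψm κ θ0 ε)^2
    rw [hBθ θ0 ε ⟨hθ0m, hεm⟩, h3]
  -- interior case
  by_cases hk10 : κθ' (θ0, t0) = 0
  · have hWp : W (θ0, t0) = (κ θ0 t0)^2 := by
      show (κ θ0 t0)^2 + (κθ' (θ0, t0))^2 = _
      rw [hk10]; ring
    rw [hWp]
    exact le_max_of_le_left (le_csSup hB1 ⟨(θ0, t0), hpD, rfl⟩)
  exfalso
  have hk : κ θ0 t0 < 0 := hneg θ0 hθ0m t0 ht0m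
  -- spatial slice derivatives at time t0
  have hslf : ∀ θ' ∈ Set.Icc (-ψp) ψm,
      HasDerivWithinAt (fun x => κ x t0) (κθ' (θ', t0)) (Set.Icc (-ψp) ψm) θ' :=
    fun θ' h => hasDerivWithinAt_slice_fst ht0m (hfd _ ⟨h, ht0m⟩)
  have hslκθ : ∀ θ' ∈ Set.Icc (-ψp) ψm,
      HasDerivWithinAt (fun x => κθ' (x, t0)) (κθθ' (θ', t0)) (Set.Icc (-ψp) ψm) θ' :=
    fun θ' h => hasDerivWithinAt_slice_fst ht0m (hκθ'd _ ⟨h, ht0m⟩)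
  have hslκθθ : HasDerivWithinAt (fun x => κθθ' (x, t0))
      (fderivWithin ℝ κθθ' D (θ0, t0) ((1:ℝ), (0:ℝ))) (Set.Icc (-ψp) ψm) θ0 :=
    hasDerivWithinAt_slice_fst ht0m (hκθθ'd _ hpD)
  have hWsl : ∀ θ' ∈ Set.Icc (-ψp) ψm,
      HasDerivWithinAt (fun x => W (x, t0))
        (2 * κ θ' t0 * κθ' (θ', t0) + 2 * κθ' (θ', t0) * κθθ' (θ', t0))
        (Set.Icc (-ψp) ψm) θ' := by
    intro θ' h
    have hh := ((hslf θ' h).pow 2).add ((hslκθ θ' h).pow 2)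
    refine hh.congr_deriv ?_
    push_cast; ring
  -- Step 1 : first-order condition in space
  have hlocmax : IsLocalMax (fun x => W (x, t0)) θ0 := by
    filter_upwards [Icc_mem_nhds h1 h2] with x hx
    exact hpmax (x, t0) ⟨hx, ht0m⟩
  have hu10 : 2 * κ θ0 t0 * κθ' (θ0, t0) + 2 * κθ' (θ0, t0) * κθθ' (θ0, t0) = 0 :=
    hlocmax.hasDerivAt_eq_zero ((hWsl θ0 hθ0m).hasDerivAt (Icc_mem_nhds h1 h2))
  have hk2 : κθθ' (θ0, t0) = -κ θ0 t0 := by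
    have h5 : 2 * κθ' (θ0, t0) * (κ θ0 t0 + κθθ' (θ0, t0)) = 0 := by linear_combination hu10
    rcases mul_eq_zero.1 h5 with h6 | h6
    · exact absurd (by linarith : κθ' (θ0, t0) = 0) hk10
    · linarith
  -- Step 2 : second-order condition in space
  have hu2le : 2 * κθ' (θ0,t0) * κθ' (θ0,t0) + 2 * κ θ0 t0 * κθθ' (θ0,t0)
      + 2 * κθθ' (θ0,t0) * κθθ' (θ0,t0)
      + 2 * κθ' (θ0,t0) * fderivWithin ℝ κθθ' D (θ0, t0) ((1:ℝ), (0:ℝ)) ≤ 0 := by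
    have hud : HasDerivWithinAt
        (fun x => 2 * κ x t0 * κθ' (x, t0) + 2 * κθ' (x, t0) * κθθ' (x, t0))
        (2 * κθ' (θ0,t0) * κθ' (θ0,t0) + 2 * κ θ0 t0 * κθθ' (θ0,t0)
          + 2 * κθθ' (θ0,t0) * κθθ' (θ0,t0)
          + 2 * κθ' (θ0,t0) * fderivWithin ℝ κθθ' D (θ0, t0) ((1:ℝ), (0:ℝ)))
        (Set.Icc (-ψp) ψm) θ0 := by
      have hh := (((hslf θ0 hθ0m).const_mul (2:ℝ)).mul (hslκθ θ0 hθ0m)).add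
        (((hslκθ θ0 hθ0m).const_mul (2:ℝ)).mul hslκθθ)
      refine hh.congr_deriv ?_
      ring
    have hWcont : ContinuousOn (fun x => W (x, t0)) (Set.Icc (-ψp) ψm) :=
      hWc.comp ((continuous_id.prodMk continuous_const).continuousOn)
        (fun x hx => ⟨hx, ht0m⟩)
    exact second_deriv_nonpos_aux h1 h2 hWcont
      (fun x hx => hpmax (x, t0) ⟨hx, ht0m⟩) hWsl hu10
      (hud.hasDerivAt (Icc_mem_nhds h1 h2))
  -- Step 3 : time derivative is nonnegative at the max
  have hvf : HasDerivWithinAt (fun τ => κ θ0 τ) (κt' (θ0, t0)) (Set.Icc ε T) t0 :=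
    hasDerivWithinAt_slice_snd hθ0m (hfd _ hpD)
  have hvκθ : HasDerivWithinAt (fun τ => κθ' (θ0, τ))
      (fderivWithin ℝ κθ' D (θ0, t0) ((0:ℝ), (1:ℝ))) (Set.Icc ε T) t0 :=
    hasDerivWithinAt_slice_snd hθ0m (hκθ'd _ hpD)
  have hv : HasDerivWithinAt (fun τ => W (θ0, τ))
      (2 * κ θ0 t0 * κt' (θ0, t0)
        + 2 * κθ' (θ0, t0) * fderivWithin ℝ κθ' D (θ0, t0) ((0:ℝ), (1:ℝ)))
      (Set.Icc ε T) t0 := by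
    have hh := (hvf.pow 2).add (hvκθ.pow 2)
    refine hh.congr_deriv ?_
    push_cast; ring
  have htd : 0 ≤ 2 * κ θ0 t0 * κt' (θ0, t0)
      + 2 * κθ' (θ0, t0) * fderivWithin ℝ κθ' D (θ0, t0) ((0:ℝ), (1:ℝ)) :=
    time_deriv_nonneg_aux h3 ht0b (fun τ hτ => hpmax (θ0, τ) ⟨hθ0m, hτ⟩) hv
  -- Step 4 : symmetry of second derivatives
  have hclos : (θ0, t0) ∈ closure (interior D) := by
    rw [hDdef, interior_prod_eq, interior_Icc, interior_Icc, closure_prod_eq,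
      closure_Ioo hab.ne, closure_Ioo hεT.ne]
    exact hpD
  have hsymm := (hsm _ hpD).isSymmSndFDerivWithinAt (by rw [minSmoothness_of_isRCLikeNormedField]; exact WithTop.coe_le_coe.2 le_top) hDu hclos hpD
  have hF1d : DifferentiableWithinAt ℝ
      (fderivWithin ℝ (fun q : ℝ × ℝ => κ q.1 q.2) D) D (θ0, t0) :=
    (hF1.differentiableOn (by norm_num)) _ hpD
  have e1 : fderivWithin ℝ κθ' D (θ0, t0)
      = (ContinuousLinearMap.apply ℝ ℝ ((1:ℝ), (0:ℝ))).comp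
        (fderivWithin ℝ (fderivWithin ℝ (fun q : ℝ × ℝ => κ q.1 q.2) D) D (θ0, t0)) := by
    have he : κθ' = (ContinuousLinearMap.apply ℝ ℝ ((1:ℝ), (0:ℝ))) ∘
        (fderivWithin ℝ (fun q : ℝ × ℝ => κ q.1 q.2) D) := by funext q; rfl
    rw [he, fderiv_comp_fderivWithin _
      (ContinuousLinearMap.apply ℝ ℝ ((1:ℝ), (0:ℝ))).differentiableAt hF1d (hDu _ hpD)]
    congr 1
    exact ContinuousLinearMap.fderiv _
  have e2 : fderivWithin ℝ κt' D (θ0, t0)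
      = (ContinuousLinearMap.apply ℝ ℝ ((0:ℝ), (1:ℝ))).comp
        (fderivWithin ℝ (fderivWithin ℝ (fun q : ℝ × ℝ => κ q.1 q.2) D) D (θ0, t0)) := by
    have he : κt' = (ContinuousLinearMap.apply ℝ ℝ ((0:ℝ), (1:ℝ))) ∘
        (fderivWithin ℝ (fun q : ℝ × ℝ => κ q.1 q.2) D) := by funext q; rfl
    rw [he, fderiv_comp_fderivWithin _
      (ContinuousLinearMap.apply ℝ ℝ ((0:ℝ), (1:ℝ))).differentiableAt hF1d (hDu _ hpD)]
    congr 1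
    exact ContinuousLinearMap.fderiv _
  have hmix : fderivWithin ℝ κθ' D (θ0, t0) ((0:ℝ), (1:ℝ))
      = fderivWithin ℝ κt' D (θ0, t0) ((1:ℝ), (0:ℝ)) := by
    rw [e1, e2]
    exact hsymm _ _
  -- Step 5 : the PDE and its spatial derivative at the max point
  have hC : 0 < (ψp + ψm) / angLen ψp ψm κ t0 :=
    div_pos (by linarith [hψp.1, hψm.1]) (hL t0 ht0m)
  have hpde' : ∀ x ∈ Set.Ioo (-ψp) ψm,
      κt' (x, t0) = (κ x t0)^2 * (κθθ' (x, t0) + κ x t0 + (ψp + ψm) / angLen ψp ψm κ t0) := by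
    intro x hx
    have h8 := hpde x hx t0 ht0m
    rwa [hBt x t0 ⟨Set.Ioo_subset_Icc_self hx, ht0m⟩,
      hBθθ x t0 ⟨Set.Ioo_subset_Icc_self hx, ht0m⟩] at h8
  have hktval : κt' (θ0, t0)
      = (κ θ0 t0)^2 * (κθθ' (θ0, t0) + κ θ0 t0 + (ψp + ψm) / angLen ψp ψm κ t0) :=
    hpde' θ0 ⟨h1, h2⟩
  have hslκt : HasDerivWithinAt (fun x => κt' (x, t0))
      (fderivWithin ℝ κt' D (θ0, t0) ((1:ℝ), (0:ℝ))) (Set.Icc (-ψp) ψm) θ0 :=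
    hasDerivWithinAt_slice_fst ht0m (hκt'd _ hpD)
  have hrhs : HasDerivWithinAt
      (fun x => (κ x t0)^2 * (κθθ' (x, t0) + κ x t0 + (ψp + ψm) / angLen ψp ψm κ t0))
      (2 * κ θ0 t0 * κθ' (θ0, t0)
          * (κθθ' (θ0, t0) + κ θ0 t0 + (ψp + ψm) / angLen ψp ψm κ t0)
        + (κ θ0 t0)^2 * (fderivWithin ℝ κθθ' D (θ0, t0) ((1:ℝ), (0:ℝ)) + κθ' (θ0, t0)))
      (Set.Icc (-ψp) ψm) θ0 := by
    have hh := ((hslf θ0 hθ0m).pow 2).mul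
      ((hslκθθ.add (hslf θ0 hθ0m)).add_const ((ψp + ψm) / angLen ψp ψm κ t0))
    refine hh.congr_deriv ?_
    simp only [Pi.add_apply, Pi.pow_apply]; push_cast; ring
  have hk1tval : fderivWithin ℝ κθ' D (θ0, t0) ((0:ℝ), (1:ℝ))
      = 2 * κ θ0 t0 * κθ' (θ0, t0)
          * (κθθ' (θ0, t0) + κ θ0 t0 + (ψp + ψm) / angLen ψp ψm κ t0)
        + (κ θ0 t0)^2 * (fderivWithin ℝ κθθ' D (θ0, t0) ((1:ℝ), (0:ℝ)) + κθ' (θ0, t0)) := by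
    have hcongr : derivWithin (fun x => κt' (x, t0)) (Set.Icc (-ψp) ψm) θ0
        = derivWithin
          (fun x => (κ x t0)^2 * (κθθ' (x, t0) + κ x t0 + (ψp + ψm) / angLen ψp ψm κ t0))
          (Set.Icc (-ψp) ψm) θ0 := by
      apply Filter.EventuallyEq.derivWithin_eq
      · filter_upwards [mem_nhdsWithin_of_mem_nhds (Ioo_mem_nhds h1 h2)] with x hx
        exact hpde' x hx
      · exact hpde' θ0 ⟨h1, h2⟩
    rw [hmix, ← hslκt.derivWithin (uniqueDiffOn_Icc hab θ0 hθ0m), hcongr]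
    exact hrhs.derivWithin (uniqueDiffOn_Icc hab θ0 hθ0m)
  -- Final contradiction
  exact final_arith hk hk10 hC hk2 hktval hk1tval hu2le htd
end
end

section
/- Let a < b be real numbers and let M > 0 and c > 0 be constants. Then there exists a constant δ > 0, depending only on a, b, M, c, such that every continuous function f : [a,b] → ℝ satisfying f(x) < 0 for all x, |f(x) − f(y)| ≤ M|x − y| for all x, y ∈ [a,b], and ∫_a^b (−1/f(x)) dx ≤ c, satisfies f(x) ≤ −δ for all x ∈ [a,b]. -/
/-!
Write `ε = -f x₀ > 0`. The Lipschitz bound gives `-f t ≤ ε + M |t - x₀|`, so the integral of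
`-1/f` over `[a,b]` is at least that of `(ε + M |t - x₀|)⁻¹`, which equals
`M⁻¹ (log (1 + M (x₀ - a)/ε) + log (1 + M (b - x₀)/ε)) ≥ M⁻¹ log (1 + M (b - a)/ε)`.
This blows up as `ε → 0`, and bounding it by `c` yields `ε ≥ M (b - a) / (exp (M c) - 1)`.
-/

open Real Set intervalIntegral

lemma integral_inv_const_add_mul {ε M R : ℝ} (hε : 0 < ε) (hM : M ≠ 0) (hR : 0 < ε + M * R) :
    ∫ s in (0 : ℝ)..R, (ε + M * s)⁻¹ = M⁻¹ * log ((ε + M * R) / ε) := by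
  rw [integral_comp_add_mul (fun x => x⁻¹) hM, mul_zero, add_zero, integral_inv_of_pos hε hR,
    smul_eq_mul]

lemma integral_inv_const_add_mul_abs_sub {ε M a b x₀ : ℝ} (hε : 0 < ε) (hM : 0 < M)
    (hx₀ : x₀ ∈ Icc a b) :
    ∫ t in a..b, (ε + M * |t - x₀|)⁻¹ =
      M⁻¹ * (log ((ε + M * (x₀ - a)) / ε) + log ((ε + M * (b - x₀)) / ε)) := by
  have hcont : Continuous fun t => (ε + M * |t - x₀|)⁻¹ :=
    Continuous.inv₀ (by fun_prop) fun t => by positivity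
  have hleft : ∫ t in a..x₀, (ε + M * |t - x₀|)⁻¹ = ∫ s in (0 : ℝ)..x₀ - a, (ε + M * s)⁻¹ := by
    rw [← sub_self x₀, ← integral_comp_sub_left (fun s => (ε + M * s)⁻¹)]
    refine integral_congr fun t ht => ?_
    rw [uIcc_of_le hx₀.1] at ht
    simp only [abs_sub_comm t, abs_of_nonneg (sub_nonneg.2 ht.2)]
  have hright : ∫ t in x₀..b, (ε + M * |t - x₀|)⁻¹ = ∫ s in (0 : ℝ)..b - x₀, (ε + M * s)⁻¹ := by
    rw [← sub_self x₀, ← integral_comp_sub_right (fun s => (ε + M * s)⁻¹)]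
    refine integral_congr fun t ht => ?_
    rw [uIcc_of_le hx₀.2] at ht
    simp only [abs_of_nonneg (sub_nonneg.2 ht.1)]
  rw [← integral_add_adjacent_intervals (hcont.intervalIntegrable a x₀)
    (hcont.intervalIntegrable x₀ b), hleft, hright, mul_add,
    integral_inv_const_add_mul hε hM.ne' (by nlinarith [hx₀.1]),
    integral_inv_const_add_mul hε hM.ne' (by nlinarith [hx₀.2])]

lemma log_le_mul_integral_inv {g : ℝ → ℝ} {a b M x₀ : ℝ} (hM : 0 < M)
    (hg : ContinuousOn g (Icc a b)) (hpos : ∀ t ∈ Icc a b, 0 < g t) (hx₀ : x₀ ∈ Icc a b)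
    (hbound : ∀ t ∈ Icc a b, g t ≤ g x₀ + M * |t - x₀|) :
    log ((g x₀ + M * (b - a)) / g x₀) ≤ M * ∫ t in a..b, (g t)⁻¹ := by
  set ε := g x₀
  have hε : 0 < ε := hpos x₀ hx₀
  have hab : a ≤ b := hx₀.1.trans hx₀.2
  have hleft : 0 ≤ M * (x₀ - a) := mul_nonneg hM.le (sub_nonneg.2 hx₀.1)
  have hright : 0 ≤ M * (b - x₀) := mul_nonneg hM.le (sub_nonneg.2 hx₀.2)
  -- `(1 + p) (1 + q) ≥ 1 + p + q` for `p, q ≥ 0`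
  have hsplit : (ε + M * (b - a)) / ε ≤ (ε + M * (x₀ - a)) / ε * ((ε + M * (b - x₀)) / ε) := by
    rw [div_mul_div_comm, div_le_div_iff₀ hε (by positivity)]
    nlinarith [mul_nonneg hleft hright]
  calc log ((ε + M * (b - a)) / ε)
      ≤ log ((ε + M * (x₀ - a)) / ε) + log ((ε + M * (b - x₀)) / ε) := by
        rw [← log_mul (by positivity) (by positivity)]
        exact log_le_log (by positivity) hsplit
    _ = M * ∫ t in a..b, (ε + M * |t - x₀|)⁻¹ := by
        rw [integral_inv_const_add_mul_abs_sub hε hM hx₀, mul_inv_cancel_left₀ hM.ne']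
    _ ≤ M * ∫ t in a..b, (g t)⁻¹ := by
        gcongr
        refine integral_mono_on hab ?_ ?_ fun t ht => inv_anti₀ (hpos t ht) (hbound t ht)
        · exact (Continuous.inv₀ (by fun_prop) fun t => by positivity).intervalIntegrable a b
        · refine ContinuousOn.intervalIntegrable ?_
          rw [uIcc_of_le hab]
          exact hg.inv₀ fun t ht => (hpos t ht).ne'

lemma div_exp_sub_one_le_of_log_le {ε K s : ℝ} (hε : 0 < ε) (hK : 0 ≤ K) (hs : 0 < s)
    (h : log ((ε + K) / ε) ≤ s) : K / (exp s - 1) ≤ ε := by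
  have hexp : (ε + K) / ε ≤ exp s := (log_le_iff_le_exp (by positivity)).1 h
  rw [div_le_iff₀ hε] at hexp
  rw [div_le_iff₀ (by linarith [add_one_lt_exp hs.ne'])]
  linarith

/-- **Uniform negativity**: a negative `M`-Lipschitz continuous function on `[a,b]`
whose reciprocal has integral bounded by `c` is uniformly bounded away from zero,
with a bound depending only on `a`, `b`, `M`, `c`. -/
theorem uniform_negativity (a b M c : ℝ) (hab : a < b) (hM : 0 < M) (hc : 0 < c) :
    ∃ δ > 0, ∀ f : ℝ → ℝ,
      ContinuousOn f (Set.Icc a b) →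
      (∀ x ∈ Set.Icc a b, f x < 0) →
      (∀ x ∈ Set.Icc a b, ∀ y ∈ Set.Icc a b, |f x - f y| ≤ M * |x - y|) →
      (∫ x in a..b, -1 / f x) ≤ c →
      ∀ x ∈ Set.Icc a b, f x ≤ -δ := by
  have hMc : 0 < M * c := mul_pos hM hc
  have hexp : 0 < exp (M * c) - 1 := by linarith [add_one_lt_exp hMc.ne']
  refine ⟨M * (b - a) / (exp (M * c) - 1), by have := sub_pos.2 hab; positivity, ?_⟩
  intro f hf hneg hlip hint x₀ hx₀
  have hpos : ∀ t ∈ Icc a b, 0 < -f t := fun t ht => neg_pos.2 (hneg t ht)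
  have hbound : ∀ t ∈ Icc a b, -f t ≤ -f x₀ + M * |t - x₀| := fun t ht => by
    linarith [(abs_le.1 (hlip t ht x₀ hx₀)).1]
  have hlog : log ((-f x₀ + M * (b - a)) / -f x₀) ≤ M * c :=
    calc _ ≤ M * ∫ t in a..b, (-f t)⁻¹ := log_le_mul_integral_inv hM hf.neg hpos hx₀ hbound
      _ ≤ M * c := by
        gcongr
        simpa only [neg_div, ← inv_neg, one_div] using hint
  have := div_exp_sub_one_le_of_log_le (hpos x₀ hx₀) (mul_nonneg hM.le (sub_nonneg.2 hab.le))
    hMc hlog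
  linarith
end
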